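/- arXiv:1812.06448 — 6 statements merged into one kernel-verified Lean document; each statement's English description precedes it below -/
import Mathlib

section
/- Let n ≥ 26 be even. Any four pairwise distinct subsets of [n] consisting of two sets M₁, M₂ each of size exactly n/2 and two sets L₁, L₂ each of size at least n/2 + 1 form a Berge four-cycle in some cyclic order. -/
/-- Four distinct sets `A, B, C, D ⊆ [n]` form a Berge four-cycle in that cyclic order if
there exist pairwise distinct elements `x₁ ∈ A ∩ B`, `x₂ ∈ B ∩ C`, `x₃ ∈ C ∩ D`,
`x₄ ∈ D ∩ A`. -/
def BergeC4 {n : ℕ} (A B C D : Finset (Fin n)) : Prop :=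
  A ≠ B ∧ A ≠ C ∧ A ≠ D ∧ B ≠ C ∧ B ≠ D ∧ C ≠ D ∧
    ∃ x₁ x₂ x₃ x₄ : Fin n,
      x₁ ≠ x₂ ∧ x₁ ≠ x₃ ∧ x₁ ≠ x₄ ∧ x₂ ≠ x₃ ∧ x₂ ≠ x₄ ∧ x₃ ≠ x₄ ∧
      x₁ ∈ A ∩ B ∧ x₂ ∈ B ∩ C ∧ x₃ ∈ C ∩ D ∧ x₄ ∈ D ∩ A

/-- A constructor for `BergeC4` from raw memberships. -/
lemma BergeC4.mk4 {n : ℕ} {A B C D : Finset (Fin n)} (h1 : A ≠ B) (h2 : A ≠ C) (h3 : A ≠ D)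
    (h4 : B ≠ C) (h5 : B ≠ D) (h6 : C ≠ D) {x₁ x₂ x₃ x₄ : Fin n}
    (d12 : x₁ ≠ x₂) (d13 : x₁ ≠ x₃) (d14 : x₁ ≠ x₄) (d23 : x₂ ≠ x₃) (d24 : x₂ ≠ x₄)
    (d34 : x₃ ≠ x₄)
    (mA : x₁ ∈ A) (mB : x₁ ∈ B) (mB' : x₂ ∈ B) (mC : x₂ ∈ C)
    (mC' : x₃ ∈ C) (mD : x₃ ∈ D) (mD' : x₄ ∈ D) (mA' : x₄ ∈ A) : BergeC4 A B C D :=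
  ⟨h1, h2, h3, h4, h5, h6, x₁, x₂, x₃, x₄, d12, d13, d14, d23, d24, d34,
    Finset.mem_inter.mpr ⟨mA, mB⟩, Finset.mem_inter.mpr ⟨mB', mC⟩,
    Finset.mem_inter.mpr ⟨mC', mD⟩, Finset.mem_inter.mpr ⟨mD', mA'⟩⟩

/-- A system of distinct representatives for four finite sets, given that two of them have a
union with at least two elements and the other two have at least `3` and `4` elements. -/
lemma sdr4 {α : Type*} [DecidableEq α] {S T U V : Finset α}
    (hS : S.Nonempty) (hT : T.Nonempty) (hST : 2 ≤ (S ∪ T).card)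
    (hU : 3 ≤ U.card) (hV : 4 ≤ V.card) :
    ∃ s ∈ S, ∃ t ∈ T, ∃ u ∈ U, ∃ v ∈ V,
      s ≠ t ∧ s ≠ u ∧ s ≠ v ∧ t ≠ u ∧ t ≠ v ∧ u ≠ v := by
  obtain ⟨s, t, hs, ht, hst⟩ : ∃ s t, s ∈ S ∧ t ∈ T ∧ s ≠ t := by
    obtain ⟨s0, hs0⟩ := hS
    obtain ⟨t0, ht0⟩ := hT
    by_cases h : s0 = t0
    · obtain ⟨w, hw, hwne⟩ := Finset.exists_mem_ne (s := S ∪ T) (by omega) s0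
      rcases Finset.mem_union.mp hw with hw' | hw'
      · exact ⟨w, t0, hw', ht0, h ▸ hwne⟩
      · exact ⟨s0, w, hs0, hw', fun e => hwne e.symm⟩
    · exact ⟨s0, t0, hs0, ht0, h⟩
  have hu2 : 1 ≤ (U \ {s, t}).card := by
    have h1 : U.card ≤ (U \ ({s, t} : Finset α)).card + ({s, t} : Finset α).card :=
      Finset.card_le_card_sdiff_add_card
    have h2 : ({s, t} : Finset α).card ≤ 2 := Finset.card_insert_le _ _ |>.trans (by simp)
    omega
  obtain ⟨u, hu⟩ := Finset.card_pos.mp (by omega : 0 < (U \ {s, t}).card)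
  rw [Finset.mem_sdiff, Finset.mem_insert, Finset.mem_singleton] at hu
  obtain ⟨huU, hune⟩ := hu
  have hv2 : 1 ≤ (V \ {s, t, u}).card := by
    have h1 : V.card ≤ (V \ ({s, t, u} : Finset α)).card + ({s, t, u} : Finset α).card :=
      Finset.card_le_card_sdiff_add_card
    have h2 : ({s, t, u} : Finset α).card ≤ 3 := by
      apply (Finset.card_insert_le _ _).trans
      have := Finset.card_insert_le t ({u} : Finset α)
      simp at this ⊢; omega
    omega
  obtain ⟨v, hv⟩ := Finset.card_pos.mp (by omega : 0 < (V \ {s, t, u}).card)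
  rw [Finset.mem_sdiff, Finset.mem_insert, Finset.mem_insert, Finset.mem_singleton] at hv
  obtain ⟨hvV, hvne⟩ := hv
  exact ⟨s, hs, t, ht, u, huU, v, hvV, hst,
    fun e => hune (Or.inl e.symm), fun e => hvne (Or.inl e.symm),
    fun e => hune (Or.inr e.symm), fun e => hvne (Or.inr (Or.inl e.symm)),
    fun e => hvne (Or.inr (Or.inr e.symm))⟩

/-- For even `n ≥ 26`, any four pairwise distinct subsets of `[n]` consisting of two
sets of size exactly `n / 2` and two sets of size at least `n / 2 + 1` form a Berge
four-cycle in some cyclic order. -/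
theorem two_medium_two_large_C4 (n : ℕ) (hn : 26 ≤ n) (hev : Even n)
    (M₁ M₂ L₁ L₂ : Finset (Fin n))
    (hd : [M₁, M₂, L₁, L₂].Pairwise (· ≠ ·))
    (hM₁ : M₁.card = n / 2) (hM₂ : M₂.card = n / 2)
    (hL₁ : n / 2 + 1 ≤ L₁.card) (hL₂ : n / 2 + 1 ≤ L₂.card) :
    ∃ A ∈ ({M₁, M₂, L₁, L₂} : Set (Finset (Fin n))),
      ∃ B ∈ ({M₁, M₂, L₁, L₂} : Set (Finset (Fin n))),
        ∃ C ∈ ({M₁, M₂, L₁, L₂} : Set (Finset (Fin n))),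
          ∃ D ∈ ({M₁, M₂, L₁, L₂} : Set (Finset (Fin n))),
            BergeC4 A B C D := by
  obtain ⟨k, hk⟩ := hev
  have hk13 : 13 ≤ k := by omega
  have hM₁' : M₁.card = k := by omega
  have hM₂' : M₂.card = k := by omega
  have hL₁' : k + 1 ≤ L₁.card := by omega
  have hL₂' : k + 1 ≤ L₂.card := by omega
  simp only [List.pairwise_cons, List.mem_cons, List.not_mem_nil, or_false,
    List.mem_singleton, forall_eq_or_imp, forall_eq, List.Pairwise.nil] at hd
  obtain ⟨⟨hM1M2, hM1L1, hM1L2⟩, ⟨hM2L1, hM2L2⟩, hL1L2, -⟩ := hd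
  have key : ∀ X Y : Finset (Fin n), X.card + Y.card ≤ n + (X ∩ Y).card := by
    intro X Y
    have h1 := Finset.card_union_add_card_inter X Y
    have h2 : (X ∪ Y).card ≤ n := by
      simpa using Finset.card_le_univ (X ∪ Y)
    omega
  have hLU : k + 2 ≤ (L₁ ∪ L₂).card := by
    by_contra h
    push_neg at h
    have e1 : L₁ = L₁ ∪ L₂ := Finset.eq_of_subset_of_card_le Finset.subset_union_left (by omega)
    have e2 : L₂ = L₁ ∪ L₂ := Finset.eq_of_subset_of_card_le Finset.subset_union_right (by omega)
    exact hL1L2 (e1.trans e2.symm)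
  have hMU : k + 1 ≤ (M₁ ∪ M₂).card := by
    by_contra h
    push_neg at h
    have e1 : M₁ = M₁ ∪ M₂ := Finset.eq_of_subset_of_card_le Finset.subset_union_left (by omega)
    have e2 : M₂ = M₁ ∪ M₂ := Finset.eq_of_subset_of_card_le Finset.subset_union_right (by omega)
    exact hM1M2 (e1.trans e2.symm)
  have excl : ∀ A B X : Finset (Fin n),
      A.card + B.card ≤ (A ∩ B).card + (A ∩ X).card + (B ∩ X).card + (n - X.card) := by
    intro A B X
    have hsub : (A \ X) ∪ (B \ X) ⊆ Xᶜ := by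
      intro y hy
      simp only [Finset.mem_union, Finset.mem_sdiff, Finset.mem_compl] at *
      tauto
    have h1 : ((A \ X) ∪ (B \ X)).card ≤ Xᶜ.card := Finset.card_le_card hsub
    have hc : Xᶜ.card = n - X.card := by rw [Finset.card_compl, Fintype.card_fin]
    have h2 := Finset.card_union_add_card_inter (A \ X) (B \ X)
    have h3 : (A \ X) ∩ (B \ X) ⊆ A ∩ B := by
      intro y hy
      simp only [Finset.mem_inter, Finset.mem_sdiff] at *
      tauto
    have h4 : ((A \ X) ∩ (B \ X)).card ≤ (A ∩ B).card := Finset.card_le_card h3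
    have h5 := Finset.card_inter_add_card_sdiff A X
    have h6 := Finset.card_inter_add_card_sdiff B X
    omega
  have force : ∀ (M L : Finset (Fin n)) (x : Fin n), M.card = k → k + 1 ≤ L.card →
      M ∩ L = {x} → Mᶜ ⊆ L := by
    intro M L x hM hL hs
    have hx : x ∈ M ∩ L := hs ▸ Finset.mem_singleton_self x
    have hxL : x ∈ L := (Finset.mem_inter.mp hx).2
    have hsub : L.erase x ⊆ Mᶜ := by
      intro y hy
      rw [Finset.mem_erase] at hy
      rw [Finset.mem_compl]
      intro hyM
      have : y ∈ M ∩ L := Finset.mem_inter.mpr ⟨hyM, hy.2⟩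
      rw [hs, Finset.mem_singleton] at this
      exact hy.1 this
    have hcard : Mᶜ.card ≤ (L.erase x).card := by
      rw [Finset.card_compl, Fintype.card_fin, Finset.card_erase_of_mem hxL]
      omega
    have heq := Finset.eq_of_subset_of_card_le hsub hcard
    intro y hy
    rw [← heq] at hy
    exact Finset.erase_subset _ _ hy
  -- nonemptiness of the four medium-large intersections
  have ha1 : 1 ≤ (M₁ ∩ L₁).card := by have := key M₁ L₁; omega
  have hb1 : 1 ≤ (M₁ ∩ L₂).card := by have := key M₁ L₂; omega
  have hc1 : 1 ≤ (M₂ ∩ L₁).card := by have := key M₂ L₁; omega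
  have hd1 : 1 ≤ (M₂ ∩ L₂).card := by have := key M₂ L₂; omega
  have hl2 : 2 ≤ (L₁ ∩ L₂).card := by have := key L₁ L₂; omega
  have nea : (M₁ ∩ L₁).Nonempty := Finset.card_pos.mp (by omega)
  have neb : (M₁ ∩ L₂).Nonempty := Finset.card_pos.mp (by omega)
  have nec : (M₂ ∩ L₁).Nonempty := Finset.card_pos.mp (by omega)
  have ned : (M₂ ∩ L₂).Nonempty := Finset.card_pos.mp (by omega)
  -- union lower bounds
  have hUac : 2 ≤ ((M₁ ∩ L₁) ∪ (M₂ ∩ L₁)).card := by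
    have e : (M₁ ∩ L₁) ∪ (M₂ ∩ L₁) = (M₁ ∪ M₂) ∩ L₁ := by
      ext y; simp only [Finset.mem_union, Finset.mem_inter]; tauto
    rw [e]
    have := key (M₁ ∪ M₂) L₁
    omega
  have hUbd : 2 ≤ ((M₁ ∩ L₂) ∪ (M₂ ∩ L₂)).card := by
    have e : (M₁ ∩ L₂) ∪ (M₂ ∩ L₂) = (M₁ ∪ M₂) ∩ L₂ := by
      ext y; simp only [Finset.mem_union, Finset.mem_inter]; tauto
    rw [e]
    have := key (M₁ ∪ M₂) L₂
    omega
  have hUab : 2 ≤ ((M₁ ∩ L₁) ∪ (M₁ ∩ L₂)).card := by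
    have e : (M₁ ∩ L₁) ∪ (M₁ ∩ L₂) = M₁ ∩ (L₁ ∪ L₂) := by
      ext y; simp only [Finset.mem_union, Finset.mem_inter]; tauto
    rw [e]
    have := key M₁ (L₁ ∪ L₂)
    omega
  have hUcd : 2 ≤ ((M₂ ∩ L₁) ∪ (M₂ ∩ L₂)).card := by
    have e : (M₂ ∩ L₁) ∪ (M₂ ∩ L₂) = M₂ ∩ (L₁ ∪ L₂) := by
      ext y; simp only [Finset.mem_union, Finset.mem_inter]; tauto
    rw [e]
    have := key M₂ (L₁ ∪ L₂)
    omega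
  -- extracting a common singleton from a tiny union
  have sing : ∀ {P Q : Finset (Fin n)}, P.Nonempty → Q.Nonempty → (P ∪ Q).card ≤ 1 →
      ∃ x, P = {x} ∧ Q = {x} := by
    intro P Q hP hQ h
    obtain ⟨p, hp⟩ := hP
    obtain ⟨q, hq⟩ := hQ
    have h1 := Finset.card_le_one.mp h
    refine ⟨p, ?_, ?_⟩ <;> rw [Finset.eq_singleton_iff_unique_mem]
    · exact ⟨hp, fun y hy =>
        h1 y (Finset.mem_union_left _ hy) p (Finset.mem_union_left _ hp)⟩
    · have hpq : q = p := h1 q (Finset.mem_union_right _ hq) p (Finset.mem_union_left _ hp)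
      exact ⟨hpq ▸ hq, fun y hy =>
        h1 y (Finset.mem_union_right _ hy) p (Finset.mem_union_left _ hp)⟩
  -- the three cycle finishers
  have fin1 : ∀ x₁ x₂ x₃ x₄ : Fin n,
      x₁ ∈ M₁ → x₁ ∈ L₁ → x₂ ∈ L₁ → x₂ ∈ M₂ → x₃ ∈ M₂ → x₃ ∈ L₂ → x₄ ∈ L₂ → x₄ ∈ M₁ →
      x₁ ≠ x₂ → x₁ ≠ x₃ → x₁ ≠ x₄ → x₂ ≠ x₃ → x₂ ≠ x₄ → x₃ ≠ x₄ →
      ∃ A ∈ ({M₁, M₂, L₁, L₂} : Set (Finset (Fin n))),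
        ∃ B ∈ ({M₁, M₂, L₁, L₂} : Set (Finset (Fin n))),
          ∃ C ∈ ({M₁, M₂, L₁, L₂} : Set (Finset (Fin n))),
            ∃ D ∈ ({M₁, M₂, L₁, L₂} : Set (Finset (Fin n))),
              BergeC4 A B C D := by
    intro x₁ x₂ x₃ x₄ m1 m2 m3 m4 m5 m6 m7 m8 d12 d13 d14 d23 d24 d34
    exact ⟨M₁, by simp, L₁, by simp, M₂, by simp, L₂, by simp,
      BergeC4.mk4 hM1L1 hM1M2 hM1L2 hM2L1.symm hL1L2 hM2L2
        d12 d13 d14 d23 d24 d34 m1 m2 m3 m4 m5 m6 m7 m8⟩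
  have fin2 : ∀ x₁ x₂ x₃ x₄ : Fin n,
      x₁ ∈ M₁ → x₁ ∈ M₂ → x₂ ∈ M₂ → x₂ ∈ L₂ → x₃ ∈ L₂ → x₃ ∈ L₁ → x₄ ∈ L₁ → x₄ ∈ M₁ →
      x₁ ≠ x₂ → x₁ ≠ x₃ → x₁ ≠ x₄ → x₂ ≠ x₃ → x₂ ≠ x₄ → x₃ ≠ x₄ →
      ∃ A ∈ ({M₁, M₂, L₁, L₂} : Set (Finset (Fin n))),
        ∃ B ∈ ({M₁, M₂, L₁, L₂} : Set (Finset (Fin n))),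
          ∃ C ∈ ({M₁, M₂, L₁, L₂} : Set (Finset (Fin n))),
            ∃ D ∈ ({M₁, M₂, L₁, L₂} : Set (Finset (Fin n))),
              BergeC4 A B C D := by
    intro x₁ x₂ x₃ x₄ m1 m2 m3 m4 m5 m6 m7 m8 d12 d13 d14 d23 d24 d34
    exact ⟨M₁, by simp, M₂, by simp, L₂, by simp, L₁, by simp,
      BergeC4.mk4 hM1M2 hM1L2 hM1L1 hM2L2 hM2L1 hL1L2.symm
        d12 d13 d14 d23 d24 d34 m1 m2 m3 m4 m5 m6 m7 m8⟩
  have fin3 : ∀ x₁ x₂ x₃ x₄ : Fin n,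
      x₁ ∈ M₁ → x₁ ∈ M₂ → x₂ ∈ M₂ → x₂ ∈ L₁ → x₃ ∈ L₁ → x₃ ∈ L₂ → x₄ ∈ L₂ → x₄ ∈ M₁ →
      x₁ ≠ x₂ → x₁ ≠ x₃ → x₁ ≠ x₄ → x₂ ≠ x₃ → x₂ ≠ x₄ → x₃ ≠ x₄ →
      ∃ A ∈ ({M₁, M₂, L₁, L₂} : Set (Finset (Fin n))),
        ∃ B ∈ ({M₁, M₂, L₁, L₂} : Set (Finset (Fin n))),
          ∃ C ∈ ({M₁, M₂, L₁, L₂} : Set (Finset (Fin n))),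
            ∃ D ∈ ({M₁, M₂, L₁, L₂} : Set (Finset (Fin n))),
              BergeC4 A B C D := by
    intro x₁ x₂ x₃ x₄ m1 m2 m3 m4 m5 m6 m7 m8 d12 d13 d14 d23 d24 d34
    exact ⟨M₁, by simp, M₂, by simp, L₁, by simp, L₂, by simp,
      BergeC4.mk4 hM1M2 hM1L1 hM1L2 hM2L1 hM2L2 hL1L2
        d12 d13 d14 d23 d24 d34 m1 m2 m3 m4 m5 m6 m7 m8⟩
  -- main case analysis on which of the four medium-large intersections are big (≥ 4)
  by_cases h1 : 4 ≤ (M₁ ∩ L₁).card ∧ 4 ≤ (M₂ ∩ L₁).card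
  · obtain ⟨s, hs, t, ht, u, hu, v, hv, e1, e2, e3, e4, e5, e6⟩ :=
      sdr4 (U := M₁ ∩ L₁) (V := M₂ ∩ L₁) neb ned hUbd (by omega) h1.2
    obtain ⟨hs1, hs2⟩ := Finset.mem_inter.mp hs
    obtain ⟨ht1, ht2⟩ := Finset.mem_inter.mp ht
    obtain ⟨hu1, hu2⟩ := Finset.mem_inter.mp hu
    obtain ⟨hv1, hv2⟩ := Finset.mem_inter.mp hv
    exact fin1 u v t s hu1 hu2 hv2 hv1 ht1 ht2 hs2 hs1
      e6 e4.symm e2.symm e5.symm e3.symm e1.symm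
  by_cases h2 : 4 ≤ (M₁ ∩ L₂).card ∧ 4 ≤ (M₂ ∩ L₂).card
  · obtain ⟨s, hs, t, ht, u, hu, v, hv, e1, e2, e3, e4, e5, e6⟩ :=
      sdr4 (U := M₂ ∩ L₂) (V := M₁ ∩ L₂) nea nec hUac (by omega) h2.1
    obtain ⟨hs1, hs2⟩ := Finset.mem_inter.mp hs
    obtain ⟨ht1, ht2⟩ := Finset.mem_inter.mp ht
    obtain ⟨hu1, hu2⟩ := Finset.mem_inter.mp hu
    obtain ⟨hv1, hv2⟩ := Finset.mem_inter.mp hv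
    exact fin1 s t u v hs1 hs2 ht2 ht1 hu1 hu2 hv2 hv1 e1 e2 e3 e4 e5 e6
  by_cases h3 : 4 ≤ (M₁ ∩ L₁).card ∧ 4 ≤ (M₁ ∩ L₂).card
  · obtain ⟨s, hs, t, ht, u, hu, v, hv, e1, e2, e3, e4, e5, e6⟩ :=
      sdr4 (U := M₁ ∩ L₁) (V := M₁ ∩ L₂) nec ned hUcd (by omega) h3.2
    obtain ⟨hs1, hs2⟩ := Finset.mem_inter.mp hs
    obtain ⟨ht1, ht2⟩ := Finset.mem_inter.mp ht
    obtain ⟨hu1, hu2⟩ := Finset.mem_inter.mp hu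
    obtain ⟨hv1, hv2⟩ := Finset.mem_inter.mp hv
    exact fin1 u s t v hu1 hu2 hs2 hs1 ht1 ht2 hv2 hv1
      e2.symm e4.symm e6 e1 e3 e5
  by_cases h4 : 4 ≤ (M₂ ∩ L₁).card ∧ 4 ≤ (M₂ ∩ L₂).card
  · obtain ⟨s, hs, t, ht, u, hu, v, hv, e1, e2, e3, e4, e5, e6⟩ :=
      sdr4 (U := M₂ ∩ L₁) (V := M₂ ∩ L₂) nea neb hUab (by omega) h4.2
    obtain ⟨hs1, hs2⟩ := Finset.mem_inter.mp hs
    obtain ⟨ht1, ht2⟩ := Finset.mem_inter.mp ht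
    obtain ⟨hu1, hu2⟩ := Finset.mem_inter.mp hu
    obtain ⟨hv1, hv2⟩ := Finset.mem_inter.mp hv
    exact fin1 s u v t hs1 hs2 hu2 hu1 hv1 hv2 ht2 ht1
      e2 e3 e1 e6 e4.symm e5.symm
  by_cases h5 : 4 ≤ (M₁ ∩ L₂).card ∧ 4 ≤ (M₂ ∩ L₁).card
  · by_cases had : 2 ≤ ((M₁ ∩ L₁) ∪ (M₂ ∩ L₂)).card
    · obtain ⟨s, hs, t, ht, u, hu, v, hv, e1, e2, e3, e4, e5, e6⟩ :=
        sdr4 (U := M₂ ∩ L₁) (V := M₁ ∩ L₂) nea ned had (by omega) h5.1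
      obtain ⟨hs1, hs2⟩ := Finset.mem_inter.mp hs
      obtain ⟨ht1, ht2⟩ := Finset.mem_inter.mp ht
      obtain ⟨hu1, hu2⟩ := Finset.mem_inter.mp hu
      obtain ⟨hv1, hv2⟩ := Finset.mem_inter.mp hv
      exact fin1 s u t v hs1 hs2 hu2 hu1 ht1 ht2 hv2 hv1
        e2 e1 e3 e4.symm e6 e5
    · push_neg at had
      obtain ⟨x, hxa, hxd⟩ := sing nea ned (by omega)
      have hx1 : x ∈ M₁ ∩ L₁ := hxa ▸ Finset.mem_singleton_self x
      have hx2 : x ∈ M₂ ∩ L₂ := hxd ▸ Finset.mem_singleton_self x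
      have hxMM : x ∈ M₁ ∩ M₂ :=
        Finset.mem_inter.mpr ⟨(Finset.mem_inter.mp hx1).1, (Finset.mem_inter.mp hx2).1⟩
      have hST : 2 ≤ ((M₁ ∩ M₂) ∪ (L₁ ∩ L₂)).card :=
        le_trans hl2 (Finset.card_le_card Finset.subset_union_right)
      obtain ⟨s, hs, t, ht, u, hu, v, hv, e1, e2, e3, e4, e5, e6⟩ :=
        sdr4 (T := L₁ ∩ L₂) (U := M₂ ∩ L₁) (V := M₁ ∩ L₂) ⟨x, hxMM⟩ (Finset.card_pos.mp (by omega)) hST (by omega) h5.1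
      obtain ⟨hs1, hs2⟩ := Finset.mem_inter.mp hs
      obtain ⟨ht1, ht2⟩ := Finset.mem_inter.mp ht
      obtain ⟨hu1, hu2⟩ := Finset.mem_inter.mp hu
      obtain ⟨hv1, hv2⟩ := Finset.mem_inter.mp hv
      exact fin3 s u t v hs1 hs2 hu1 hu2 ht1 ht2 hv2 hv1
        e2 e1 e3 e4.symm e6 e5
  by_cases h6 : 4 ≤ (M₁ ∩ L₁).card ∧ 4 ≤ (M₂ ∩ L₂).card
  · by_cases hbc : 2 ≤ ((M₁ ∩ L₂) ∪ (M₂ ∩ L₁)).card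
    · obtain ⟨s, hs, t, ht, u, hu, v, hv, e1, e2, e3, e4, e5, e6⟩ :=
        sdr4 (U := M₁ ∩ L₁) (V := M₂ ∩ L₂) neb nec hbc (by omega) h6.2
      obtain ⟨hs1, hs2⟩ := Finset.mem_inter.mp hs
      obtain ⟨ht1, ht2⟩ := Finset.mem_inter.mp ht
      obtain ⟨hu1, hu2⟩ := Finset.mem_inter.mp hu
      obtain ⟨hv1, hv2⟩ := Finset.mem_inter.mp hv
      exact fin1 u t v s hu1 hu2 ht2 ht1 hv1 hv2 hs2 hs1
        e4.symm e6 e2.symm e5 e1.symm e3.symm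
    · push_neg at hbc
      obtain ⟨x, hxb, hxc⟩ := sing neb nec (by omega)
      have hx1 : x ∈ M₁ ∩ L₂ := hxb ▸ Finset.mem_singleton_self x
      have hx2 : x ∈ M₂ ∩ L₁ := hxc ▸ Finset.mem_singleton_self x
      have hxMM : x ∈ M₁ ∩ M₂ :=
        Finset.mem_inter.mpr ⟨(Finset.mem_inter.mp hx1).1, (Finset.mem_inter.mp hx2).1⟩
      have hl2' : 2 ≤ (L₂ ∩ L₁).card := by rw [Finset.inter_comm]; exact hl2
      have hST : 2 ≤ ((M₁ ∩ M₂) ∪ (L₂ ∩ L₁)).card :=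
        le_trans hl2' (Finset.card_le_card Finset.subset_union_right)
      obtain ⟨s, hs, t, ht, u, hu, v, hv, e1, e2, e3, e4, e5, e6⟩ :=
        sdr4 (T := L₂ ∩ L₁) (U := M₂ ∩ L₂) (V := M₁ ∩ L₁) ⟨x, hxMM⟩ (Finset.card_pos.mp (by omega)) hST (by omega) h6.1
      obtain ⟨hs1, hs2⟩ := Finset.mem_inter.mp hs
      obtain ⟨ht1, ht2⟩ := Finset.mem_inter.mp ht
      obtain ⟨hu1, hu2⟩ := Finset.mem_inter.mp hu
      obtain ⟨hv1, hv2⟩ := Finset.mem_inter.mp hv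
      exact fin2 s u t v hs1 hs2 hu1 hu2 ht1 ht2 hv2 hv1
        e2 e1 e3 e4.symm e6 e5
  -- case 7: at most one of the four medium-large intersections is big
  · have hEL1 := excl L₁ L₂ M₁
    have hEL2 := excl L₁ L₂ M₂
    have hEM1 := excl M₁ M₂ L₁
    have hEM2 := excl M₁ M₂ L₂
    have c1 : (L₁ ∩ M₁).card = (M₁ ∩ L₁).card := by rw [Finset.inter_comm]
    have c2 : (L₂ ∩ M₁).card = (M₁ ∩ L₂).card := by rw [Finset.inter_comm]
    have c3 : (L₁ ∩ M₂).card = (M₂ ∩ L₁).card := by rw [Finset.inter_comm]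
    have c4 : (L₂ ∩ M₂).card = (M₂ ∩ L₂).card := by rw [Finset.inter_comm]
    have hsm1 : ((M₁ ∩ L₁).card ≤ 3 ∧ (M₁ ∩ L₂).card ≤ 3) ∨
        ((M₂ ∩ L₁).card ≤ 3 ∧ (M₂ ∩ L₂).card ≤ 3) := by
      by_cases ha : 4 ≤ (M₁ ∩ L₁).card
      · exact Or.inr ⟨by omega, by omega⟩
      · by_cases hb : 4 ≤ (M₁ ∩ L₂).card
        · exact Or.inr ⟨by omega, by omega⟩
        · exact Or.inl ⟨by omega, by omega⟩
    have hsm2 : ((M₁ ∩ L₁).card ≤ 3 ∧ (M₂ ∩ L₁).card ≤ 3) ∨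
        ((M₁ ∩ L₂).card ≤ 3 ∧ (M₂ ∩ L₂).card ≤ 3) := by
      by_cases ha : 4 ≤ (M₁ ∩ L₁).card
      · exact Or.inr ⟨by omega, by omega⟩
      · by_cases hc : 4 ≤ (M₂ ∩ L₁).card
        · exact Or.inr ⟨by omega, by omega⟩
        · exact Or.inl ⟨by omega, by omega⟩
    have hl7 : 4 ≤ (L₁ ∩ L₂).card := by
      rcases hsm1 with ⟨u1, u2⟩ | ⟨u1, u2⟩
      · omega
      · omega
    have hm7 : 3 ≤ (M₁ ∩ M₂).card := by
      rcases hsm2 with ⟨u1, u2⟩ | ⟨u1, u2⟩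
      · omega
      · omega
    by_cases had : 2 ≤ ((M₁ ∩ L₁) ∪ (M₂ ∩ L₂)).card
    · obtain ⟨s, hs, t, ht, u, hu, v, hv, e1, e2, e3, e4, e5, e6⟩ :=
        sdr4 nea ned had hm7 hl7
      obtain ⟨hs1, hs2⟩ := Finset.mem_inter.mp hs
      obtain ⟨ht1, ht2⟩ := Finset.mem_inter.mp ht
      obtain ⟨hu1, hu2⟩ := Finset.mem_inter.mp hu
      obtain ⟨hv1, hv2⟩ := Finset.mem_inter.mp hv
      exact fin2 u t v s hu1 hu2 ht1 ht2 hv2 hv1 hs2 hs1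
        e4.symm e6 e2.symm e5 e1.symm e3.symm
    · push_neg at had
      obtain ⟨x, hxa, hxd⟩ := sing nea ned (by omega)
      have hx1 : x ∈ M₁ ∩ L₁ := hxa ▸ Finset.mem_singleton_self x
      have hx2 : x ∈ M₂ ∩ L₂ := hxd ▸ Finset.mem_singleton_self x
      have hcompl : M₂ᶜ ⊆ L₂ := force M₂ L₂ x hM₂' hL₂' hxd
      have hns : ¬ M₁ ⊆ M₂ := fun h => hM1M2 (Finset.eq_of_subset_of_card_le h (by omega))
      obtain ⟨y, hyM₁, hyM₂⟩ := Finset.not_subset.mp hns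
      have hyL₂ : y ∈ L₂ := hcompl (Finset.mem_compl.mpr hyM₂)
      have hxy : x ≠ y := fun e => hyM₂ (e ▸ (Finset.mem_inter.mp hx2).1)
      have hsub2 : ({x, y} : Finset (Fin n)) ⊆ (M₂ ∩ L₁) ∪ (M₁ ∩ L₂) := by
        intro z hz
        rcases Finset.mem_insert.mp hz with rfl | hz
        · exact Finset.mem_union_left _ (Finset.mem_inter.mpr
            ⟨(Finset.mem_inter.mp hx2).1, (Finset.mem_inter.mp hx1).2⟩)
        · rw [Finset.mem_singleton] at hz
          subst hz
          exact Finset.mem_union_right _ (Finset.mem_inter.mpr ⟨hyM₁, hyL₂⟩)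
      have hST : 2 ≤ ((M₂ ∩ L₁) ∪ (M₁ ∩ L₂)).card := by
        calc 2 = ({x, y} : Finset (Fin n)).card := (Finset.card_pair hxy).symm
        _ ≤ _ := Finset.card_le_card hsub2
      obtain ⟨s, hs, t, ht, u, hu, v, hv, e1, e2, e3, e4, e5, e6⟩ :=
        sdr4 nec neb hST hm7 hl7
      obtain ⟨hs1, hs2⟩ := Finset.mem_inter.mp hs
      obtain ⟨ht1, ht2⟩ := Finset.mem_inter.mp ht
      obtain ⟨hu1, hu2⟩ := Finset.mem_inter.mp hu
      obtain ⟨hv1, hv2⟩ := Finset.mem_inter.mp hv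
      exact fin3 u s v t hu1 hu2 hs1 hs2 hv1 hv2 ht2 ht1
        e2.symm e6 e4.symm e3 e1 e5.symm
end

section
/- Let n ≥ 26 be even. Any four pairwise distinct subsets of [n] consisting of one set M₁ of size exactly n/2 and three sets L₁, L₂, L₃ each of size at least n/2 + 1 form a Berge four-cycle in some cyclic order. -/
section Aux

variable {n : ℕ}

lemma aux_inter_card (A B : Finset (Fin n)) : A.card + B.card ≤ (A ∩ B).card + n := by
  have h1 := Finset.card_inter_add_card_union A B
  have h2 : (A ∪ B).card ≤ n := by simpa using Finset.card_le_univ (A ∪ B)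
  omega

lemma aux_union_card {k : ℕ} (A B : Finset (Fin n)) (hne : A ≠ B)
    (hA : k ≤ A.card) (hB : k ≤ B.card) : k + 1 ≤ (A ∪ B).card := by
  by_contra h
  push_neg at h
  have h1 : A = A ∪ B := Finset.eq_of_subset_of_card_le Finset.subset_union_left (by omega)
  have h2 : B = A ∪ B := Finset.eq_of_subset_of_card_le Finset.subset_union_right (by omega)
  exact hne (h1.trans h2.symm)

lemma sdiff_singleton_card (s : Finset (Fin n)) (a : Fin n) : s.card ≤ (s \ {a}).card + 1 := by
  have h1 := Finset.card_sdiff_add_card_inter s {a}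
  have h2 : (s ∩ {a}).card ≤ 1 :=
    le_trans (Finset.card_le_card Finset.inter_subset_right) (by simp)
  omega

lemma two_of_sets (U V : Finset (Fin n)) (hU : U.Nonempty) (hV : V.Nonempty)
    (h : 2 ≤ (U ∪ V).card) : ∃ u ∈ U, ∃ v ∈ V, u ≠ v := by
  obtain ⟨u, hu⟩ := hU
  obtain ⟨v, hv⟩ := hV
  by_cases huv : u = v
  · have h' : 1 < (U ∪ V).card := by omega
    obtain ⟨w, hw, hwu⟩ := Finset.exists_mem_ne h' u
    rcases Finset.mem_union.mp hw with hwU | hwV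
    · exact ⟨w, hwU, v, hv, huv ▸ hwu⟩
    · exact ⟨u, hu, w, hwV, fun hc => hwu hc.symm⟩
  · exact ⟨u, hu, v, hv, huv⟩

lemma pick_distinct (S T : Finset (Fin n)) (hS : S.Nonempty) (hT : T.Nonempty)
    (hST : S ≠ T) : ∃ s ∈ S, ∃ t ∈ T, s ≠ t := by
  by_cases h : S ⊆ T
  · have h2 : ¬ T ⊆ S := fun h2 => hST (Finset.Subset.antisymm h h2)
    obtain ⟨t, ht, hts⟩ := Finset.not_subset.mp h2
    obtain ⟨s, hs⟩ := hS
    exact ⟨s, hs, t, ht, fun he => hts (he ▸ hs)⟩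
  · obtain ⟨s, hs, hsT⟩ := Finset.not_subset.mp h
    obtain ⟨t, ht⟩ := hT
    exact ⟨s, hs, t, ht, fun he => hsT (he ▸ ht)⟩

def Core (M A B C : Finset (Fin n)) : Prop :=
  ∃ x₁ x₂ x₃ x₄ : Fin n,
    x₁ ≠ x₂ ∧ x₁ ≠ x₃ ∧ x₁ ≠ x₄ ∧ x₂ ≠ x₃ ∧ x₂ ≠ x₄ ∧ x₃ ≠ x₄ ∧
    x₁ ∈ M ∩ A ∧ x₂ ∈ A ∩ B ∧ x₃ ∈ B ∩ C ∧ x₄ ∈ C ∩ M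

lemma pack {M A B C : Finset (Fin n)} (h1 : M ≠ A) (h2 : M ≠ B) (h3 : M ≠ C)
    (h4 : A ≠ B) (h5 : A ≠ C) (h6 : B ≠ C) (hc : Core M A B C) : BergeC4 M A B C := by
  obtain ⟨x₁, x₂, x₃, x₄, h⟩ := hc
  exact ⟨h1, h2, h3, h4, h5, h6, x₁, x₂, x₃, x₄, h⟩

lemma coreA (M A B C : Finset (Fin n)) (h4 : 4 ≤ (M ∩ A).card)
    (hCM : (C ∩ M).Nonempty) (hAB : 2 ≤ (A ∩ B).card) (hBC : 2 ≤ (B ∩ C).card)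
    (h3 : 3 ≤ ((A ∩ B) ∪ (B ∩ C)).card) : Core M A B C := by
  obtain ⟨x₄, hx₄⟩ := hCM
  have hU : ((A ∩ B) \ {x₄}).Nonempty := by
    rw [← Finset.card_pos]
    have := sdiff_singleton_card (A ∩ B) x₄
    omega
  have hV : ((B ∩ C) \ {x₄}).Nonempty := by
    rw [← Finset.card_pos]
    have := sdiff_singleton_card (B ∩ C) x₄
    omega
  have hUV : 2 ≤ (((A ∩ B) \ {x₄}) ∪ ((B ∩ C) \ {x₄})).card := by
    rw [← Finset.union_sdiff_distrib]
    have := sdiff_singleton_card ((A ∩ B) ∪ (B ∩ C)) x₄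
    omega
  obtain ⟨x₂, hx₂, x₃, hx₃, h23⟩ := two_of_sets _ _ hU hV hUV
  rw [Finset.mem_sdiff, Finset.mem_singleton] at hx₂ hx₃
  have hMA : ((M ∩ A) \ {x₂, x₃, x₄}).Nonempty := by
    rw [← Finset.card_pos]
    have h1 := Finset.card_sdiff_add_card_inter (M ∩ A) {x₂, x₃, x₄}
    have h2 : ((M ∩ A) ∩ {x₂, x₃, x₄}).card ≤ 3 := by
      refine le_trans (Finset.card_le_card Finset.inter_subset_right) ?_
      refine le_trans (Finset.card_insert_le _ _) ?_
      refine Nat.succ_le_succ ?_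
      refine le_trans (Finset.card_insert_le _ _) ?_
      simp
    omega
  obtain ⟨x₁, hx₁⟩ := hMA
  rw [Finset.mem_sdiff] at hx₁
  simp only [Finset.mem_insert, Finset.mem_singleton, not_or] at hx₁
  exact ⟨x₁, x₂, x₃, x₄, hx₁.2.1, hx₁.2.2.1, hx₁.2.2.2, h23, hx₂.2, hx₃.2,
    hx₁.1, hx₂.1, hx₃.1, hx₄⟩

lemma coreB (M A B C : Finset (Fin n)) (x₁ x₄ : Fin n)
    (h1 : x₁ ∈ M ∩ A) (h4 : x₄ ∈ C ∩ M) (h14 : x₁ ≠ x₄)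
    (hU : ((A ∩ B) \ M).Nonempty) (hV : 2 ≤ ((B ∩ C) \ M).card) : Core M A B C := by
  obtain ⟨x₂, hx₂⟩ := hU
  have hV' : (((B ∩ C) \ M) \ {x₂}).Nonempty := by
    rw [← Finset.card_pos]
    have := sdiff_singleton_card ((B ∩ C) \ M) x₂
    omega
  obtain ⟨x₃, hx₃⟩ := hV'
  rw [Finset.mem_sdiff, Finset.mem_singleton] at hx₃
  rw [Finset.mem_sdiff] at hx₂
  obtain ⟨hx₃', h32⟩ := hx₃
  rw [Finset.mem_sdiff] at hx₃'
  have h1M : x₁ ∈ M := (Finset.mem_inter.mp h1).1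
  have h4M : x₄ ∈ M := (Finset.mem_inter.mp h4).2
  refine ⟨x₁, x₂, x₃, x₄, ?_, ?_, h14, ?_, ?_, ?_, h1, hx₂.1, hx₃'.1, h4⟩
  · exact fun he => hx₂.2 (he ▸ h1M)
  · exact fun he => hx₃'.2 (he ▸ h1M)
  · exact fun he => h32 he.symm
  · exact fun he => hx₂.2 (he ▸ h4M)
  · exact fun he => hx₃'.2 (he ▸ h4M)

lemma big {q : ℕ} (hq : 13 ≤ q) (hn : n = q + q) (M A B : Finset (Fin n))
    (hM : M.card = q) (hA : q + 1 ≤ A.card) (hB : q + 1 ≤ B.card)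
    (hA3 : (M ∩ A).card ≤ 3) (hB3 : (M ∩ B).card ≤ 3) :
    2 ≤ ((A ∩ B) \ M).card := by
  have hXA := Finset.card_sdiff_add_card_inter A M
  have hXB := Finset.card_sdiff_add_card_inter B M
  have hAM : (A ∩ M).card = (M ∩ A).card := by rw [Finset.inter_comm]
  have hBM : (B ∩ M).card = (M ∩ B).card := by rw [Finset.inter_comm]
  have hUs : (A \ M) ∪ (B \ M) ⊆ Mᶜ := by
    intro x hx
    simp only [Finset.mem_union, Finset.mem_sdiff, Finset.mem_compl] at *
    tauto
  have hUc : ((A \ M) ∪ (B \ M)).card ≤ n - q := by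
    refine le_trans (Finset.card_le_card hUs) ?_
    simp [Finset.card_compl, hM]
  have hsum := Finset.card_inter_add_card_union (A \ M) (B \ M)
  have heq : (A ∩ B) \ M = (A \ M) ∩ (B \ M) := by
    ext x
    simp only [Finset.mem_inter, Finset.mem_sdiff]
    tauto
  rw [heq]
  omega

lemma exists_pair {q : ℕ} (hn : n = q + q) (M A B : Finset (Fin n)) (hAB : A ≠ B)
    (hM : M.card = q) (hA : q + 1 ≤ A.card) (hB : q + 1 ≤ B.card)
    (hMA : (M ∩ A).Nonempty) (hMB : (M ∩ B).Nonempty) :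
    ∃ x ∈ M ∩ A, ∃ y ∈ M ∩ B, x ≠ y := by
  by_cases h : M ∩ A = M ∩ B
  · rcases Nat.lt_or_ge 1 (M ∩ A).card with h2 | h2
    · obtain ⟨x, hx, y, hy, hxy⟩ := Finset.one_lt_card.mp h2
      exact ⟨x, hx, y, h ▸ hy, hxy⟩
    · have hc1 : (M ∩ A).card = 1 := le_antisymm h2 (Finset.card_pos.mpr hMA)
      obtain ⟨x, hx⟩ := Finset.card_eq_one.mp hc1
      exfalso
      have key : ∀ S : Finset (Fin n), q + 1 ≤ S.card → M ∩ S = {x} → S = insert x Mᶜ := by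
        intro S hS hMS
        apply Finset.eq_of_subset_of_card_le
        · intro a ha
          by_cases haM : a ∈ M
          · have hmem : a ∈ M ∩ S := Finset.mem_inter.mpr ⟨haM, ha⟩
            rw [hMS, Finset.mem_singleton] at hmem
            simp [hmem]
          · simp [Finset.mem_insert, Finset.mem_compl, haM]
        · have h1 : (insert x Mᶜ).card ≤ Mᶜ.card + 1 := Finset.card_insert_le _ _
          have h2 : Mᶜ.card = n - q := by simp [Finset.card_compl, hM]
          omega
      have e1 := key A hA hx
      have e2 := key B hB (h ▸ hx)
      exact hAB (e1.trans e2.symm)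
  · exact pick_distinct _ _ hMA hMB h

lemma mid {q : ℕ} (hn : n = q + q) (X Y Z : Finset (Fin n))
    (h : q + 2 ≤ (X ∪ Z).card) (hY : q + 1 ≤ Y.card) :
    3 ≤ ((X ∩ Y) ∪ (Y ∩ Z)).card := by
  have heq : (X ∩ Y) ∪ (Y ∩ Z) = Y ∩ (X ∪ Z) := by
    ext x
    simp only [Finset.mem_union, Finset.mem_inter]
    tauto
  rw [heq]
  have := aux_inter_card Y (X ∪ Z)
  omega

lemma main {q : ℕ} (hq : 13 ≤ q) (hn : n = q + q) (M A B C : Finset (Fin n))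
    (hMA : M ≠ A) (hMB : M ≠ B) (hMC : M ≠ C) (hAB : A ≠ B) (hAC : A ≠ C) (hBC : B ≠ C)
    (hM : M.card = q) (hA : q + 1 ≤ A.card) (hB : q + 1 ≤ B.card) (hC : q + 1 ≤ C.card) :
    ∃ P ∈ ({M, A, B, C} : Set (Finset (Fin n))),
      ∃ Q ∈ ({M, A, B, C} : Set (Finset (Fin n))),
        ∃ R ∈ ({M, A, B, C} : Set (Finset (Fin n))),
          ∃ S ∈ ({M, A, B, C} : Set (Finset (Fin n))),
            BergeC4 P Q R S := by
  have hcMA : 1 ≤ (M ∩ A).card := by have := aux_inter_card M A; omega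
  have hcMB : 1 ≤ (M ∩ B).card := by have := aux_inter_card M B; omega
  have hcMC : 1 ≤ (M ∩ C).card := by have := aux_inter_card M C; omega
  have hcAM : (A ∩ M).Nonempty := by
    rw [← Finset.card_pos, Finset.inter_comm]; omega
  have hcBM : (B ∩ M).Nonempty := by
    rw [← Finset.card_pos, Finset.inter_comm]; omega
  have hcCM : (C ∩ M).Nonempty := by
    rw [← Finset.card_pos, Finset.inter_comm]; omega
  have hcAB : 2 ≤ (A ∩ B).card := by have := aux_inter_card A B; omega
  have hcAC : 2 ≤ (A ∩ C).card := by have := aux_inter_card A C; omega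
  have hcBC : 2 ≤ (B ∩ C).card := by have := aux_inter_card B C; omega
  have hcBA : 2 ≤ (B ∩ A).card := by rw [Finset.inter_comm]; omega
  have hcCA : 2 ≤ (C ∩ A).card := by rw [Finset.inter_comm]; omega
  have huAC : q + 2 ≤ (A ∪ C).card := aux_union_card A C hAC hA hC
  have huBC : q + 2 ≤ (B ∪ C).card := aux_union_card B C hBC hB hC
  have huCB : q + 2 ≤ (C ∪ B).card := aux_union_card C B hBC.symm hC hB
  by_cases hA4 : 4 ≤ (M ∩ A).card
  · exact ⟨M, by simp, A, by simp, B, by simp, C, by simp,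
      pack hMA hMB hMC hAB hAC hBC
        (coreA M A B C hA4 hcCM hcAB hcBC (mid hn A B C huAC hB))⟩
  by_cases hB4 : 4 ≤ (M ∩ B).card
  · exact ⟨M, by simp, B, by simp, A, by simp, C, by simp,
      pack hMB hMA hMC hAB.symm hBC hAC
        (coreA M B A C hB4 hcCM hcBA hcAC (mid hn B A C huBC hA))⟩
  by_cases hC4 : 4 ≤ (M ∩ C).card
  · exact ⟨M, by simp, C, by simp, A, by simp, B, by simp,
      pack hMC hMA hMB hAC.symm hBC.symm hAB
        (coreA M C A B hC4 hcBM hcCA hcAB (mid hn C A B huCB hA))⟩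
  push_neg at hA4 hB4 hC4
  obtain ⟨x₁, hx₁, x₄, hx₄, h14⟩ := exists_pair hn M A B hAB hM hA hB
    (Finset.card_pos.mp hcMA) (Finset.card_pos.mp hcMB)
  have hx₄' : x₄ ∈ B ∩ M := by
    rw [Finset.inter_comm]; exact hx₄
  have hU : ((A ∩ C) \ M).Nonempty := by
    rw [← Finset.card_pos]
    have := big hq hn M A C hM hA hC (by omega) (by omega)
    omega
  have hV : 2 ≤ ((C ∩ B) \ M).card := big hq hn M C B hM hC hB (by omega) (by omega)
  exact ⟨M, by simp, A, by simp, C, by simp, B, by simp,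
    pack hMA hMC hMB hAC hAB hBC.symm
      (coreB M A C B x₁ x₄ hx₁ hx₄' h14 hU hV)⟩

end Aux

/-- For even `n ≥ 26`, any four pairwise distinct subsets of `[n]` consisting of one
set of size exactly `n / 2` and three sets of size at least `n / 2 + 1` form a Berge
four-cycle in some cyclic order. -/
theorem one_medium_three_large_C4 (n : ℕ) (hn : 26 ≤ n) (hev : Even n)
    (M₁ L₁ L₂ L₃ : Finset (Fin n))
    (hd : [M₁, L₁, L₂, L₃].Pairwise (· ≠ ·))
    (hM₁ : M₁.card = n / 2)
    (hL₁ : n / 2 + 1 ≤ L₁.card) (hL₂ : n / 2 + 1 ≤ L₂.card) (hL₃ : n / 2 + 1 ≤ L₃.card) :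
    ∃ A ∈ ({M₁, L₁, L₂, L₃} : Set (Finset (Fin n))),
      ∃ B ∈ ({M₁, L₁, L₂, L₃} : Set (Finset (Fin n))),
        ∃ C ∈ ({M₁, L₁, L₂, L₃} : Set (Finset (Fin n))),
          ∃ D ∈ ({M₁, L₁, L₂, L₃} : Set (Finset (Fin n))),
            BergeC4 A B C D := by
  obtain ⟨r, hr⟩ := hev
  have hdiv : n / 2 = r := by omega
  simp only [List.pairwise_cons, List.mem_cons, List.not_mem_nil, List.mem_singleton,
    List.Pairwise.nil, forall_eq_or_imp, forall_eq, or_false] at hd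
  obtain ⟨⟨h1, h2, h3⟩, ⟨h4, h5⟩, h6, -⟩ := hd
  exact main (by omega) hr M₁ L₁ L₂ L₃ h1 h2 h3 h4 h5 h6
    (by omega) (by omega) (by omega) (by omega)
end

section
/- Let n ≥ 27 be odd. Any four pairwise distinct subsets L₁, L₂, L₃, L₄ of [n], each of size at least (n+1)/2, form a Berge four-cycle in some cyclic order. -/
open Finset Function

theorem Finset.exists_injective_mem_of_card_le_four {ι α : Type*} [Fintype ι] [DecidableEq ι]
    [DecidableEq α] (hι : Fintype.card ι ≤ 4) (t : ι → Finset α)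
    (h₁ : ∀ i, (t i).Nonempty) (h₂ : ∀ i j, i ≠ j → 2 ≤ #(t i ∪ t j))
    (h₃ : ∀ i, ∃ j ≠ i, ∃ k ≠ i, 4 ≤ #(t j ∪ t k)) :
    ∃ f : ι → α, Injective f ∧ ∀ i, f i ∈ t i := by
  refine (all_card_le_biUnion_card_iff_exists_injective t).1 fun s => ?_
  rcases le_or_gt #s 2 with hs | hs
  · interval_cases h : #s
    · exact Nat.zero_le _
    · obtain ⟨i, rfl⟩ := card_eq_one.1 h
      simpa using (h₁ i).card_pos
    · obtain ⟨i, j, hij, rfl⟩ := card_eq_two.1 h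
      simpa [biUnion_insert] using h₂ i j hij
  · have : Nonempty ι := ⟨(card_pos.1 (by omega : 0 < #s)).choose⟩
    have hsc : #sᶜ ≤ 1 := by rw [card_compl]; omega
    obtain ⟨i, hi⟩ := card_le_one_iff_subset_singleton.1 hsc
    have mem_s : ∀ j ≠ i, j ∈ s := fun j hj => by
      by_contra hjs
      exact hj (mem_singleton.1 (hi (mem_compl.2 hjs)))
    obtain ⟨j, hj, k, hk, hjk⟩ := h₃ i
    calc #s ≤ 4 := (card_le_univ s).trans hι
      _ ≤ #(t j ∪ t k) := hjk
      _ ≤ #(s.biUnion t) := card_le_card <| union_subset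
        (subset_biUnion_of_mem t (mem_s j hj)) (subset_biUnion_of_mem t (mem_s k hk))

section Majority

variable {α : Type*} [Fintype α] [DecidableEq α] {A B C D : Finset α}

theorem card_add_card_add_card_le (A B C : Finset α) :
    #A + #B + #C ≤ Fintype.card α + #(A ∩ C) + #(A ∩ B ∪ B ∩ C) := by
  have hAC := card_union_add_card_inter A C
  have hB := card_inter_add_card_sdiff B (A ∪ C)
  have hcover : #(B \ (A ∪ C)) + #(A ∪ C) ≤ Fintype.card α :=
    (card_sdiff_add_card _ _).trans_le (card_le_univ _)
  rw [inter_union_distrib_left, inter_comm B A] at hB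
  omega

theorem inter_nonempty_of_lt_two_mul_card (hA : Fintype.card α < 2 * #A)
    (hB : Fintype.card α < 2 * #B) : (A ∩ B).Nonempty :=
  inter_nonempty_of_card_lt_card_add_card (subset_univ A) (subset_univ B)
    (by rw [card_univ]; omega)

theorem two_le_card_inter_union_inter (hA : Fintype.card α < 2 * #A)
    (hB : Fintype.card α < 2 * #B) (hC : Fintype.card α < 2 * #C) (hAC : A ≠ C) :
    2 ≤ #(A ∩ B ∪ B ∩ C) := by
  by_contra! h
  have key := card_add_card_add_card_le A B C
  have hA' : A ∩ C = A := eq_of_subset_of_card_le inter_subset_left (by omega)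
  have hC' : A ∩ C = C := eq_of_subset_of_card_le inter_subset_right (by omega)
  exact hAC (hA'.symm.trans hC')

theorem eq_of_card_union_le_one_of_card_union_le_one (hA : Fintype.card α < 2 * #A)
    (hB : Fintype.card α < 2 * #B) (hC : Fintype.card α < 2 * #C)
    (hD : Fintype.card α < 2 * #D) (hABCD : #(A ∩ B ∪ C ∩ D) ≤ 1)
    (hACBD : #(A ∩ C ∪ B ∩ D) ≤ 1) : B = C := by
  obtain ⟨x, hx⟩ := inter_nonempty_of_lt_two_mul_card hA hB
  obtain ⟨y, hy⟩ := inter_nonempty_of_lt_two_mul_card hC hD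
  obtain rfl : x = y := card_le_one.1 hABCD x (mem_union_left _ hx) y (mem_union_right _ hy)
  have hxAC : x ∈ A ∩ C := mem_inter.2 ⟨(mem_inter.1 hx).1, (mem_inter.1 hy).1⟩
  have hx' : ∀ z ∈ B ∩ A ∪ A ∩ C, z = x := by
    intro z hz
    rcases mem_union.1 hz with hz | hz
    · rw [inter_comm] at hz
      exact card_le_one.1 hABCD z (mem_union_left _ hz) x (mem_union_left _ hx)
    · exact card_le_one.1 hACBD z (mem_union_left _ hz) x (mem_union_left _ hxAC)
  by_contra hBC
  have := two_le_card_inter_union_inter hB hA hC hBC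
  have : #(B ∩ A ∪ A ∩ C) ≤ 1 :=
    card_le_one.2 fun a ha b hb => (hx' a ha).trans (hx' b hb).symm
  omega

theorem exists_injective_mem_cycle (hα : 27 ≤ Fintype.card α)
    (hA : Fintype.card α < 2 * #A) (hB : Fintype.card α < 2 * #B)
    (hC : Fintype.card α < 2 * #C) (hD : Fintype.card α < 2 * #D)
    (hAC : A ≠ C) (hBD : B ≠ D) (hBC : B ≠ C) (hCD : C ≠ D)
    (hABCD : #(A ∩ C ∪ B ∩ D) ≤ #(A ∩ B ∪ C ∩ D))
    (hADBC : #(A ∩ C ∪ B ∩ D) ≤ #(A ∩ D ∪ B ∩ C)) :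
    ∃ f : Fin 4 → α, Injective f ∧ ∀ i, f i ∈ ![A ∩ B, B ∩ C, C ∩ D, D ∩ A] i := by
  have hBCDA : #(B ∩ C ∪ D ∩ A) = #(A ∩ D ∪ B ∩ C) := by rw [union_comm, inter_comm D A]
  have opp₁ : 2 ≤ #(A ∩ B ∪ C ∩ D) := by
    by_contra! h
    exact hBC (eq_of_card_union_le_one_of_card_union_le_one hA hB hC hD (by omega) (by omega))
  have opp₂ : 2 ≤ #(B ∩ C ∪ D ∩ A) := by
    by_contra! h
    refine hCD (eq_of_card_union_le_one_of_card_union_le_one hA hD hC hB ?_ ?_).symm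
    · rw [inter_comm C B]; omega
    · rw [inter_comm D B]; omega
  have adj₁ := two_le_card_inter_union_inter hA hB hC hAC
  have adj₂ := two_le_card_inter_union_inter hB hC hD hBD
  have adj₃ := two_le_card_inter_union_inter hC hD hA hAC.symm
  have adj₄ := two_le_card_inter_union_inter hD hA hB hBD.symm
  refine exists_injective_mem_of_card_le_four (by simp) _ (fun i => ?_) (fun i j hij => ?_) ?_
  · fin_cases i <;> simp only [Fin.zero_eta, Fin.mk_one, Fin.reduceFinMk, Fin.isValue,
      Matrix.cons_val] <;> exact inter_nonempty_of_lt_two_mul_card ‹_› ‹_›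
  · fin_cases i <;> fin_cases j <;>
      simp only [Fin.isValue, Fin.zero_eta, Fin.mk_one, Fin.reduceFinMk, ne_eq, not_true_eq_false,
        Matrix.cons_val, Matrix.cons_val_zero, Matrix.cons_val_one] at hij ⊢ <;>
      first | assumption | (rw [union_comm]; assumption)
  -- Any three cycle edges contain a pair of opposite edges, and both edges at `B` or at `D`.
  rcases le_or_gt 4 #(A ∩ C ∪ B ∩ D) with hu | hu
  · have h₀₂ : 4 ≤ #(A ∩ B ∪ C ∩ D) := by omega
    have h₁₃ : 4 ≤ #(B ∩ C ∪ D ∩ A) := by omega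
    intro i
    fin_cases i
    exacts [⟨1, by decide, 3, by decide, h₁₃⟩, ⟨0, by decide, 2, by decide, h₀₂⟩,
      ⟨1, by decide, 3, by decide, h₁₃⟩, ⟨0, by decide, 2, by decide, h₀₂⟩]
  · have hAC₃ : #(A ∩ C) ≤ #(A ∩ C ∪ B ∩ D) := card_le_card subset_union_left
    have countB := card_add_card_add_card_le A B C
    have countD := card_add_card_add_card_le C D A
    rw [inter_comm C A] at countD
    have h₀₁ : 4 ≤ #(A ∩ B ∪ B ∩ C) := by omega
    have h₂₃ : 4 ≤ #(C ∩ D ∪ D ∩ A) := by omega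
    intro i
    fin_cases i
    exacts [⟨2, by decide, 3, by decide, h₂₃⟩, ⟨2, by decide, 3, by decide, h₂₃⟩,
      ⟨0, by decide, 1, by decide, h₀₁⟩, ⟨0, by decide, 1, by decide, h₀₁⟩]

end Majority

section Cycle

variable {n : ℕ} {A B C D : Finset (Fin n)}

theorem bergeC4_of_card_diagonals_le (hn : 27 ≤ n)
    (hA : n < 2 * #A) (hB : n < 2 * #B) (hC : n < 2 * #C) (hD : n < 2 * #D)
    (hAB : A ≠ B) (hAC : A ≠ C) (hAD : A ≠ D) (hBC : B ≠ C) (hBD : B ≠ D) (hCD : C ≠ D)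
    (hABCD : #(A ∩ C ∪ B ∩ D) ≤ #(A ∩ B ∪ C ∩ D))
    (hADBC : #(A ∩ C ∪ B ∩ D) ≤ #(A ∩ D ∪ B ∩ C)) :
    BergeC4 A B C D := by
  have card := Fintype.card_fin n
  obtain ⟨f, hf, hmem⟩ := exists_injective_mem_cycle (hn.trans_eq card.symm)
    (card.trans_lt hA) (card.trans_lt hB) (card.trans_lt hC) (card.trans_lt hD)
    hAC hBD hBC hCD hABCD hADBC
  exact ⟨hAB, hAC, hAD, hBC, hBD, hCD, f 0, f 1, f 2, f 3,
    hf.ne (by decide), hf.ne (by decide), hf.ne (by decide), hf.ne (by decide),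
    hf.ne (by decide), hf.ne (by decide), hmem 0, hmem 1, hmem 2, hmem 3⟩

theorem bergeC4_or_bergeC4_or_bergeC4 (hn : 27 ≤ n)
    (hA : n < 2 * #A) (hB : n < 2 * #B) (hC : n < 2 * #C) (hD : n < 2 * #D)
    (hAB : A ≠ B) (hAC : A ≠ C) (hAD : A ≠ D) (hBC : B ≠ C) (hBD : B ≠ D) (hCD : C ≠ D) :
    BergeC4 A B C D ∨ BergeC4 A C B D ∨ BergeC4 A B D C := by
  have hCB : #(A ∩ D ∪ C ∩ B) = #(A ∩ D ∪ B ∩ C) := by rw [inter_comm C B]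
  have hDC : #(A ∩ B ∪ D ∩ C) = #(A ∩ B ∪ C ∩ D) := by rw [inter_comm D C]
  by_cases h₂ : #(A ∩ C ∪ B ∩ D) ≤ #(A ∩ B ∪ C ∩ D) ∧ #(A ∩ C ∪ B ∩ D) ≤ #(A ∩ D ∪ B ∩ C)
  · exact Or.inl <|
      bergeC4_of_card_diagonals_le hn hA hB hC hD hAB hAC hAD hBC hBD hCD h₂.1 h₂.2
  by_cases h₁ : #(A ∩ B ∪ C ∩ D) ≤ #(A ∩ D ∪ B ∩ C)
  · refine Or.inr <| Or.inl <| bergeC4_of_card_diagonals_le hn hA hC hB hD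
      hAC hAB hAD hBC.symm hCD hBD ?_ ?_ <;> omega
  · refine Or.inr <| Or.inr <| bergeC4_of_card_diagonals_le hn hA hB hD hC
      hAB hAD hAC hBD hBC hCD.symm ?_ ?_ <;> omega

end Cycle

/-- For odd `n ≥ 27`, any four pairwise distinct subsets of `[n]`, each of size at
least `(n + 1) / 2`, form a Berge four-cycle in some cyclic order. -/
theorem four_large_C4_odd (n : ℕ) (hn : 27 ≤ n) (hodd : Odd n)
    (L₁ L₂ L₃ L₄ : Finset (Fin n))
    (hd : [L₁, L₂, L₃, L₄].Pairwise (· ≠ ·))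
    (hL₁ : (n + 1) / 2 ≤ L₁.card) (hL₂ : (n + 1) / 2 ≤ L₂.card)
    (hL₃ : (n + 1) / 2 ≤ L₃.card) (hL₄ : (n + 1) / 2 ≤ L₄.card) :
    ∃ A ∈ ({L₁, L₂, L₃, L₄} : Set (Finset (Fin n))),
      ∃ B ∈ ({L₁, L₂, L₃, L₄} : Set (Finset (Fin n))),
        ∃ C ∈ ({L₁, L₂, L₃, L₄} : Set (Finset (Fin n))),
          ∃ D ∈ ({L₁, L₂, L₃, L₄} : Set (Finset (Fin n))),
            BergeC4 A B C D := by
  have large : ∀ L : Finset (Fin n), (n + 1) / 2 ≤ #L → n < 2 * #L := by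
    obtain ⟨k, rfl⟩ := hodd
    omega
  simp only [List.pairwise_cons, List.mem_cons, List.not_mem_nil, forall_eq_or_imp,
    List.Pairwise.nil] at hd
  obtain ⟨⟨h₁₂, h₁₃, h₁₄, -⟩, ⟨h₂₃, h₂₄, -⟩, ⟨h₃₄, -⟩, -⟩ := hd
  rcases bergeC4_or_bergeC4_or_bergeC4 hn (large _ hL₁) (large _ hL₂) (large _ hL₃)
      (large _ hL₄) h₁₂ h₁₃ h₁₄ h₂₃ h₂₄ h₃₄ with h | h | h
  · exact ⟨L₁, by simp, L₂, by simp, L₃, by simp, L₄, by simp, h⟩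
  · exact ⟨L₁, by simp, L₃, by simp, L₂, by simp, L₄, by simp, h⟩
  · exact ⟨L₁, by simp, L₂, by simp, L₄, by simp, L₃, by simp, h⟩
end

section
/- Let n ≥ 26 be even. Any four pairwise distinct subsets A, B, C, D of [n], each of size at least n/2, either form a Berge four-cycle in some cyclic order, or form a Ψ-configuration: i.e., for some labeling of the four sets as A, B, C, D there exists x ∈ [n] such that A∩B ⊆ {x}, A∩C ⊆ {x}, and A∩D ⊆ {x}. -/
namespace C4PsiAux

open Finset

/-- The conclusion of the main theorem, as a predicate of the set of four sets. -/
def GoalS {n : ℕ} (S : Set (Finset (Fin n))) : Prop :=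
  (∃ A' ∈ S, ∃ B' ∈ S, ∃ C' ∈ S, ∃ D' ∈ S, BergeC4 A' B' C' D') ∨
    (∃ A' B' C' D' : Finset (Fin n),
      ({A', B', C', D'} : Set (Finset (Fin n))) = S ∧
      ∃ x : Fin n, A' ∩ B' ⊆ {x} ∧ A' ∩ C' ⊆ {x} ∧ A' ∩ D' ⊆ {x})

lemma pick_avoid {α : Type*} [DecidableEq α] {S T : Finset α} (h : T.card < S.card) :
    ∃ x ∈ S, x ∉ T := by
  have h2 : 0 < (S \ T).card := by
    have := Finset.le_card_sdiff T S
    omega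
  obtain ⟨x, hx⟩ := Finset.card_pos.mp h2
  exact ⟨x, (Finset.mem_sdiff.mp hx).1, (Finset.mem_sdiff.mp hx).2⟩

lemma pick_ne {α : Type*} [DecidableEq α] {S : Finset α} (h : 2 ≤ S.card) (a : α) :
    ∃ x ∈ S, x ≠ a := by
  have hlt : ({a} : Finset α).card < S.card := by rw [Finset.card_singleton]; omega
  obtain ⟨x, hx, hx2⟩ := pick_avoid hlt
  exact ⟨x, hx, by simpa using hx2⟩

lemma pick_ne2 {α : Type*} [DecidableEq α] {S : Finset α} (h : 3 ≤ S.card) (a b : α) :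
    ∃ x ∈ S, x ≠ a ∧ x ≠ b := by
  have hT : ({a, b} : Finset α).card ≤ 2 := by
    have h1 := Finset.card_insert_le a ({b} : Finset α)
    simp at h1 ⊢; omega
  have hlt : ({a, b} : Finset α).card < S.card := by omega
  obtain ⟨x, hx, hx2⟩ := pick_avoid hlt
  refine ⟨x, hx, ?_, ?_⟩ <;> simp at hx2 <;> tauto

lemma pick_ne3 {α : Type*} [DecidableEq α] {S : Finset α} (h : 4 ≤ S.card) (a b c : α) :
    ∃ x ∈ S, x ≠ a ∧ x ≠ b ∧ x ≠ c := by
  have hT : ({a, b, c} : Finset α).card ≤ 3 := by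
    have h1 := Finset.card_insert_le a ({b, c} : Finset α)
    have h2 := Finset.card_insert_le b ({c} : Finset α)
    simp at h1 h2 ⊢; omega
  have hlt : ({a, b, c} : Finset α).card < S.card := by omega
  obtain ⟨x, hx, hx2⟩ := pick_avoid hlt
  refine ⟨x, hx, ?_, ?_, ?_⟩ <;> simp at hx2 <;> tauto

lemma pick4 {α : Type*} [DecidableEq α] {S₁ S₂ S₃ S₄ : Finset α}
    (h₁ : 1 ≤ S₁.card) (h₂ : 2 ≤ S₂.card) (h₃ : 3 ≤ S₃.card) (h₄ : 4 ≤ S₄.card) :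
    ∃ x₁ x₂ x₃ x₄, x₁ ∈ S₁ ∧ x₂ ∈ S₂ ∧ x₃ ∈ S₃ ∧ x₄ ∈ S₄ ∧
      x₁ ≠ x₂ ∧ x₁ ≠ x₃ ∧ x₁ ≠ x₄ ∧ x₂ ≠ x₃ ∧ x₂ ≠ x₄ ∧ x₃ ≠ x₄ := by
  have h0 : 0 < S₁.card := by omega
  obtain ⟨x₁, hx₁⟩ := Finset.card_pos.mp h0
  obtain ⟨x₂, hx₂, d21⟩ := pick_ne h₂ x₁
  obtain ⟨x₃, hx₃, d31, d32⟩ := pick_ne2 h₃ x₁ x₂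
  obtain ⟨x₄, hx₄, d41, d42, d43⟩ := pick_ne3 h₄ x₁ x₂ x₃
  exact ⟨x₁, x₂, x₃, x₄, hx₁, hx₂, hx₃, hx₄, d21.symm, d31.symm, d41.symm, d32.symm,
    d42.symm, d43.symm⟩

lemma berge_goal {n : ℕ} {S : Set (Finset (Fin n))} {P Q R W : Finset (Fin n)}
    (hP : P ∈ S) (hQ : Q ∈ S) (hR : R ∈ S) (hW : W ∈ S)
    (h1 : P ≠ Q) (h2 : P ≠ R) (h3 : P ≠ W) (h4 : Q ≠ R) (h5 : Q ≠ W) (h6 : R ≠ W)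
    {x₁ x₂ x₃ x₄ : Fin n}
    (d1 : x₁ ≠ x₂) (d2 : x₁ ≠ x₃) (d3 : x₁ ≠ x₄) (d4 : x₂ ≠ x₃) (d5 : x₂ ≠ x₄) (d6 : x₃ ≠ x₄)
    (m1 : x₁ ∈ P ∩ Q) (m2 : x₂ ∈ Q ∩ R) (m3 : x₃ ∈ R ∩ W) (m4 : x₄ ∈ W ∩ P) :
    GoalS S :=
  Or.inl ⟨P, hP, Q, hQ, R, hR, W, hW, h1, h2, h3, h4, h5, h6,
    x₁, x₂, x₃, x₄, d1, d2, d3, d4, d5, d6, m1, m2, m3, m4⟩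

lemma berge_pick4 {n : ℕ} {S : Set (Finset (Fin n))} {P Q R W : Finset (Fin n)}
    (hP : P ∈ S) (hQ : Q ∈ S) (hR : R ∈ S) (hW : W ∈ S)
    (h1 : P ≠ Q) (h2 : P ≠ R) (h3 : P ≠ W) (h4 : Q ≠ R) (h5 : Q ≠ W) (h6 : R ≠ W)
    (q1 : 1 ≤ (P ∩ Q).card) (q2 : 2 ≤ (Q ∩ R).card) (q3 : 3 ≤ (R ∩ W).card)
    (q4 : 4 ≤ (W ∩ P).card) : GoalS S := by
  obtain ⟨x₁, x₂, x₃, x₄, m1, m2, m3, m4, d1, d2, d3, d4, d5, d6⟩ := pick4 q1 q2 q3 q4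
  exact berge_goal hP hQ hR hW h1 h2 h3 h4 h5 h6 d1 d2 d3 d4 d5 d6 m1 m2 m3 m4

lemma card_fin_le {n : ℕ} (W : Finset (Fin n)) : W.card ≤ n := by
  have := Finset.card_le_univ W; simpa using this

lemma reservoir {n m : ℕ} (hnm : n = m + m) (hm : 13 ≤ m) {W X Y : Finset (Fin n)}
    (hX : m ≤ X.card) (hY : m ≤ Y.card) (hW : m ≤ W.card)
    (h1 : (X ∩ W).card ≤ 3) (h2 : (Y ∩ W).card ≤ 3) : 7 ≤ ((X ∩ Y) \ W).card := by
  have e0 : (X ∩ Y) \ W = (X \ W) ∩ (Y \ W) := by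
    ext a; simp only [Finset.mem_sdiff, Finset.mem_inter]; tauto
  have e1 : (X ∩ W).card + (X \ W).card = X.card := Finset.card_inter_add_card_sdiff X W
  have e2 : (Y ∩ W).card + (Y \ W).card = Y.card := Finset.card_inter_add_card_sdiff Y W
  have e3 : ((X \ W) ∩ (Y \ W)).card + ((X \ W) ∪ (Y \ W)).card
      = (X \ W).card + (Y \ W).card := Finset.card_inter_add_card_union _ _
  have e4 : (X \ W) ∪ (Y \ W) ⊆ Wᶜ := by
    intro a ha
    rcases Finset.mem_union.mp ha with h | h <;>
      · simp only [Finset.mem_compl]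
        exact (Finset.mem_sdiff.mp h).2
  have e6 := Finset.card_le_card e4
  have e5 : Wᶜ.card = n - W.card := by rw [Finset.card_compl]; simp
  have e7 : W.card ≤ n := card_fin_le W
  rw [e0]; omega

lemma eq_of_two_disjoint {n m : ℕ} (hnm : n = m + m) {A B C : Finset (Fin n)}
    (hA : m ≤ A.card) (hB : m ≤ B.card) (hC : m ≤ C.card)
    (h1 : A ∩ B = ∅) (h2 : A ∩ C = ∅) : B = C := by
  have key : ∀ X : Finset (Fin n), A ∩ X = ∅ → m ≤ X.card → X = Aᶜ := by
    intro X hX hXc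
    have hsub : X ⊆ Aᶜ := by
      intro x hx
      rw [Finset.mem_compl]
      intro hxA
      have : x ∈ A ∩ X := Finset.mem_inter.mpr ⟨hxA, hx⟩
      rw [hX] at this
      exact absurd this (Finset.notMem_empty x)
    have hcc : Aᶜ.card ≤ m := by
      rw [Finset.card_compl]
      simp only [Fintype.card_fin]
      omega
    exact Finset.eq_of_subset_of_card_le hsub (le_trans hcc hXc)
  rw [key B h1 hB, key C h2 hC]

lemma card_union_ne {n m : ℕ} {X Y : Finset (Fin n)} (h : X ≠ Y)
    (hX : m ≤ X.card) (hY : m ≤ Y.card) : m + 1 ≤ (X ∪ Y).card := by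
  by_cases hs : X ⊆ Y
  · have hss : X ⊂ Y := ssubset_of_subset_of_ne hs h
    have h1 := Finset.card_lt_card hss
    have h2 : X ∪ Y = Y := Finset.union_eq_right.mpr hs
    rw [h2]; omega
  · obtain ⟨p, hp, hpn⟩ := Finset.not_subset.mp hs
    have h1 : insert p Y ⊆ X ∪ Y := by
      intro t ht
      rcases Finset.mem_insert.mp ht with rfl | ht
      · exact Finset.mem_union_left _ hp
      · exact Finset.mem_union_right _ ht
    have h2 := Finset.card_le_card h1
    rw [Finset.card_insert_of_notMem hpn] at h2
    omega

lemma star {n m : ℕ} (hnm : n = m + m) {A B C D : Finset (Fin n)} {a : Fin n}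
    (hAD : A ≠ D) (hBC : B ≠ C)
    (hA : m ≤ A.card) (hB : m ≤ B.card) (hC : m ≤ C.card) (hD : m ≤ D.card)
    (s1 : A ∩ B ⊆ {a}) (s2 : A ∩ C ⊆ {a}) (s3 : D ∩ B ⊆ {a}) (s4 : D ∩ C ⊆ {a}) :
    False := by
  have h1 : m + 1 ≤ (A ∪ D).card := card_union_ne hAD hA hD
  have h2 : m + 1 ≤ (B ∪ C).card := card_union_ne hBC hB hC
  have hdisj : Disjoint ((B ∪ C) \ {a}) (A ∪ D) := by
    rw [Finset.disjoint_left]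
    intro x hx hx2
    obtain ⟨hxBC, hxa⟩ := Finset.mem_sdiff.mp hx
    have hxa' : x ≠ a := by simpa using hxa
    rcases Finset.mem_union.mp hxBC with hxB | hxC <;> rcases Finset.mem_union.mp hx2 with hxA | hxD
    · exact hxa' (by simpa using s1 (Finset.mem_inter.mpr ⟨hxA, hxB⟩))
    · exact hxa' (by simpa using s3 (Finset.mem_inter.mpr ⟨hxD, hxB⟩))
    · exact hxa' (by simpa using s2 (Finset.mem_inter.mpr ⟨hxA, hxC⟩))
    · exact hxa' (by simpa using s4 (Finset.mem_inter.mpr ⟨hxD, hxC⟩))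
  have h3 : ((B ∪ C) \ {a}).card + (A ∪ D).card ≤ n := by
    rw [← Finset.card_union_of_disjoint hdisj]
    exact card_fin_le _
  have h4 : (B ∪ C).card - 1 ≤ ((B ∪ C) \ {a}).card := by
    have := Finset.le_card_sdiff ({a} : Finset (Fin n)) (B ∪ C)
    simpa using this
  omega

lemma sep3 {α : Type*} [DecidableEq α] {P₁ P₂ P₃ : Finset α}
    (h12 : ¬(P₁ = ∅ ∧ P₂ = ∅)) (h13 : ¬(P₁ = ∅ ∧ P₃ = ∅)) (h23 : ¬(P₂ = ∅ ∧ P₃ = ∅))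
    (hT : ¬∃ x, P₁ ⊆ {x} ∧ P₂ ⊆ {x} ∧ P₃ ⊆ {x}) :
    ∃ a₁ a₂, a₁ ≠ a₂ ∧
      ((a₁ ∈ P₁ ∧ a₂ ∈ P₂) ∨ (a₁ ∈ P₁ ∧ a₂ ∈ P₃) ∨ (a₁ ∈ P₂ ∧ a₂ ∈ P₃)) := by
  by_contra hc
  push_neg at hc
  have e12 : ∀ u ∈ P₁, ∀ v ∈ P₂, u = v := by
    intro u hu v hv
    by_contra hne
    exact (hc u v hne).1 hu hv
  have e13 : ∀ u ∈ P₁, ∀ v ∈ P₃, u = v := by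
    intro u hu v hv
    by_contra hne
    exact (hc u v hne).2.1 hu hv
  have e23 : ∀ u ∈ P₂, ∀ v ∈ P₃, u = v := by
    intro u hu v hv
    by_contra hne
    exact (hc u v hne).2.2 hu hv
  apply hT
  rcases P₁.eq_empty_or_nonempty with e1 | ⟨u, hu⟩
  · have hP2 : P₂.Nonempty := by
      rcases P₂.eq_empty_or_nonempty with e2 | h2
      · exact absurd ⟨e1, e2⟩ h12
      · exact h2
    have hP3 : P₃.Nonempty := by
      rcases P₃.eq_empty_or_nonempty with e3 | h3
      · exact absurd ⟨e1, e3⟩ h13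
      · exact h3
    obtain ⟨v, hv⟩ := hP2
    obtain ⟨w, hw⟩ := hP3
    refine ⟨v, ?_, ?_, ?_⟩
    · rw [e1]; exact Finset.empty_subset _
    · intro t ht
      have h1 : t = w := e23 t ht w hw
      have h2 : v = w := e23 v hv w hw
      simp [h1, h2]
    · intro t ht
      have h1 : v = t := e23 v hv t ht
      simp [← h1]
  · refine ⟨u, ?_, ?_, ?_⟩
    · intro t ht
      rcases P₂.eq_empty_or_nonempty with e2 | ⟨v, hv⟩
      · rcases P₃.eq_empty_or_nonempty with e3 | ⟨w, hw⟩
        · exact absurd ⟨e2, e3⟩ h23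
        · have h1 : t = w := e13 t ht w hw
          have h2 : u = w := e13 u hu w hw
          simp [h1, h2]
      · have h1 : t = v := e12 t ht v hv
        have h2 : u = v := e12 u hu v hv
        simp [h1, h2]
    · intro t ht
      have := e12 u hu t ht
      simp [← this]
    · intro t ht
      have := e13 u hu t ht
      simp [← this]


lemma core3 {n m : ℕ} (hnm : n = m + m) (hm : 13 ≤ m) (A B C D : Finset (Fin n))
    (hAB : A ≠ B) (hAC : A ≠ C) (hAD : A ≠ D) (hBC : B ≠ C) (hBD : B ≠ D) (hCD : C ≠ D)
    (cA : m ≤ A.card) (cB : m ≤ B.card) (cC : m ≤ C.card) (cD : m ≤ D.card)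
    (s1 : (A ∩ B).card ≤ 3) (s2 : (A ∩ C).card ≤ 3) (s3 : (C ∩ D).card ≤ 3)
    (big : 4 ≤ (A ∩ D).card) :
    GoalS ({A, B, C, D} : Set (Finset (Fin n))) := by
  have R1 : 7 ≤ ((B ∩ C) \ A).card :=
    reservoir hnm hm cB cC cA (by rw [Finset.inter_comm]; exact s1)
      (by rw [Finset.inter_comm]; exact s2)
  have R2 : 7 ≤ ((A ∩ D) \ C).card :=
    reservoir hnm hm cA cD cC s2 (by rw [Finset.inter_comm]; exact s3)
  by_cases h1 : ∃ x₁ ∈ A ∩ B, ∃ x₃ ∈ C ∩ D, x₁ ≠ x₃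
  · obtain ⟨x₁, hx₁, x₃, hx₃, h13⟩ := h1
    obtain ⟨x₂, hx₂, hx₂1⟩ := pick_ne (show 2 ≤ ((A ∩ D) \ C).card by omega) x₁
    obtain ⟨x₄, hx₄, hx₄3⟩ := pick_ne (show 2 ≤ ((B ∩ C) \ A).card by omega) x₃
    obtain ⟨hx₂AD, hx₂C⟩ := Finset.mem_sdiff.mp hx₂
    obtain ⟨hx₄BC, hx₄A⟩ := Finset.mem_sdiff.mp hx₄
    obtain ⟨hx₁A, hx₁B⟩ := Finset.mem_inter.mp hx₁
    obtain ⟨hx₃C, hx₃D⟩ := Finset.mem_inter.mp hx₃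
    obtain ⟨hx₂A, hx₂D⟩ := Finset.mem_inter.mp hx₂AD
    obtain ⟨hx₄B, hx₄C⟩ := Finset.mem_inter.mp hx₄BC
    -- cycle (B, A, D, C)
    exact berge_goal (by simp) (by simp) (by simp) (by simp)
      hAB.symm hBD hBC hAD hAC hCD.symm
      hx₂1.symm h13 (fun h => hx₄A (by rw [← h]; exact hx₁A))
      (fun h => hx₂C (by rw [h]; exact hx₃C))
      (fun h => hx₄A (by rw [← h]; exact hx₂A)) hx₄3.symm
      (Finset.mem_inter.mpr ⟨hx₁B, hx₁A⟩) hx₂AD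
      (Finset.mem_inter.mpr ⟨hx₃D, hx₃C⟩) (Finset.mem_inter.mpr ⟨hx₄C, hx₄B⟩)
  by_cases h2 : ∃ y₁ ∈ A ∩ C, ∃ y₃ ∈ B ∩ D, y₁ ≠ y₃
  · obtain ⟨y₁, hy₁, y₃, hy₃, k13⟩ := h2
    obtain ⟨y₄, hy₄, hy₄3⟩ := pick_ne (show 2 ≤ ((A ∩ D) \ C).card by omega) y₃
    obtain ⟨y₂, hy₂, hy₂3⟩ := pick_ne (show 2 ≤ ((B ∩ C) \ A).card by omega) y₃
    obtain ⟨hy₄AD, hy₄C⟩ := Finset.mem_sdiff.mp hy₄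
    obtain ⟨hy₂BC, hy₂A⟩ := Finset.mem_sdiff.mp hy₂
    obtain ⟨hy₁A, hy₁C⟩ := Finset.mem_inter.mp hy₁
    obtain ⟨hy₃B, hy₃D⟩ := Finset.mem_inter.mp hy₃
    obtain ⟨hy₄A, hy₄D⟩ := Finset.mem_inter.mp hy₄AD
    obtain ⟨hy₂B, hy₂C⟩ := Finset.mem_inter.mp hy₂BC
    -- cycle (A, C, B, D)
    exact berge_goal (by simp) (by simp) (by simp) (by simp)
      hAC hAB hAD hBC.symm hCD hBD
      (fun h => hy₂A (by rw [← h]; exact hy₁A)) k13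
      (fun h => hy₄C (by rw [← h]; exact hy₁C)) hy₂3
      (fun h => hy₂A (by rw [h]; exact hy₄A)) hy₄3.symm
      (Finset.mem_inter.mpr ⟨hy₁A, hy₁C⟩) (Finset.mem_inter.mpr ⟨hy₂C, hy₂B⟩)
      hy₃ (Finset.mem_inter.mpr ⟨hy₄D, hy₄A⟩)
  push_neg at h1 h2
  rcases (C ∩ D).eq_empty_or_nonempty with hCDe | ⟨a, ha⟩
  · -- C ∩ D = ∅
    have hDB : (D ∩ B).Nonempty := by
      rcases (D ∩ B).eq_empty_or_nonempty with he | h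
      · exact absurd (eq_of_two_disjoint hnm cD cB cC he
          (by rw [Finset.inter_comm]; exact hCDe)) hBC
      · exact h
    have hCA : (C ∩ A).Nonempty := by
      rcases (C ∩ A).eq_empty_or_nonempty with he | h
      · exact absurd (eq_of_two_disjoint hnm cC cA cD he hCDe) hAD
      · exact h
    obtain ⟨z, hz⟩ := hDB
    obtain ⟨y, hy⟩ := hCA
    obtain ⟨hzD, hzB⟩ := Finset.mem_inter.mp hz
    obtain ⟨hyC, hyA⟩ := Finset.mem_inter.mp hy
    have hzC : z ∉ C := by
      intro hc
      have : z ∈ C ∩ D := Finset.mem_inter.mpr ⟨hc, hzD⟩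
      rw [hCDe] at this
      exact absurd this (Finset.notMem_empty z)
    obtain ⟨x₁, hx₁, hx₁z, hx₁y⟩ := pick_ne2 (show 3 ≤ (A ∩ D).card by omega) z y
    obtain ⟨hx₁A, hx₁D⟩ := Finset.mem_inter.mp hx₁
    obtain ⟨x₃, hx₃, hx₃z⟩ := pick_ne (show 2 ≤ ((B ∩ C) \ A).card by omega) z
    obtain ⟨hx₃BC, hx₃A⟩ := Finset.mem_sdiff.mp hx₃
    obtain ⟨hx₃B, hx₃C⟩ := Finset.mem_inter.mp hx₃BC
    -- cycle (A, D, B, C) : pairs A∩D, D∩B, B∩C, C∩A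
    exact berge_goal (by simp) (by simp) (by simp) (by simp)
      hAD hAB hAC hBD.symm hCD.symm hBC
      hx₁z (fun h => hx₃A (by rw [← h]; exact hx₁A)) hx₁y
      (fun h => hzC (by rw [h]; exact hx₃C)) (fun h => hzC (by rw [h]; exact hyC))
      (fun h => hx₃A (by rw [h]; exact hyA))
      hx₁ hz hx₃BC hy
  · rcases (A ∩ B).eq_empty_or_nonempty with hABe | ⟨b, hb⟩
    · -- A ∩ B = ∅, C ∩ D ∋ a
      have hACne : (A ∩ C).Nonempty := by
        rcases (A ∩ C).eq_empty_or_nonempty with he | h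
        · exact absurd (eq_of_two_disjoint hnm cA cB cC hABe he) hBC
        · exact h
      have hDBne : (D ∩ B).Nonempty := by
        rcases (D ∩ B).eq_empty_or_nonempty with he | h
        · exact absurd (eq_of_two_disjoint hnm cB cA cD
            (by rw [Finset.inter_comm]; exact hABe) (by rw [Finset.inter_comm]; exact he)) hAD
        · exact h
      obtain ⟨y, hy⟩ := hACne
      obtain ⟨z, hz⟩ := hDBne
      obtain ⟨hyA, hyC⟩ := Finset.mem_inter.mp hy
      obtain ⟨hzD, hzB⟩ := Finset.mem_inter.mp hz
      have hzA : z ∉ A := by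
        intro hc
        have : z ∈ A ∩ B := Finset.mem_inter.mpr ⟨hc, hzB⟩
        rw [hABe] at this
        exact absurd this (Finset.notMem_empty z)
      obtain ⟨x₂, hx₂, hx₂y, hx₂z⟩ := pick_ne2 (show 3 ≤ (A ∩ D).card by omega) y z
      obtain ⟨hx₂A, hx₂D⟩ := Finset.mem_inter.mp hx₂
      obtain ⟨x₄, hx₄, hx₄z⟩ := pick_ne (show 2 ≤ ((B ∩ C) \ A).card by omega) z
      obtain ⟨hx₄BC, hx₄A⟩ := Finset.mem_sdiff.mp hx₄
      obtain ⟨hx₄B, hx₄C⟩ := Finset.mem_inter.mp hx₄BC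
      -- cycle (C, A, D, B) : pairs C∩A, A∩D, D∩B, B∩C
      exact berge_goal (by simp) (by simp) (by simp) (by simp)
        hAC.symm hCD hBC.symm hAD hAB hBD.symm
        hx₂y.symm (fun h => hzA (by rw [← h]; exact hyA))
        (fun h => hx₄A (by rw [← h]; exact hyA))
        hx₂z (fun h => hx₄A (by rw [← h]; exact hx₂A)) hx₄z.symm
        (Finset.mem_inter.mpr ⟨hyC, hyA⟩) hx₂ hz hx₄BC
    · -- both A∩B ∋ b and C∩D ∋ a nonempty : star contradiction
      obtain ⟨haC, haD⟩ := Finset.mem_inter.mp ha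
      have hba : b = a := h1 b hb a ha
      have haAB : a ∈ A ∩ B := hba ▸ hb
      obtain ⟨haA, haB⟩ := Finset.mem_inter.mp haAB
      have sAB : A ∩ B ⊆ {a} := fun u hu => Finset.mem_singleton.mpr (h1 u hu a ha)
      have sCD : C ∩ D ⊆ {a} := fun v hv => Finset.mem_singleton.mpr ((h1 a haAB v hv).symm)
      have haAC : a ∈ A ∩ C := Finset.mem_inter.mpr ⟨haA, haC⟩
      have haBD : a ∈ B ∩ D := Finset.mem_inter.mpr ⟨haB, haD⟩
      have sAC : A ∩ C ⊆ {a} := fun u hu => Finset.mem_singleton.mpr (h2 u hu a haBD)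
      have sBD : B ∩ D ⊆ {a} := fun v hv => Finset.mem_singleton.mpr ((h2 a haAC v hv).symm)
      exact absurd (star hnm hAD hBC cA cB cC cD sAB sAC
        (by rw [Finset.inter_comm]; exact sBD) (by rw [Finset.inter_comm]; exact sCD)) id

lemma core2 {n m : ℕ} (hnm : n = m + m) (hm : 13 ≤ m) (A B C D : Finset (Fin n))
    (hAB : A ≠ B) (hAC : A ≠ C) (hAD : A ≠ D) (hBC : B ≠ C) (hBD : B ≠ D) (hCD : C ≠ D)
    (cA : m ≤ A.card) (cB : m ≤ B.card) (cC : m ≤ C.card) (cD : m ≤ D.card)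
    (s1 : (A ∩ B).card ≤ 3) (s2 : (A ∩ C).card ≤ 3) :
    GoalS ({A, B, C, D} : Set (Finset (Fin n))) := by
  have R1 : 7 ≤ ((B ∩ C) \ A).card :=
    reservoir hnm hm cB cC cA (by rw [Finset.inter_comm]; exact s1)
      (by rw [Finset.inter_comm]; exact s2)
  have hBC7 : 7 ≤ (B ∩ C).card := by
    have := Finset.card_le_card (Finset.sdiff_subset : (B ∩ C) \ A ⊆ B ∩ C)
    omega
  by_cases hAD4 : 4 ≤ (A ∩ D).card
  · by_cases hCD4 : 4 ≤ (C ∩ D).card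
    · by_cases hBD4 : 4 ≤ (B ∩ D).card
      · -- all of A∩D, C∩D, B∩D large
        rcases (A ∩ B).eq_empty_or_nonempty with he | hne
        · have hACne : (A ∩ C).Nonempty := by
            rcases (A ∩ C).eq_empty_or_nonempty with he2 | h
            · exact absurd (eq_of_two_disjoint hnm cA cB cC he he2) hBC
            · exact h
          -- cycle (C, A, D, B) : pairs C∩A, A∩D, D∩B, B∩C
          refine berge_pick4 (by simp) (by simp) (by simp) (by simp)
            hAC.symm hCD hBC.symm hAD hAB hBD.symm ?_ ?_ ?_ ?_
          · rw [Finset.inter_comm]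
            exact Finset.card_pos.mpr hACne
          · omega
          · rw [Finset.inter_comm]; omega
          · omega
        · -- cycle (B, A, D, C) : pairs B∩A, A∩D, D∩C, C∩B
          refine berge_pick4 (by simp) (by simp) (by simp) (by simp)
            hAB.symm hBD hBC hAD hAC hCD.symm ?_ ?_ ?_ ?_
          · rw [Finset.inter_comm]
            exact Finset.card_pos.mpr hne
          · omega
          · rw [Finset.inter_comm]; omega
          · rw [Finset.inter_comm]; omega
      · -- B∩D small : apply core3 to (A, C, B, D)
        have h := core3 hnm hm A C B D hAC hAB hAD hBC.symm hCD hBD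
          cA cC cB cD s2 s1 (by omega) hAD4
        have e : ({A, C, B, D} : Set (Finset (Fin n))) = {A, B, C, D} := by
          ext s
          simp only [Set.mem_insert_iff, Set.mem_singleton_iff]
          tauto
        rwa [e] at h
    · exact core3 hnm hm A B C D hAB hAC hAD hBC hBD hCD cA cB cC cD s1 s2 (by omega) hAD4
  · -- all three pairs at A are small
    have s3 : (A ∩ D).card ≤ 3 := by omega
    by_cases hPsi : ∃ x : Fin n, A ∩ B ⊆ {x} ∧ A ∩ C ⊆ {x} ∧ A ∩ D ⊆ {x}
    · exact Or.inr ⟨A, B, C, D, rfl, hPsi⟩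
    · have h12 : ¬((A ∩ B) = ∅ ∧ (A ∩ C) = ∅) := fun ⟨e1, e2⟩ =>
        hBC (eq_of_two_disjoint hnm cA cB cC e1 e2)
      have h13 : ¬((A ∩ B) = ∅ ∧ (A ∩ D) = ∅) := fun ⟨e1, e2⟩ =>
        hBD (eq_of_two_disjoint hnm cA cB cD e1 e2)
      have h23 : ¬((A ∩ C) = ∅ ∧ (A ∩ D) = ∅) := fun ⟨e1, e2⟩ =>
        hCD (eq_of_two_disjoint hnm cA cC cD e1 e2)
      obtain ⟨a₁, a₂, hne, hcase⟩ := sep3 h12 h13 h23 hPsi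
      have RCD : 7 ≤ ((C ∩ D) \ A).card :=
        reservoir hnm hm cC cD cA (by rw [Finset.inter_comm]; exact s2)
          (by rw [Finset.inter_comm]; exact s3)
      have RBD : 7 ≤ ((B ∩ D) \ A).card :=
        reservoir hnm hm cB cD cA (by rw [Finset.inter_comm]; exact s1)
          (by rw [Finset.inter_comm]; exact s3)
      rcases hcase with ⟨h₁, h₂⟩ | ⟨h₁, h₂⟩ | ⟨h₁, h₂⟩
      · -- a₁ ∈ A∩B, a₂ ∈ A∩C : cycle (B, A, C, D)
        obtain ⟨x₃, hx₃⟩ := Finset.card_pos.mp (show 0 < ((C ∩ D) \ A).card by omega)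
        obtain ⟨x₄, hx₄, hx₄3⟩ := pick_ne (show 2 ≤ ((B ∩ D) \ A).card by omega) x₃
        obtain ⟨hx₃CD, hx₃A⟩ := Finset.mem_sdiff.mp hx₃
        obtain ⟨hx₄BD, hx₄A⟩ := Finset.mem_sdiff.mp hx₄
        obtain ⟨ha₁A, ha₁B⟩ := Finset.mem_inter.mp h₁
        obtain ⟨ha₂A, ha₂C⟩ := Finset.mem_inter.mp h₂
        obtain ⟨hx₃C, hx₃D⟩ := Finset.mem_inter.mp hx₃CD
        obtain ⟨hx₄B, hx₄D⟩ := Finset.mem_inter.mp hx₄BD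
        exact berge_goal (by simp) (by simp) (by simp) (by simp)
          hAB.symm hBC hBD hAC hAD hCD
          hne (fun h => hx₃A (by rw [← h]; exact ha₁A))
          (fun h => hx₄A (by rw [← h]; exact ha₁A))
          (fun h => hx₃A (by rw [← h]; exact ha₂A))
          (fun h => hx₄A (by rw [← h]; exact ha₂A)) hx₄3.symm
          (Finset.mem_inter.mpr ⟨ha₁B, ha₁A⟩) h₂ hx₃CD
          (Finset.mem_inter.mpr ⟨hx₄D, hx₄B⟩)
      · -- a₁ ∈ A∩B, a₂ ∈ A∩D : cycle (B, A, D, C)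
        obtain ⟨x₃, hx₃⟩ := Finset.card_pos.mp (show 0 < ((C ∩ D) \ A).card by omega)
        obtain ⟨x₄, hx₄, hx₄3⟩ := pick_ne (show 2 ≤ ((B ∩ C) \ A).card by omega) x₃
        obtain ⟨hx₃CD, hx₃A⟩ := Finset.mem_sdiff.mp hx₃
        obtain ⟨hx₄BC, hx₄A⟩ := Finset.mem_sdiff.mp hx₄
        obtain ⟨ha₁A, ha₁B⟩ := Finset.mem_inter.mp h₁
        obtain ⟨ha₂A, ha₂D⟩ := Finset.mem_inter.mp h₂
        obtain ⟨hx₃C, hx₃D⟩ := Finset.mem_inter.mp hx₃CD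
        obtain ⟨hx₄B, hx₄C⟩ := Finset.mem_inter.mp hx₄BC
        exact berge_goal (by simp) (by simp) (by simp) (by simp)
          hAB.symm hBD hBC hAD hAC hCD.symm
          hne (fun h => hx₃A (by rw [← h]; exact ha₁A))
          (fun h => hx₄A (by rw [← h]; exact ha₁A))
          (fun h => hx₃A (by rw [← h]; exact ha₂A))
          (fun h => hx₄A (by rw [← h]; exact ha₂A)) hx₄3.symm
          (Finset.mem_inter.mpr ⟨ha₁B, ha₁A⟩) h₂
          (Finset.mem_inter.mpr ⟨hx₃D, hx₃C⟩) (Finset.mem_inter.mpr ⟨hx₄C, hx₄B⟩)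
      · -- a₁ ∈ A∩C, a₂ ∈ A∩D : cycle (C, A, D, B)
        obtain ⟨x₃, hx₃⟩ := Finset.card_pos.mp (show 0 < ((B ∩ D) \ A).card by omega)
        obtain ⟨x₄, hx₄, hx₄3⟩ := pick_ne (show 2 ≤ ((B ∩ C) \ A).card by omega) x₃
        obtain ⟨hx₃BD, hx₃A⟩ := Finset.mem_sdiff.mp hx₃
        obtain ⟨hx₄BC, hx₄A⟩ := Finset.mem_sdiff.mp hx₄
        obtain ⟨ha₁A, ha₁C⟩ := Finset.mem_inter.mp h₁
        obtain ⟨ha₂A, ha₂D⟩ := Finset.mem_inter.mp h₂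
        obtain ⟨hx₃B, hx₃D⟩ := Finset.mem_inter.mp hx₃BD
        obtain ⟨hx₄B, hx₄C⟩ := Finset.mem_inter.mp hx₄BC
        exact berge_goal (by simp) (by simp) (by simp) (by simp)
          hAC.symm hCD hBC.symm hAD hAB hBD.symm
          hne (fun h => hx₃A (by rw [← h]; exact ha₁A))
          (fun h => hx₄A (by rw [← h]; exact ha₁A))
          (fun h => hx₃A (by rw [← h]; exact ha₂A))
          (fun h => hx₄A (by rw [← h]; exact ha₂A)) hx₄3.symm
          (Finset.mem_inter.mpr ⟨ha₁C, ha₁A⟩) h₂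
          (Finset.mem_inter.mpr ⟨hx₃D, hx₃B⟩) (Finset.mem_inter.mpr ⟨hx₄B, hx₄C⟩)


set_option maxHeartbeats 1000000 in
lemma coreAB {n m : ℕ} (hnm : n = m + m) (hm : 13 ≤ m) (A B C D : Finset (Fin n))
    (hAB : A ≠ B) (hAC : A ≠ C) (hAD : A ≠ D) (hBC : B ≠ C) (hBD : B ≠ D) (hCD : C ≠ D)
    (cA : m ≤ A.card) (cB : m ≤ B.card) (cC : m ≤ C.card) (cD : m ≤ D.card)
    (h : (A ∩ B).card ≤ 3) :
    GoalS ({A, B, C, D} : Set (Finset (Fin n))) := by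
  have conv : ∀ X Y Z W : Finset (Fin n),
      (({X, Y, Z, W} : Set (Finset (Fin n))) = {A, B, C, D}) →
      GoalS ({X, Y, Z, W} : Set (Finset (Fin n))) →
      GoalS ({A, B, C, D} : Set (Finset (Fin n))) := by
    intro X Y Z W e hh
    rwa [e] at hh
  by_cases P2 : 4 ≤ (A ∩ C).card ∧ 4 ≤ (C ∩ B).card ∧ 4 ≤ (B ∩ D).card ∧ 4 ≤ (D ∩ A).card
  · obtain ⟨q1, q2, q3, q4⟩ := P2
    exact berge_pick4 (by simp) (by simp) (by simp) (by simp)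
      hAC hAB hAD hBC.symm hCD hBD (by omega) (by omega) (by omega) (by omega)
  · have hd2 : (A ∩ C).card ≤ 3 ∨ (C ∩ B).card ≤ 3 ∨ (B ∩ D).card ≤ 3 ∨
        (D ∩ A).card ≤ 3 := by
      by_contra hc
      push_neg at hc
      exact P2 ⟨by omega, by omega, by omega, by omega⟩
    rcases hd2 with g | g | g | g
    · exact core2 hnm hm A B C D hAB hAC hAD hBC hBD hCD cA cB cC cD h g
    · refine conv B A C D (by ext s; simp only [Set.mem_insert_iff,
        Set.mem_singleton_iff]; tauto) ?_
      exact core2 hnm hm B A C D hAB.symm hBC hBD hAC hAD hCD cB cA cC cD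
        (by rw [Finset.inter_comm]; exact h) (by rw [Finset.inter_comm]; exact g)
    · refine conv B A D C (by ext s; simp only [Set.mem_insert_iff,
        Set.mem_singleton_iff]; tauto) ?_
      exact core2 hnm hm B A D C hAB.symm hBD hBC hAD hAC hCD.symm cB cA cD cC
        (by rw [Finset.inter_comm]; exact h) g
    · refine conv A B D C (by ext s; simp only [Set.mem_insert_iff,
        Set.mem_singleton_iff]; tauto) ?_
      exact core2 hnm hm A B D C hAB hAD hAC hBD hBC hCD.symm cA cB cD cC
        h (by rw [Finset.inter_comm]; exact g)

set_option maxHeartbeats 1000000 in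
lemma core {n m : ℕ} (hnm : n = m + m) (hm : 13 ≤ m) (A B C D : Finset (Fin n))
    (hAB : A ≠ B) (hAC : A ≠ C) (hAD : A ≠ D) (hBC : B ≠ C) (hBD : B ≠ D) (hCD : C ≠ D)
    (cA : m ≤ A.card) (cB : m ≤ B.card) (cC : m ≤ C.card) (cD : m ≤ D.card) :
    GoalS ({A, B, C, D} : Set (Finset (Fin n))) := by
  have conv : ∀ X Y Z W : Finset (Fin n),
      (({X, Y, Z, W} : Set (Finset (Fin n))) = {A, B, C, D}) →
      GoalS ({X, Y, Z, W} : Set (Finset (Fin n))) →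
      GoalS ({A, B, C, D} : Set (Finset (Fin n))) := by
    intro X Y Z W e hh
    rwa [e] at hh
  by_cases P1 : 4 ≤ (A ∩ B).card ∧ 4 ≤ (B ∩ C).card ∧ 4 ≤ (C ∩ D).card ∧ 4 ≤ (D ∩ A).card
  · obtain ⟨q1, q2, q3, q4⟩ := P1
    exact berge_pick4 (by simp) (by simp) (by simp) (by simp)
      hAB hAC hAD hBC hBD hCD (by omega) (by omega) (by omega) (by omega)
  · have hd4 : (A ∩ B).card ≤ 3 ∨ (B ∩ C).card ≤ 3 ∨ (C ∩ D).card ≤ 3 ∨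
        (D ∩ A).card ≤ 3 := by
      by_contra hc
      push_neg at hc
      exact P1 ⟨by omega, by omega, by omega, by omega⟩
    rcases hd4 with h | h | h | h
    · exact coreAB hnm hm A B C D hAB hAC hAD hBC hBD hCD cA cB cC cD h
    · refine conv B C D A (by ext s; simp only [Set.mem_insert_iff,
        Set.mem_singleton_iff]; tauto) ?_
      exact coreAB hnm hm B C D A hBC hBD hAB.symm hCD hAC.symm hAD.symm cB cC cD cA h
    · refine conv C D A B (by ext s; simp only [Set.mem_insert_iff,
        Set.mem_singleton_iff]; tauto) ?_
      exact coreAB hnm hm C D A B hCD hAC.symm hBC.symm hAD.symm hBD.symm hAB cC cD cA cB h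
    · refine conv D A B C (by ext s; simp only [Set.mem_insert_iff,
        Set.mem_singleton_iff]; tauto) ?_
      exact coreAB hnm hm D A B C hAD.symm hBD.symm hCD.symm hAB hAC hBC cD cA cB cC h

end C4PsiAux

/-- For even `n ≥ 26`, any four pairwise distinct subsets of `[n]`, each of size at
least `n / 2`, either form a Berge four-cycle in some cyclic order, or form a
Ψ-configuration: for some labeling of the four sets as `A', B', C', D'` there exists
`x` with `A' ∩ B' ⊆ {x}`, `A' ∩ C' ⊆ {x}` and `A' ∩ D' ⊆ {x}`. -/
theorem C4_or_psi (n : ℕ) (hn : 26 ≤ n) (hev : Even n)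
    (A B C D : Finset (Fin n))
    (hd : [A, B, C, D].Pairwise (· ≠ ·))
    (hA : n / 2 ≤ A.card) (hB : n / 2 ≤ B.card)
    (hC : n / 2 ≤ C.card) (hD : n / 2 ≤ D.card) :
    (∃ A' ∈ ({A, B, C, D} : Set (Finset (Fin n))),
      ∃ B' ∈ ({A, B, C, D} : Set (Finset (Fin n))),
        ∃ C' ∈ ({A, B, C, D} : Set (Finset (Fin n))),
          ∃ D' ∈ ({A, B, C, D} : Set (Finset (Fin n))),
            BergeC4 A' B' C' D') ∨
    (∃ A' B' C' D' : Finset (Fin n),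
      ({A', B', C', D'} : Set (Finset (Fin n))) = ({A, B, C, D} : Set (Finset (Fin n))) ∧
      ∃ x : Fin n, A' ∩ B' ⊆ {x} ∧ A' ∩ C' ⊆ {x} ∧ A' ∩ D' ⊆ {x}) := by
  obtain ⟨m, hm2⟩ := hev
  have hm : 13 ≤ m := by omega
  have hdiv : n / 2 = m := by omega
  rw [hdiv] at hA hB hC hD
  simp only [List.pairwise_cons, List.mem_cons, List.mem_singleton, forall_eq_or_imp,
    forall_eq, List.Pairwise.nil, List.not_mem_nil] at hd
  obtain ⟨⟨hAB, hAC, hAD, -⟩, ⟨hBC, hBD, -⟩, ⟨hCD, -⟩, -⟩ := hd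
  exact C4PsiAux.core hm2 hm A B C D hAB hAC hAD hBC hBD hCD hA hB hC hD
end

section
/- Let n ≥ 26 be even. Every partition of 𝒫(n) into t parts, each of which is C₄-free, satisfies 18·t ≥ 3·2^n + C(n, n/2); equivalently, f(n, C₄) ≥ (1/6)·(2^n + (1/3)·C(n, n/2)). -/
/-- A family of subsets of `[n]` is `C₄`-free if no four of its members, in any cyclic
order, form a Berge four-cycle. -/
def C4Free {n : ℕ} (F : Set (Finset (Fin n))) : Prop :=
  ∀ A ∈ F, ∀ B ∈ F, ∀ C ∈ F, ∀ D ∈ F, ¬ BergeC4 A B C D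

namespace BC4

variable {n : ℕ}

lemma rot {A B C D : Finset (Fin n)} (hb : BergeC4 A B C D) : BergeC4 B C D A := by
  obtain ⟨dAB, dAC, dAD, dBC, dBD, dCD, x1, x2, x3, x4, d12, d13, d14, d23, d24, d34,
    m1, m2, m3, m4⟩ := hb
  exact ⟨dBC, dBD, dAB.symm, dCD, dAC.symm, dAD.symm, x2, x3, x4, x1,
    d23, d24, d12.symm, d34, d13.symm, d14.symm, m2, m3, m4, m1⟩

lemma pick {E s : Finset (Fin n)} (hc : s.card < E.card) : ∃ a ∈ E, a ∉ s := by
  have h1 := Finset.le_card_sdiff s E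
  have h2 : 0 < (E \ s).card := by omega
  obtain ⟨a, ha⟩ := Finset.card_pos.mp h2
  rw [Finset.mem_sdiff] at ha
  exact ⟨a, ha.1, ha.2⟩

lemma card2 (u v : Fin n) : ({u, v} : Finset (Fin n)).card ≤ 2 := by
  apply le_trans (Finset.card_insert_le _ _); simp

lemma card3 (u v w : Fin n) : ({u, v, w} : Finset (Fin n)).card ≤ 3 := by
  apply le_trans (Finset.card_insert_le _ _)
  have := card2 v w; omega

lemma fill2 {E3 E4 : Finset (Fin n)} (u v : Fin n) (h3 : 3 ≤ E3.card) (h4 : 4 ≤ E4.card) :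
    ∃ x3 ∈ E3, ∃ x4 ∈ E4, x3 ≠ u ∧ x3 ≠ v ∧ x4 ≠ u ∧ x4 ≠ v ∧ x4 ≠ x3 := by
  obtain ⟨x3, hx3, hx3'⟩ := pick (E := E3) (s := {u, v}) (lt_of_le_of_lt (card2 u v) (by omega))
  obtain ⟨x4, hx4, hx4'⟩ := pick (E := E4) (s := {u, v, x3})
    (lt_of_le_of_lt (card3 u v x3) (by omega))
  simp only [Finset.mem_insert, Finset.mem_singleton, not_or] at hx3' hx4'
  exact ⟨x3, hx3, x4, hx4, hx3'.1, hx3'.2, hx4'.1, hx4'.2.1, hx4'.2.2⟩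

lemma two_reps {E F : Finset (Fin n)} (hE : E.Nonempty) (hF : F.Nonempty)
    (hno : ¬ ∃ x, E = {x} ∧ F = {x}) : ∃ u ∈ E, ∃ v ∈ F, u ≠ v := by
  obtain ⟨u, hu⟩ := hE; obtain ⟨v, hv⟩ := hF
  by_cases huv : u = v
  · subst huv
    by_cases hE1 : E = {u}
    · have hF1 : F ≠ {u} := fun hF1 => hno ⟨u, hE1, hF1⟩
      have hw : ∃ w ∈ F, w ≠ u := by
        by_contra hcon; push_neg at hcon
        exact hF1 (Finset.eq_singleton_iff_unique_mem.mpr ⟨hv, hcon⟩)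
      obtain ⟨w, hw, hwu⟩ := hw
      exact ⟨u, hu, w, hw, fun e => hwu e.symm⟩
    · have hw : ∃ w ∈ E, w ≠ u := by
        by_contra hcon; push_neg at hcon
        exact hE1 (Finset.eq_singleton_iff_unique_mem.mpr ⟨hu, hcon⟩)
      obtain ⟨w, hw, hwu⟩ := hw
      exact ⟨w, hw, u, hv, hwu⟩
  · exact ⟨u, hu, v, hv, huv⟩

lemma force_adj {A B C D : Finset (Fin n)}
    (dAB : A ≠ B) (dAC : A ≠ C) (dAD : A ≠ D) (dBC : B ≠ C) (dBD : B ≠ D) (dCD : C ≠ D)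
    (h1 : (A ∩ B).Nonempty) (h2 : (B ∩ C).Nonempty)
    (h3 : 3 ≤ (C ∩ D).card) (h4 : 4 ≤ (D ∩ A).card)
    (hno : ¬ ∃ x, A ∩ B = {x} ∧ B ∩ C = {x}) : BergeC4 A B C D := by
  obtain ⟨u, hu, v, hv, huv⟩ := two_reps h1 h2 hno
  obtain ⟨x3, hx3, x4, hx4, d3u, d3v, d4u, d4v, d43⟩ := fill2 u v h3 h4
  exact ⟨dAB, dAC, dAD, dBC, dBD, dCD, u, v, x3, x4, huv, (fun e => d3u e.symm),
    (fun e => d4u e.symm), (fun e => d3v e.symm), (fun e => d4v e.symm),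
    (fun e => d43 e.symm), hu, hv, hx3, hx4⟩

lemma force_opp {A B C D : Finset (Fin n)}
    (dAB : A ≠ B) (dAC : A ≠ C) (dAD : A ≠ D) (dBC : B ≠ C) (dBD : B ≠ D) (dCD : C ≠ D)
    (h1 : (A ∩ B).Nonempty) (h3ne : (C ∩ D).Nonempty)
    (h2 : 3 ≤ (B ∩ C).card) (h4 : 4 ≤ (D ∩ A).card)
    (hno : ¬ ∃ x, A ∩ B = {x} ∧ C ∩ D = {x}) : BergeC4 A B C D := by
  obtain ⟨u, hu, v, hv, huv⟩ := two_reps h1 h3ne hno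
  obtain ⟨x2, hx2, x4, hx4, d2u, d2v, d4u, d4v, d42⟩ := fill2 u v h2 h4
  exact ⟨dAB, dAC, dAD, dBC, dBD, dCD, u, x2, v, x4, (fun e => d2u e.symm), huv,
    (fun e => d4u e.symm), d2v, (fun e => d42 e.symm), (fun e => d4v e.symm),
    hu, hx2, hv, hx4⟩

lemma berge_of_big {A B C D : Finset (Fin n)}
    (dAB : A ≠ B) (dAC : A ≠ C) (dAD : A ≠ D) (dBC : B ≠ C) (dBD : B ≠ D) (dCD : C ≠ D)
    (e1 : 4 ≤ (A ∩ B).card) (e2 : 4 ≤ (B ∩ C).card) (e3 : 4 ≤ (C ∩ D).card)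
    (e4 : 4 ≤ (D ∩ A).card) : BergeC4 A B C D := by
  obtain ⟨u, hu⟩ := Finset.card_pos.mp (show 0 < (A ∩ B).card by omega)
  have hcu : ({u} : Finset (Fin n)).card < (B ∩ C).card := by
    rw [Finset.card_singleton]; omega
  obtain ⟨v, hv, hv'⟩ := pick hcu
  simp only [Finset.mem_singleton] at hv'
  obtain ⟨x3, hx3, x4, hx4, d3u, d3v, d4u, d4v, d43⟩ := fill2 (E3 := C ∩ D) u v (by omega) e4
  exact ⟨dAB, dAC, dAD, dBC, dBD, dCD, u, v, x3, x4, (fun e => hv' e.symm),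
    (fun e => d3u e.symm), (fun e => d4u e.symm), (fun e => d3v e.symm),
    (fun e => d4v e.symm), (fun e => d43 e.symm), hu, hv, hx3, hx4⟩

lemma inter_lb (X Y : Finset (Fin n)) : X.card + Y.card ≤ n + (X ∩ Y).card := by
  have h1 := Finset.card_union_add_card_inter X Y
  have h2 : (X ∪ Y).card ≤ n := le_trans (Finset.card_le_univ _) (by simp)
  omega

lemma union_lb {X Y : Finset (Fin n)} {a : ℕ} (hx : a ≤ X.card) (hy : a ≤ Y.card)
    (hxy : X ≠ Y) : a + 1 ≤ (X ∪ Y).card := by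
  by_contra hc
  have h1 : (X ∪ Y).card ≤ a := by omega
  have e1 : X = X ∪ Y := Finset.eq_of_subset_of_card_le Finset.subset_union_left
    (le_trans h1 hx)
  have e2 : Y = X ∪ Y := Finset.eq_of_subset_of_card_le Finset.subset_union_right
    (le_trans h1 hy)
  exact hxy (e1.trans e2.symm)

lemma subset_pair_inter {X Y W : Finset (Fin n)} (hX : X ⊆ W) (hY : Y ⊆ W) :
    X.card + Y.card ≤ W.card + (X ∩ Y).card := by
  have h1 := Finset.card_union_add_card_inter X Y
  have h2 : (X ∪ Y).card ≤ W.card := Finset.card_le_card (Finset.union_subset hX hY)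
  omega

lemma compl_card (X : Finset (Fin n)) : Xᶜ.card = n - X.card := by
  rw [Finset.card_compl]; simp

lemma ne_compl {X : Finset (Fin n)} (hX : X.Nonempty) : X ≠ Xᶜ := by
  intro e
  obtain ⟨a, ha⟩ := hX
  have h2 := ha
  rw [e] at h2
  exact (Finset.mem_compl.mp h2) ha

lemma inter_ne_comm {X Y : Finset (Fin n)} (h : (X ∩ Y).Nonempty) : (Y ∩ X).Nonempty := by
  rwa [Finset.inter_comm]

lemma sing_mem {X Y : Finset (Fin n)} {x : Fin n} (e : X ∩ Y = {x}) : x ∈ X ∧ x ∈ Y := by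
  have : x ∈ X ∩ Y := by rw [e]; exact Finset.mem_singleton_self x
  exact Finset.mem_inter.mp this

lemma sub_compl {Z Y : Finset (Fin n)} {x : Fin n} (hzy : Z ∩ Y = {x}) :
    Y ⊆ Zᶜ ∪ {x} := by
  intro a ha
  by_cases haz : a ∈ Z
  · have h2 : a ∈ Z ∩ Y := Finset.mem_inter.mpr ⟨haz, ha⟩
    rw [hzy] at h2
    exact Finset.mem_union_right _ h2
  · exact Finset.mem_union_left _ (Finset.mem_compl.mpr haz)

lemma sub_union {C A : Finset (Fin n)} {y : Fin n} (e : A \ C = {y}) : A ⊆ C ∪ {y} := by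
  intro a ha
  by_cases h : a ∈ C
  · exact Finset.mem_union_left _ h
  · have h2 : a ∈ A \ C := Finset.mem_sdiff.mpr ⟨ha, h⟩
    rw [e] at h2
    exact Finset.mem_union_right _ h2

lemma tt {h : ℕ} (hn : n = 2*h) {P Q R : Finset (Fin n)}
    (hP : h ≤ P.card) (hQ : h ≤ Q.card) (hR : h ≤ R.card)
    (t1 : (P ∩ Q).card ≤ 3) (t2 : (P ∩ R).card ≤ 3) : h - 6 ≤ (Q ∩ R).card := by
  have sQ : Q \ P ⊆ Pᶜ := fun a ha => Finset.mem_compl.mpr (Finset.mem_sdiff.mp ha).2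
  have sR : R \ P ⊆ Pᶜ := fun a ha => Finset.mem_compl.mpr (Finset.mem_sdiff.mp ha).2
  have key := subset_pair_inter sQ sR
  have hPc : (Pᶜ).card = n - P.card := compl_card P
  have cQ := Finset.card_sdiff_add_card_inter Q P
  have cR := Finset.card_sdiff_add_card_inter R P
  have hsub : (Q \ P) ∩ (R \ P) ⊆ Q ∩ R := by
    intro a ha
    rw [Finset.mem_inter, Finset.mem_sdiff, Finset.mem_sdiff] at ha
    exact Finset.mem_inter.mpr ⟨ha.1.1, ha.2.1⟩
  have hmon := Finset.card_le_card hsub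
  have c1 : (Q ∩ P).card ≤ 3 := by rw [Finset.inter_comm]; exact t1
  have c2 : (R ∩ P).card ≤ 3 := by rw [Finset.inter_comm]; exact t2
  have hPn : P.card ≤ n := Finset.card_le_univ P |>.trans (by simp)
  omega

lemma PB {h : ℕ} (hn : n = 2*h) {Z P Q : Finset (Fin n)} {x : Fin n}
    (hZ : h ≤ Z.card) (hP : h ≤ P.card) (hQ : h ≤ Q.card)
    (e1 : Z ∩ P = {x}) (e2 : Z ∩ Q = {x}) : h - 1 ≤ (P ∩ Q).card := by
  have s1 := sub_compl e1
  have s2 := sub_compl e2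
  have hW : (Zᶜ ∪ {x}).card ≤ (n - Z.card) + 1 :=
    le_trans (Finset.card_union_le _ _) (by rw [compl_card]; simp)
  have key := subset_pair_inter s1 s2
  have hZn : Z.card ≤ n := Finset.card_le_univ Z |>.trans (by simp)
  omega

lemma not_sing {h : ℕ} {S : Finset (Fin n)} {y : Fin n} (hm : h - 1 ≤ S.card)
    (hh : 13 ≤ h) (e : S = {y}) : False := by
  rw [e, Finset.card_singleton] at hm; omega

lemma center_fin {h : ℕ} (hn : n = 2*h) {Z A B : Finset (Fin n)} {x : Fin n}
    (hZ : h ≤ Z.card) (hA : h + 1 ≤ A.card) (hB : h + 1 ≤ B.card) (dAB : A ≠ B)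
    (e1 : Z ∩ A = {x}) (e2 : Z ∩ B = {x}) : False := by
  have s1 := sub_compl e1
  have s2 := sub_compl e2
  have hZn : Z.card ≤ n := Finset.card_le_univ Z |>.trans (by simp)
  have hW : (Zᶜ ∪ {x}).card ≤ h + 1 :=
    le_trans (Finset.card_union_le _ _) (by rw [compl_card]; simp; omega)
  have eA : A = Zᶜ ∪ {x} := Finset.eq_of_subset_of_card_le s1 (le_trans hW hA)
  have eB : B = Zᶜ ∪ {x} := Finset.eq_of_subset_of_card_le s2 (le_trans hW hB)
  exact dAB (eA.trans eB.symm)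

lemma compl_of_disj {h : ℕ} (hn : n = 2*h) {X Y : Finset (Fin n)}
    (hX : h ≤ X.card) (hY : h ≤ Y.card) (hd : X ∩ Y = ∅) : X.card = h ∧ Y = Xᶜ := by
  have hle := inter_lb X Y
  rw [hd] at hle
  simp only [Finset.card_empty, Nat.add_zero] at hle
  have hsub : Y ⊆ Xᶜ := by
    intro a ha
    refine Finset.mem_compl.mpr (fun haX => ?_)
    have h2 : a ∈ X ∩ Y := Finset.mem_inter.mpr ⟨haX, ha⟩
    rw [hd] at h2
    exact absurd h2 (Finset.notMem_empty a)
  have hcc : Xᶜ.card = n - X.card := compl_card X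
  have hYX : Y = Xᶜ := Finset.eq_of_subset_of_card_le hsub (by omega)
  exact ⟨by omega, hYX⟩

end BC4

namespace BC4

lemma CP {h : ℕ} (hn : n = 2*h) (hh : 13 ≤ h) {A X Y : Finset (Fin n)}
    (hA : A.card = h) (hX : h ≤ X.card) (hY : h ≤ Y.card)
    (dXA : X ≠ A) (dXAc : X ≠ Aᶜ) (dYA : Y ≠ A) (dYAc : Y ≠ Aᶜ) (dXY : X ≠ Y)
    (hnb : ¬ BergeC4 A X Aᶜ Y) :
    (∃ x, A ∩ X = {x} ∧ A ∩ Y = {x}) ∨ (∃ y, X \ A = {y} ∧ Y \ A = {y}) := by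
  have hcc : (Aᶜ : Finset (Fin n)).card = h := by rw [compl_card]; omega
  have hAne : A.Nonempty := Finset.card_pos.mp (by omega)
  have dAAc : A ≠ Aᶜ := ne_compl hAne
  -- nonemptiness of the four corner sets
  have neAX : (A ∩ X).Nonempty := by
    rw [Finset.nonempty_iff_ne_empty]
    intro he
    have hsub : X ⊆ Aᶜ := by
      intro a ha
      refine Finset.mem_compl.mpr (fun haA => ?_)
      have h2 : a ∈ A ∩ X := Finset.mem_inter.mpr ⟨haA, ha⟩
      rw [he] at h2
      exact absurd h2 (Finset.notMem_empty a)
    exact dXAc (Finset.eq_of_subset_of_card_le hsub (by omega))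
  have neAY : (A ∩ Y).Nonempty := by
    rw [Finset.nonempty_iff_ne_empty]
    intro he
    have hsub : Y ⊆ Aᶜ := by
      intro a ha
      refine Finset.mem_compl.mpr (fun haA => ?_)
      have h2 : a ∈ A ∩ Y := Finset.mem_inter.mpr ⟨haA, ha⟩
      rw [he] at h2
      exact absurd h2 (Finset.notMem_empty a)
    exact dYAc (Finset.eq_of_subset_of_card_le hsub (by omega))
  have neXA : (X \ A).Nonempty := by
    rw [Finset.nonempty_iff_ne_empty]
    intro he
    rw [Finset.sdiff_eq_empty_iff_subset] at he
    exact dXA (Finset.eq_of_subset_of_card_le he (by omega))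
  have neYA : (Y \ A).Nonempty := by
    rw [Finset.nonempty_iff_ne_empty]
    intro he
    rw [Finset.sdiff_eq_empty_iff_subset] at he
    exact dYA (Finset.eq_of_subset_of_card_le he (by omega))
  have cX := Finset.card_sdiff_add_card_inter X A
  have cY := Finset.card_sdiff_add_card_inter Y A
  have commX : (X ∩ A).card = (A ∩ X).card := by rw [Finset.inter_comm]
  have commY : (Y ∩ A).card = (A ∩ Y).card := by rw [Finset.inter_comm]
  have eXc : X ∩ Aᶜ = X \ A := by ext a; simp
  have eYc : Aᶜ ∩ Y = Y \ A := by ext a; simp [and_comm]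
  by_contra hcon
  push_neg at hcon
  obtain ⟨hc1, hc2⟩ := hcon
  by_cases p : 4 ≤ (A ∩ X).card
  · by_cases q : 4 ≤ (A ∩ Y).card
    · -- bigs E1=A∩X, E4=Y∩A; use tuple (X, Aᶜ, Y, A) with force_adj
      have hb : BergeC4 X Aᶜ Y A := by
        apply force_adj dXAc dXY dXA dYAc.symm dAAc.symm dYA
        · rw [eXc]; exact neXA
        · rw [eYc]; exact neYA
        · rw [Finset.inter_comm]; omega
        · rw [Finset.inter_comm]; omega
        · rintro ⟨x, ex, ey⟩
          refine hc2 x ?_ ?_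
          · rw [← eXc]; exact ex
          · rw [← eYc]; exact ey
      exact hnb (rot (rot (rot hb)))
    · -- bigs E1=A∩X, E3=Y\A
      have hb : BergeC4 X Aᶜ Y A := by
        apply force_opp dXAc dXY dXA dYAc.symm dAAc.symm dYA
        · rw [eXc]; exact neXA
        · rw [Finset.inter_comm]; exact neAY
        · rw [eYc]; omega
        · rw [Finset.inter_comm]; omega
        · rintro ⟨x, ex, ey⟩
          have hx1 : x ∈ Aᶜ := (Finset.mem_inter.mp (by rw [ex]; exact Finset.mem_singleton_self x)).2
          have hx2 : x ∈ A := (Finset.mem_inter.mp (by rw [ey]; exact Finset.mem_singleton_self x)).2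
          exact (Finset.mem_compl.mp hx1) hx2
      exact hnb (rot (rot (rot hb)))
  · by_cases q : 4 ≤ (A ∩ Y).card
    · -- bigs E2 = X\A, E4 = Y∩A; force_opp on (A, X, Aᶜ, Y) directly
      have hb : BergeC4 A X Aᶜ Y := by
        apply force_opp dXA.symm dAAc dYA.symm dXAc dXY dYAc.symm
        · exact neAX
        · rw [eYc]; exact neYA
        · rw [eXc]; omega
        · rw [Finset.inter_comm]; omega
        · rintro ⟨x, ex, ey⟩
          have hx1 : x ∈ A := (Finset.mem_inter.mp (by rw [ex]; exact Finset.mem_singleton_self x)).1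
          have hx2 : x ∈ Aᶜ := (Finset.mem_inter.mp (by rw [ey]; exact Finset.mem_singleton_self x)).1
          exact (Finset.mem_compl.mp hx2) hx1
      exact hnb hb
    · -- bigs E2 = X\A, E3 = Y\A; smalls A∩X, Y∩A: force_adj on (Y, A, X, Aᶜ)
      have hb : BergeC4 Y A X Aᶜ := by
        apply force_adj dYA dXY.symm dYAc dXA.symm dAAc dXAc
        · rw [Finset.inter_comm]; exact neAY
        · exact neAX
        · rw [eXc]; omega
        · rw [eYc]; omega
        · rintro ⟨x, ex, ey⟩
          refine hc1 x ey ?_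
          rw [Finset.inter_comm] at ex; exact ex
      exact hnb (rot hb)

end BC4

namespace BC4

lemma PATH {h : ℕ} (hn : n = 2*h) (hh : 13 ≤ h) {P Q R S : Finset (Fin n)}
    (dPQ : P ≠ Q) (dPR : P ≠ R) (dPS : P ≠ S) (dQR : Q ≠ R) (dQS : Q ≠ S) (dRS : R ≠ S)
    (hP : h ≤ P.card) (hQ : h ≤ Q.card) (hR : h ≤ R.card) (hS : h ≤ S.card)
    (nPQ : (P ∩ Q).Nonempty) (nPR : (P ∩ R).Nonempty) (nPS : (P ∩ S).Nonempty)
    (nQR : (Q ∩ R).Nonempty) (nQS : (Q ∩ S).Nonempty) (nRS : (R ∩ S).Nonempty)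
    (tPQ : (P ∩ Q).card ≤ 3) (tPR : (P ∩ R).card ≤ 3) (tRS : (R ∩ S).card ≤ 3)
    {m : Finset (Fin n) → Prop} (mP : m P) (mQ : m Q) (mR : m R) (mS : m S)
    (hnb : ∀ a b c d : Finset (Fin n), m a → m b → m c → m d → ¬ BergeC4 a b c d) :
    False := by
  have bQR : h - 6 ≤ (Q ∩ R).card := tt hn hP hQ hR tPQ tPR
  have bPS : h - 6 ≤ (P ∩ S).card := tt hn hR hP hS (by rw [Finset.inter_comm]; exact tPR) tRS
  have fA : ∃ x, R ∩ P = {x} ∧ S ∩ Q = {x} := by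
    by_contra hno
    refine hnb R P S Q mR mP mS mQ ?_
    apply force_opp dPR.symm dRS dQR.symm dPS dPQ dQS.symm
    · exact inter_ne_comm nPR
    · exact inter_ne_comm nQS
    · omega
    · omega
    · exact hno
  have fB : ∃ y, Q ∩ P = {y} ∧ S ∩ R = {y} := by
    by_contra hno
    refine hnb Q P S R mQ mP mS mR ?_
    apply force_opp dPQ.symm dQS dQR dPS dPR dRS.symm
    · exact inter_ne_comm nPQ
    · exact inter_ne_comm nRS
    · omega
    · rw [Finset.inter_comm]; omega
    · exact hno
  obtain ⟨x, eRP, eSQ⟩ := fA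
  obtain ⟨y, eQP, eSR⟩ := fB
  have hxP : x ∈ P := (sing_mem eRP).2
  have hxQ : x ∈ Q := (sing_mem eSQ).2
  have hxR : x ∈ R := (sing_mem eRP).1
  have hxS : x ∈ S := (sing_mem eSQ).1
  have hxy : x = y := by
    have h2 : x ∈ Q ∩ P := Finset.mem_inter.mpr ⟨hxQ, hxP⟩
    rw [eQP] at h2
    exact Finset.mem_singleton.mp h2
  subst hxy
  have hsubP : P.erase x ⊆ (Q ∪ R)ᶜ := by
    intro a ha
    rw [Finset.mem_erase] at ha
    rw [Finset.mem_compl, Finset.mem_union]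
    rintro (haQ | haR)
    · have h2 : a ∈ Q ∩ P := Finset.mem_inter.mpr ⟨haQ, ha.2⟩
      rw [eQP] at h2
      exact ha.1 (Finset.mem_singleton.mp h2)
    · have h2 : a ∈ R ∩ P := Finset.mem_inter.mpr ⟨haR, ha.2⟩
      rw [eRP] at h2
      exact ha.1 (Finset.mem_singleton.mp h2)
  have hsubS : S.erase x ⊆ (Q ∪ R)ᶜ := by
    intro a ha
    rw [Finset.mem_erase] at ha
    rw [Finset.mem_compl, Finset.mem_union]
    rintro (haQ | haR)
    · have h2 : a ∈ S ∩ Q := Finset.mem_inter.mpr ⟨ha.2, haQ⟩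
      rw [eSQ] at h2
      exact ha.1 (Finset.mem_singleton.mp h2)
    · have h2 : a ∈ S ∩ R := Finset.mem_inter.mpr ⟨ha.2, haR⟩
      rw [eSR] at h2
      exact ha.1 (Finset.mem_singleton.mp h2)
  have hcard : ((Q ∪ R)ᶜ).card ≤ h - 1 := by
    have h1 : h + 1 ≤ (Q ∪ R).card := union_lb hQ hR dQR
    have h2 : (Q ∪ R).card ≤ n := Finset.card_le_univ _ |>.trans (by simp)
    rw [compl_card]; omega
  have hPe : h - 1 ≤ (P.erase x).card := by rw [Finset.card_erase_of_mem hxP]; omega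
  have hSe : h - 1 ≤ (S.erase x).card := by rw [Finset.card_erase_of_mem hxS]; omega
  have e1 : P.erase x = (Q ∪ R)ᶜ := Finset.eq_of_subset_of_card_le hsubP (by omega)
  have e2 : S.erase x = (Q ∪ R)ᶜ := Finset.eq_of_subset_of_card_le hsubS (by omega)
  have ePS : P = S := by
    rw [← Finset.insert_erase hxP, ← Finset.insert_erase hxS, e1, e2]
  exact dPS ePS

lemma STAR {h : ℕ} (hn : n = 2*h) (hh : 13 ≤ h) {P Q R S : Finset (Fin n)}
    (dPQ : P ≠ Q) (dPR : P ≠ R) (dPS : P ≠ S) (dQR : Q ≠ R) (dQS : Q ≠ S) (dRS : R ≠ S)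
    (hP : h ≤ P.card) (hQ : h ≤ Q.card) (hR : h ≤ R.card) (hS : h ≤ S.card)
    (nPQ : (P ∩ Q).Nonempty) (nPR : (P ∩ R).Nonempty) (nPS : (P ∩ S).Nonempty)
    (nQR : (Q ∩ R).Nonempty) (nQS : (Q ∩ S).Nonempty) (nRS : (R ∩ S).Nonempty)
    (tPQ : (P ∩ Q).card ≤ 3) (tPR : (P ∩ R).card ≤ 3)
    {m : Finset (Fin n) → Prop} (mP : m P) (mQ : m Q) (mR : m R) (mS : m S)
    (hnb : ∀ a b c d : Finset (Fin n), m a → m b → m c → m d → ¬ BergeC4 a b c d) :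
    ∃ x, P ∩ Q = {x} ∧ P ∩ R = {x} ∧ P ∩ S = {x} := by
  have bQR : h - 6 ≤ (Q ∩ R).card := tt hn hP hQ hR tPQ tPR
  by_cases c1 : (R ∩ S).card ≤ 3
  · exact (PATH hn hh dPQ dPR dPS dQR dQS dRS hP hQ hR hS nPQ nPR nPS nQR nQS nRS
      tPQ tPR c1 mP mQ mR mS hnb).elim
  by_cases c2 : (Q ∩ S).card ≤ 3
  · exact (PATH hn hh dPR dPQ dPS dQR.symm dRS dQS hP hR hQ hS nPR nPQ nPS
      (inter_ne_comm nQR) nRS nQS tPR tPQ c2 mP mR mQ mS hnb).elim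
  have f1 : ∃ x, P ∩ Q = {x} ∧ P ∩ R = {x} := by
    by_contra hno
    refine hnb Q P R S mQ mP mR mS ?_
    apply force_adj dPQ.symm dQR dQS dPR dPS dRS
    · exact inter_ne_comm nPQ
    · exact nPR
    · omega
    · rw [Finset.inter_comm]; omega
    · rintro ⟨x, ex, ey⟩
      exact hno ⟨x, by rw [Finset.inter_comm]; exact ex, ey⟩
  have f2 : ∃ y, S ∩ P = {y} ∧ P ∩ Q = {y} := by
    by_contra hno
    refine hnb S P Q R mS mP mQ mR ?_
    apply force_adj dPS.symm dQS.symm dRS.symm dPQ dPR dQR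
    · exact inter_ne_comm nPS
    · exact nPQ
    · omega
    · omega
    · exact hno
  obtain ⟨x, e1, e2⟩ := f1
  obtain ⟨y, g1, g2⟩ := f2
  have hxy : x = y := Finset.singleton_injective (e1.symm.trans g2)
  subst hxy
  refine ⟨x, e1, e2, ?_⟩
  rw [Finset.inter_comm]; exact g1

end BC4

namespace BC4

lemma CLASSIFY {h : ℕ} (hn : n = 2*h) (hh : 13 ≤ h) {A B C D : Finset (Fin n)}
    (dAB : A ≠ B) (dAC : A ≠ C) (dAD : A ≠ D) (dBC : B ≠ C) (dBD : B ≠ D) (dCD : C ≠ D)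
    (hA : h ≤ A.card) (hB : h ≤ B.card) (hC : h ≤ C.card) (hD : h ≤ D.card)
    (nAB : (A ∩ B).Nonempty) (nAC : (A ∩ C).Nonempty) (nAD : (A ∩ D).Nonempty)
    (nBC : (B ∩ C).Nonempty) (nBD : (B ∩ D).Nonempty) (nCD : (C ∩ D).Nonempty)
    {m : Finset (Fin n) → Prop} (mA : m A) (mB : m B) (mC : m C) (mD : m D)
    (hnb : ∀ a b c d : Finset (Fin n), m a → m b → m c → m d → ¬ BergeC4 a b c d) :
    (∃ x, A ∩ B = {x} ∧ A ∩ C = {x} ∧ A ∩ D = {x}) ∨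
    (∃ x, B ∩ A = {x} ∧ B ∩ C = {x} ∧ B ∩ D = {x}) ∨
    (∃ x, C ∩ A = {x} ∧ C ∩ B = {x} ∧ C ∩ D = {x}) ∨
    (∃ x, D ∩ A = {x} ∧ D ∩ B = {x} ∧ D ∩ C = {x}) := by
  by_cases t1 : (A ∩ B).card ≤ 3
  · by_cases t2 : (A ∩ C).card ≤ 3
    · obtain ⟨x, e1, e2, e3⟩ := STAR hn hh dAB dAC dAD dBC dBD dCD hA hB hC hD
        nAB nAC nAD nBC nBD nCD t1 t2 mA mB mC mD hnb
      exact Or.inl ⟨x, e1, e2, e3⟩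
    by_cases t3 : (A ∩ D).card ≤ 3
    · obtain ⟨x, e1, e2, e3⟩ := STAR hn hh dAB dAD dAC dBD dBC dCD.symm hA hB hD hC
        nAB nAD nAC nBD nBC (inter_ne_comm nCD) t1 t3 mA mB mD mC hnb
      exact Or.inl ⟨x, e1, e3, e2⟩
    by_cases t4 : (B ∩ C).card ≤ 3
    · obtain ⟨x, e1, e2, e3⟩ := STAR hn hh dAB.symm dBC dBD dAC dAD dCD hB hA hC hD
        (inter_ne_comm nAB) nBC nBD nAC nAD nCD (by rwa [Finset.inter_comm]) t4
        mB mA mC mD hnb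
      exact Or.inr (Or.inl ⟨x, e1, e2, e3⟩)
    by_cases t5 : (B ∩ D).card ≤ 3
    · obtain ⟨x, e1, e2, e3⟩ := STAR hn hh dAB.symm dBD dBC dAD dAC dCD.symm hB hA hD hC
        (inter_ne_comm nAB) nBD nBC nAD nAC (inter_ne_comm nCD) (by rwa [Finset.inter_comm]) t5
        mB mA mD mC hnb
      exact Or.inr (Or.inl ⟨x, e1, e3, e2⟩)
    · -- order (A, C, B, D)
      exact absurd (berge_of_big dAC dAB dAD dBC.symm dCD dBD
        (by omega) (by rw [Finset.inter_comm]; omega) (by omega) (by rw [Finset.inter_comm]; omega))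
        (hnb A C B D mA mC mB mD)
  by_cases t2 : (A ∩ C).card ≤ 3
  · by_cases t3 : (A ∩ D).card ≤ 3
    · obtain ⟨x, e1, e2, e3⟩ := STAR hn hh dAC dAD dAB dCD dBC.symm dBD.symm hA hC hD hB
        nAC nAD nAB nCD (inter_ne_comm nBC) (inter_ne_comm nBD) t2 t3 mA mC mD mB hnb
      exact Or.inl ⟨x, e3, e1, e2⟩
    by_cases t4 : (B ∩ C).card ≤ 3
    · obtain ⟨x, e1, e2, e3⟩ := STAR hn hh dAC.symm dBC.symm dCD dAB dAD dBD hC hA hB hD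
        (inter_ne_comm nAC) (inter_ne_comm nBC) nCD nAB nAD nBD (by rwa [Finset.inter_comm])
        (by rwa [Finset.inter_comm]) mC mA mB mD hnb
      exact Or.inr (Or.inr (Or.inl ⟨x, e1, e2, e3⟩))
    by_cases t6 : (C ∩ D).card ≤ 3
    · obtain ⟨x, e1, e2, e3⟩ := STAR hn hh dAC.symm dCD dBC.symm dAD dAB dBD.symm hC hA hD hB
        (inter_ne_comm nAC) nCD (inter_ne_comm nBC) nAD nAB (inter_ne_comm nBD)
        (by rwa [Finset.inter_comm]) t6 mC mA mD mB hnb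
      exact Or.inr (Or.inr (Or.inl ⟨x, e1, e3, e2⟩))
    · -- order (A, B, C, D)
      exact absurd (berge_of_big dAB dAC dAD dBC dBD dCD
        (by omega) (by omega) (by omega) (by rw [Finset.inter_comm]; omega))
        (hnb A B C D mA mB mC mD)
  by_cases t3 : (A ∩ D).card ≤ 3
  · by_cases t5 : (B ∩ D).card ≤ 3
    · obtain ⟨x, e1, e2, e3⟩ := STAR hn hh dAD.symm dBD.symm dCD.symm dAB dAC dBC hD hA hB hC
        (inter_ne_comm nAD) (inter_ne_comm nBD) (inter_ne_comm nCD) nAB nAC nBC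
        (by rwa [Finset.inter_comm]) (by rwa [Finset.inter_comm]) mD mA mB mC hnb
      exact Or.inr (Or.inr (Or.inr ⟨x, e1, e2, e3⟩))
    by_cases t6 : (C ∩ D).card ≤ 3
    · obtain ⟨x, e1, e2, e3⟩ := STAR hn hh dAD.symm dCD.symm dBD.symm dAC dAB dBC.symm hD hA hC hB
        (inter_ne_comm nAD) (inter_ne_comm nCD) (inter_ne_comm nBD) nAC nAB (inter_ne_comm nBC)
        (by rwa [Finset.inter_comm]) (by rwa [Finset.inter_comm]) mD mA mC mB hnb
      exact Or.inr (Or.inr (Or.inr ⟨x, e1, e3, e2⟩))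
    · -- order (A, B, D, C)
      exact absurd (berge_of_big dAB dAD dAC dBD dBC dCD.symm
        (by omega) (by omega) (by rw [Finset.inter_comm]; omega) (by rw [Finset.inter_comm]; omega))
        (hnb A B D C mA mB mD mC)
  by_cases t4 : (B ∩ C).card ≤ 3
  · by_cases t5 : (B ∩ D).card ≤ 3
    · obtain ⟨x, e1, e2, e3⟩ := STAR hn hh dBC dBD dAB.symm dCD dAC.symm dAD.symm hB hC hD hA
        nBC nBD (inter_ne_comm nAB) nCD (inter_ne_comm nAC) (inter_ne_comm nAD) t4 t5
        mB mC mD mA hnb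
      exact Or.inr (Or.inl ⟨x, e3, e1, e2⟩)
    by_cases t6 : (C ∩ D).card ≤ 3
    · obtain ⟨x, e1, e2, e3⟩ := STAR hn hh dBC.symm dCD dAC.symm dBD dAB.symm dAD.symm hC hB hD hA
        (inter_ne_comm nBC) nCD (inter_ne_comm nAC) nBD (inter_ne_comm nAB) (inter_ne_comm nAD)
        (by rwa [Finset.inter_comm]) t6 mC mB mD mA hnb
      exact Or.inr (Or.inr (Or.inl ⟨x, e3, e1, e2⟩))
    · -- order (B, A, C, D)
      exact absurd (berge_of_big dAB.symm dBC dBD dAC dAD dCD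
        (by rw [Finset.inter_comm]; omega) (by omega) (by omega) (by rw [Finset.inter_comm]; omega))
        (hnb B A C D mB mA mC mD)
  by_cases t5 : (B ∩ D).card ≤ 3
  · by_cases t6 : (C ∩ D).card ≤ 3
    · obtain ⟨x, e1, e2, e3⟩ := STAR hn hh dBD.symm dCD.symm dAD.symm dBC dAB.symm dAC.symm
        hD hB hC hA (inter_ne_comm nBD) (inter_ne_comm nCD) (inter_ne_comm nAD)
        nBC (inter_ne_comm nAB) (inter_ne_comm nAC)
        (by rwa [Finset.inter_comm]) (by rwa [Finset.inter_comm]) mD mB mC mA hnb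
      exact Or.inr (Or.inr (Or.inr ⟨x, e3, e1, e2⟩))
    · -- order (B, A, D, C)
      exact absurd (berge_of_big dAB.symm dBD dBC dAD dAC dCD.symm
        (by rw [Finset.inter_comm]; omega) (by omega) (by rw [Finset.inter_comm]; omega)
        (by rw [Finset.inter_comm]; omega)) (hnb B A D C mB mA mD mC)
  · -- order (C, A, D, B)
    exact absurd (berge_of_big dAC.symm dCD dBC.symm dAD dAB dBD.symm
      (by rw [Finset.inter_comm]; omega) (by omega) (by rw [Finset.inter_comm]; omega)
      (by omega)) (hnb C A D B mC mA mD mB)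

end BC4

namespace BC4

lemma TWOBIG {h : ℕ} (hn : n = 2*h) (hh : 13 ≤ h) {A B C D : Finset (Fin n)}
    (dAB : A ≠ B) (dAC : A ≠ C) (dAD : A ≠ D) (dBC : B ≠ C) (dBD : B ≠ D) (dCD : C ≠ D)
    (hA : h + 1 ≤ A.card) (hB : h + 1 ≤ B.card) (hC : h ≤ C.card) (hD : h ≤ D.card)
    {m : Finset (Fin n) → Prop} (mA : m A) (mB : m B) (mC : m C) (mD : m D)
    (hnb : ∀ a b c d : Finset (Fin n), m a → m b → m c → m d → ¬ BergeC4 a b c d) :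
    False := by
  have lbAB := inter_lb A B
  have lbAC := inter_lb A C
  have lbAD := inter_lb A D
  have lbBC := inter_lb B C
  have lbBD := inter_lb B D
  by_cases hCD : C ∩ D = ∅
  · obtain ⟨hCh, hDc⟩ := compl_of_disj hn hC hD hCD
    have hAc : A ≠ Cᶜ := by
      intro e
      have := compl_card (X := C)
      rw [← e] at this
      omega
    have hBc : B ≠ Cᶜ := by
      intro e
      have := compl_card (X := C)
      rw [← e] at this
      omega
    have hnonb : ¬ BergeC4 C A Cᶜ B := by
      have h2 := hnb C A D B mC mA mD mB
      rwa [hDc] at h2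
    rcases CP hn hh hCh (by omega) (by omega) dAC hAc dBC hBc dAB hnonb with
      ⟨x, e1, e2⟩ | ⟨y, e1, e2⟩
    · exact center_fin hn hC hA hB dAB e1 e2
    · have s1 := sub_union e1
      have s2 := sub_union e2
      have hW : (C ∪ {y}).card ≤ h + 1 :=
        le_trans (Finset.card_union_le _ _) (by simp; omega)
      have eA : A = C ∪ {y} := Finset.eq_of_subset_of_card_le s1 (le_trans hW hA)
      have eB : B = C ∪ {y} := Finset.eq_of_subset_of_card_le s2 (le_trans hW hB)
      exact dAB (eA.trans eB.symm)
  · have nCD : (C ∩ D).Nonempty := Finset.nonempty_iff_ne_empty.mpr hCD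
    have nAB : (A ∩ B).Nonempty := Finset.card_pos.mp (by omega)
    have nAC : (A ∩ C).Nonempty := Finset.card_pos.mp (by omega)
    have nAD : (A ∩ D).Nonempty := Finset.card_pos.mp (by omega)
    have nBC : (B ∩ C).Nonempty := Finset.card_pos.mp (by omega)
    have nBD : (B ∩ D).Nonempty := Finset.card_pos.mp (by omega)
    rcases CLASSIFY hn hh dAB dAC dAD dBC dBD dCD (by omega) (by omega) hC hD
      nAB nAC nAD nBC nBD nCD mA mB mC mD hnb with
      ⟨x, e1, e2, e3⟩ | ⟨x, e1, e2, e3⟩ | ⟨x, e1, e2, e3⟩ | ⟨x, e1, e2, e3⟩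
    · rw [e1, Finset.card_singleton] at lbAB; omega
    · rw [Finset.inter_comm, e1, Finset.card_singleton] at lbAB; omega
    · exact center_fin hn hC hA hB dAB e1 e2
    · exact center_fin hn hD hA hB dAB e1 e2
end BC4

namespace BC4

lemma FIVE_CP {h : ℕ} (hn : n = 2*h) (hh : 13 ≤ h) {A C D E : Finset (Fin n)}
    (hA : A.card = h) (hC : h ≤ C.card) (hD : h ≤ D.card) (hE : h ≤ E.card)
    (dCA : C ≠ A) (dCAc : C ≠ Aᶜ) (dDA : D ≠ A) (dDAc : D ≠ Aᶜ)
    (dEA : E ≠ A) (dEAc : E ≠ Aᶜ) (dCD : C ≠ D) (dCE : C ≠ E) (dDE : D ≠ E)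
    (nb1 : ¬ BergeC4 A C Aᶜ D) (nb2 : ¬ BergeC4 A C Aᶜ E)
    (nb3 : ¬ BergeC4 Aᶜ C D E) (nb4 : ¬ BergeC4 A C D E) : False := by
  have cC := Finset.card_sdiff_add_card_inter C A
  have cD := Finset.card_sdiff_add_card_inter D A
  have cE := Finset.card_sdiff_add_card_inter E A
  have commC : (C ∩ A).card = (A ∩ C).card := by rw [Finset.inter_comm]
  have commD : (D ∩ A).card = (A ∩ D).card := by rw [Finset.inter_comm]
  have commE : (E ∩ A).card = (A ∩ E).card := by rw [Finset.inter_comm]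
  rcases CP hn hh hA hC hD dCA dCAc dDA dDAc dCD nb1 with ⟨x, e1, e2⟩ | ⟨y, e1, e2⟩
  · rcases CP hn hh hA hC hE dCA dCAc dEA dEAc dCE nb2 with ⟨x', f1, f2⟩ | ⟨y', f1, f2⟩
    · have hxx : x' = x := Finset.singleton_injective (f1.symm.trans e1)
      rw [hxx] at f2
      -- C, D, E ⊆ Aᶜ ∪ {x}
      have sC := sub_compl e1
      have sD := sub_compl e2
      have sE := sub_compl f2
      have hW : (Aᶜ ∪ {x}).card ≤ h + 1 :=
        le_trans (Finset.card_union_le _ _) (by rw [compl_card]; simp; omega)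
      have iCD := subset_pair_inter sC sD
      have iCE := subset_pair_inter sC sE
      have iDE := subset_pair_inter sD sE
      have c1 : (A ∩ C).card = 1 := by rw [e1]; exact Finset.card_singleton x
      have c2 : (A ∩ D).card = 1 := by rw [e2]; exact Finset.card_singleton x
      have c3 : (A ∩ E).card = 1 := by rw [f2]; exact Finset.card_singleton x
      have eAcC : (Aᶜ ∩ C).card = (C \ A).card := by
        rw [Finset.inter_comm]; congr 1; ext a; simp [and_comm]
      have eAcE : (E ∩ Aᶜ).card = (E \ A).card := by
        congr 1; ext a; simp
      exact nb3 (berge_of_big dCAc.symm dDAc.symm dEAc.symm dCD dCE dDE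
        (by omega) (by omega) (by omega) (by omega))
    · have c1 : (A ∩ C).card = 1 := by rw [e1]; exact Finset.card_singleton x
      have c2 : (C \ A).card = 1 := by rw [f1]; exact Finset.card_singleton y'
      omega
  · rcases CP hn hh hA hC hE dCA dCAc dEA dEAc dCE nb2 with ⟨x', f1, f2⟩ | ⟨y', f1, f2⟩
    · have c1 : (A ∩ C).card = 1 := by rw [f1]; exact Finset.card_singleton x'
      have c2 : (C \ A).card = 1 := by rw [e1]; exact Finset.card_singleton y
      omega
    · have hyy : y' = y := Finset.singleton_injective (f1.symm.trans e1)
      rw [hyy] at f2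
      have hyA : y ∉ A := by
        have : y ∈ C \ A := by rw [e1]; exact Finset.mem_singleton_self y
        exact (Finset.mem_sdiff.mp this).2
      have sC := sub_union e1
      have sD := sub_union e2
      have sE := sub_union f2
      have hW : (A ∪ {y}).card ≤ h + 1 :=
        le_trans (Finset.card_union_le _ _) (by simp; omega)
      have iCD := subset_pair_inter sC sD
      have iCE := subset_pair_inter sC sE
      have iDE := subset_pair_inter sD sE
      have c1 : (C \ A).card = 1 := by rw [e1]; exact Finset.card_singleton y
      have c2 : (D \ A).card = 1 := by rw [e2]; exact Finset.card_singleton y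
      have c3 : (E \ A).card = 1 := by rw [f2]; exact Finset.card_singleton y
      exact nb4 (berge_of_big dCA.symm dDA.symm dEA.symm dCD dCE dDE
        (by omega) (by omega) (by omega) (by omega))

end BC4

namespace BC4

lemma five_disj {h : ℕ} (hn : n = 2*h) (hh : 13 ≤ h) {A B C D E : Finset (Fin n)}
    (dAB : A ≠ B) (dAC : A ≠ C) (dAD : A ≠ D) (dAE : A ≠ E) (dBC : B ≠ C) (dBD : B ≠ D)
    (dBE : B ≠ E) (dCD : C ≠ D) (dCE : C ≠ E) (dDE : D ≠ E)
    (hA : h ≤ A.card) (hB : h ≤ B.card) (hC : h ≤ C.card) (hD : h ≤ D.card) (hE : h ≤ E.card)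
    (hd : A ∩ B = ∅)
    {m : Finset (Fin n) → Prop} (mA : m A) (mB : m B) (mC : m C) (mD : m D) (mE : m E)
    (hnb : ∀ a b c d : Finset (Fin n), m a → m b → m c → m d → ¬ BergeC4 a b c d) :
    False := by
  obtain ⟨hAh, hBc⟩ := compl_of_disj hn hA hB hd
  have nb1 : ¬ BergeC4 A C Aᶜ D := by
    have h2 := hnb A C B D mA mC mB mD
    rwa [hBc] at h2
  have nb2 : ¬ BergeC4 A C Aᶜ E := by
    have h2 := hnb A C B E mA mC mB mE
    rwa [hBc] at h2
  have nb3 : ¬ BergeC4 Aᶜ C D E := by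
    have h2 := hnb B C D E mB mC mD mE
    rwa [hBc] at h2
  have nb4 : ¬ BergeC4 A C D E := hnb A C D E mA mC mD mE
  exact FIVE_CP hn hh hAh hC hD hE dAC.symm (hBc ▸ dBC.symm) dAD.symm (hBc ▸ dBD.symm)
    dAE.symm (hBc ▸ dBE.symm) dCD dCE dDE nb1 nb2 nb3 nb4

lemma FIVE_PW {h : ℕ} (hn : n = 2*h) (hh : 13 ≤ h) {Z P1 P2 P3 E : Finset (Fin n)}
    {x : Fin n}
    (dZ1 : Z ≠ P1) (dZ2 : Z ≠ P2) (dZ3 : Z ≠ P3) (dZE : Z ≠ E)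
    (d12 : P1 ≠ P2) (d13 : P1 ≠ P3) (d1E : P1 ≠ E) (d23 : P2 ≠ P3) (d2E : P2 ≠ E)
    (d3E : P3 ≠ E)
    (hZ : h ≤ Z.card) (h1 : h ≤ P1.card) (h2 : h ≤ P2.card) (h3 : h ≤ P3.card)
    (hE : h ≤ E.card)
    (nZ1 : (Z ∩ P1).Nonempty) (nZ2 : (Z ∩ P2).Nonempty) (nZE : (Z ∩ E).Nonempty)
    (n12 : (P1 ∩ P2).Nonempty) (n13 : (P1 ∩ P3).Nonempty) (n1E : (P1 ∩ E).Nonempty)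
    (n23 : (P2 ∩ P3).Nonempty) (n2E : (P2 ∩ E).Nonempty) (n3E : (P3 ∩ E).Nonempty)
    (e1 : Z ∩ P1 = {x}) (e2 : Z ∩ P2 = {x}) (e3 : Z ∩ P3 = {x})
    {m : Finset (Fin n) → Prop} (mZ : m Z) (m1 : m P1) (m2 : m P2) (m3 : m P3) (mE : m E)
    (hnb : ∀ a b c d : Finset (Fin n), m a → m b → m c → m d → ¬ BergeC4 a b c d) :
    False := by
  have m12 : h - 1 ≤ (P1 ∩ P2).card := PB hn hZ h1 h2 e1 e2
  have m13 : h - 1 ≤ (P1 ∩ P3).card := PB hn hZ h1 h3 e1 e3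
  have m23 : h - 1 ≤ (P2 ∩ P3).card := PB hn hZ h2 h3 e2 e3
  rcases CLASSIFY hn hh d12 d13 d1E d23 d2E d3E h1 h2 h3 hE n12 n13 n1E n23 n2E n3E
    m1 m2 m3 mE hnb with ⟨y, f1, f2, f3⟩ | ⟨y, f1, f2, f3⟩ | ⟨y, f1, f2, f3⟩ | ⟨y, f1, f2, f3⟩
  · exact not_sing m12 hh f1
  · exact not_sing m12 hh (by rwa [Finset.inter_comm] at f1)
  · exact not_sing m13 hh (by rwa [Finset.inter_comm] at f1)
  · -- center E: f1 : E ∩ P1 = {y}, f2 : E ∩ P2 = {y}, f3 : E ∩ P3 = {y}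
    rcases CLASSIFY hn hh dZ1 dZ2 dZE d12 d1E d2E hZ h1 h2 hE nZ1 nZ2 nZE n12 n1E n2E
      mZ m1 m2 mE hnb with ⟨z, g1, g2, g3⟩ | ⟨z, g1, g2, g3⟩ | ⟨z, g1, g2, g3⟩ | ⟨z, g1, g2, g3⟩
    · -- center Z: g1 : Z∩P1 = {z}, g3 : Z∩E = {z}
      have hzx : z = x := Finset.singleton_injective (g1.symm.trans e1)
      rw [hzx] at g3
      have hPB := PB hn hZ h1 hE e1 g3
      exact not_sing hPB hh (by rwa [Finset.inter_comm] at f1)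
    · -- center P1: g2 : P1 ∩ P2 = {z}
      exact not_sing m12 hh g2
    · -- center P2: g2 : P2 ∩ P1 = {z}
      exact not_sing m12 hh (by rwa [Finset.inter_comm] at g2)
    · -- center E as (D): g1 : E∩Z = {z}, g2 : E∩P1 = {z}
      have hPB := PB hn hE hZ h1 g1 g2
      exact not_sing hPB hh e1
end BC4

namespace BC4

lemma FIVE {h : ℕ} (hn : n = 2*h) (hh : 13 ≤ h) {X1 X2 X3 X4 X5 : Finset (Fin n)}
    (d12 : X1 ≠ X2) (d13 : X1 ≠ X3) (d14 : X1 ≠ X4) (d15 : X1 ≠ X5)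
    (d23 : X2 ≠ X3) (d24 : X2 ≠ X4) (d25 : X2 ≠ X5)
    (d34 : X3 ≠ X4) (d35 : X3 ≠ X5) (d45 : X4 ≠ X5)
    (s1 : h ≤ X1.card) (s2 : h ≤ X2.card) (s3 : h ≤ X3.card) (s4 : h ≤ X4.card)
    (s5 : h ≤ X5.card)
    {m : Finset (Fin n) → Prop} (m1 : m X1) (m2 : m X2) (m3 : m X3) (m4 : m X4) (m5 : m X5)
    (hnb : ∀ a b c d : Finset (Fin n), m a → m b → m c → m d → ¬ BergeC4 a b c d) :
    False := by
  by_cases e12 : X1 ∩ X2 = ∅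
  · exact five_disj hn hh d12 d13 d14 d15 d23 d24 d25 d34 d35 d45 s1 s2 s3 s4 s5 e12
      m1 m2 m3 m4 m5 hnb
  by_cases e13 : X1 ∩ X3 = ∅
  · exact five_disj hn hh d13 d12 d14 d15 d23.symm d34 d35 d24 d25 d45 s1 s3 s2 s4 s5 e13
      m1 m3 m2 m4 m5 hnb
  by_cases e14 : X1 ∩ X4 = ∅
  · exact five_disj hn hh d14 d12 d13 d15 d24.symm d34.symm d45 d23 d25 d35 s1 s4 s2 s3 s5 e14
      m1 m4 m2 m3 m5 hnb
  by_cases e15 : X1 ∩ X5 = ∅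
  · exact five_disj hn hh d15 d12 d13 d14 d25.symm d35.symm d45.symm d23 d24 d34 s1 s5 s2 s3 s4
      e15 m1 m5 m2 m3 m4 hnb
  by_cases e23 : X2 ∩ X3 = ∅
  · exact five_disj hn hh d23 d12.symm d24 d25 d13.symm d34 d35 d14 d15 d45 s2 s3 s1 s4 s5 e23
      m2 m3 m1 m4 m5 hnb
  by_cases e24 : X2 ∩ X4 = ∅
  · exact five_disj hn hh d24 d12.symm d23 d25 d14.symm d34.symm d45 d13 d15 d35 s2 s4 s1 s3 s5
      e24 m2 m4 m1 m3 m5 hnb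
  by_cases e25 : X2 ∩ X5 = ∅
  · exact five_disj hn hh d25 d12.symm d23 d24 d15.symm d35.symm d45.symm d13 d14 d34 s2 s5 s1 s3
      s4 e25 m2 m5 m1 m3 m4 hnb
  by_cases e34 : X3 ∩ X4 = ∅
  · exact five_disj hn hh d34 d13.symm d23.symm d35 d14.symm d24.symm d45 d12 d15 d25 s3 s4 s1 s2
      s5 e34 m3 m4 m1 m2 m5 hnb
  by_cases e35 : X3 ∩ X5 = ∅
  · exact five_disj hn hh d35 d13.symm d23.symm d34 d15.symm d25.symm d45.symm d12 d14 d24 s3 s5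
      s1 s2 s4 e35 m3 m5 m1 m2 m4 hnb
  by_cases e45 : X4 ∩ X5 = ∅
  · exact five_disj hn hh d45 d14.symm d24.symm d34.symm d15.symm d25.symm d35.symm d12 d13 d23
      s4 s5 s1 s2 s3 e45 m4 m5 m1 m2 m3 hnb
  have n12 : (X1 ∩ X2).Nonempty := Finset.nonempty_iff_ne_empty.mpr e12
  have n13 : (X1 ∩ X3).Nonempty := Finset.nonempty_iff_ne_empty.mpr e13
  have n14 : (X1 ∩ X4).Nonempty := Finset.nonempty_iff_ne_empty.mpr e14
  have n15 : (X1 ∩ X5).Nonempty := Finset.nonempty_iff_ne_empty.mpr e15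
  have n23 : (X2 ∩ X3).Nonempty := Finset.nonempty_iff_ne_empty.mpr e23
  have n24 : (X2 ∩ X4).Nonempty := Finset.nonempty_iff_ne_empty.mpr e24
  have n25 : (X2 ∩ X5).Nonempty := Finset.nonempty_iff_ne_empty.mpr e25
  have n34 : (X3 ∩ X4).Nonempty := Finset.nonempty_iff_ne_empty.mpr e34
  have n35 : (X3 ∩ X5).Nonempty := Finset.nonempty_iff_ne_empty.mpr e35
  have n45 : (X4 ∩ X5).Nonempty := Finset.nonempty_iff_ne_empty.mpr e45
  rcases CLASSIFY hn hh d12 d13 d14 d23 d24 d34 s1 s2 s3 s4 n12 n13 n14 n23 n24 n34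
    m1 m2 m3 m4 hnb with ⟨x, f1, f2, f3⟩ | ⟨x, f1, f2, f3⟩ | ⟨x, f1, f2, f3⟩ | ⟨x, f1, f2, f3⟩
  · exact FIVE_PW hn hh d12 d13 d14 d15 d23 d24 d25 d34 d35 d45 s1 s2 s3 s4 s5
      n12 n13 n15 n23 n24 n25 n34 n35 n45
      f1 f2 f3 m1 m2 m3 m4 m5 hnb
  · exact FIVE_PW hn hh d12.symm d23 d24 d25 d13 d14 d15 d34 d35 d45 s2 s1 s3 s4 s5
      (inter_ne_comm n12) n23 n25 n13 n14 n15 n34 n35 n45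
      f1 f2 f3 m2 m1 m3 m4 m5 hnb
  · exact FIVE_PW hn hh d13.symm d23.symm d34 d35 d12 d14 d15 d24 d25 d45 s3 s1 s2 s4 s5
      (inter_ne_comm n13) (inter_ne_comm n23) n35 n12 n14 n15 n24 n25 n45
      f1 f2 f3 m3 m1 m2 m4 m5 hnb
  · exact FIVE_PW hn hh d14.symm d24.symm d34.symm d45 d12 d13 d15 d23 d25 d35 s4 s1 s2 s3 s5
      (inter_ne_comm n14) (inter_ne_comm n24) n45 n12 n13 n15 n23 n25 n35
      f1 f2 f3 m4 m1 m2 m3 m5 hnb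
end BC4


/-- For even `n ≥ 26`, every partition of the power set of `[n]` into `t` parts, each
`C₄`-free, satisfies `18 t ≥ 3 · 2 ^ n + C(n, n / 2)`. -/
theorem f_C4_lower_even (n : ℕ) (hn : 26 ≤ n) (hev : Even n) (t : ℕ)
    (c : Finset (Fin n) → Fin t)
    (hfree : ∀ i : Fin t, C4Free {A | c A = i}) :
    3 * 2 ^ n + n.choose (n / 2) ≤ 18 * t := by
  classical
  set h := n / 2 with hhdef
  have hn2 : n = 2 * h := by
    rw [Nat.even_iff] at hev; omega
  have hh : 13 ≤ h := by omega
  set w : Finset (Fin n) → ℕ := fun X => if h + 1 ≤ X.card then 3 else 2 with hw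
  set good : Finset (Finset (Fin n)) := Finset.univ.filter (fun X => h ≤ X.card) with hgood
  -- per-class bound
  have class_bound : ∀ i : Fin t, ∑ X ∈ Finset.filter (fun X => c X = i) good, w X ≤ 9 := by
    intro i
    set s := Finset.filter (fun X => c X = i) good with hs
    have hmem : ∀ X ∈ s, h ≤ X.card ∧ c X = i := by
      intro X hX
      rw [hs, hgood] at hX
      simp only [Finset.mem_filter, Finset.mem_univ, true_and] at hX
      exact hX
    have hnb : ∀ a b cc d : Finset (Fin n), a ∈ s → b ∈ s → cc ∈ s → d ∈ s →
        ¬ BergeC4 a b cc d := by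
      intro a b cc d ha hb hc hd
      exact hfree i a (hmem a ha).2 b (hmem b hb).2 cc (hmem cc hc).2 d (hmem d hd).2
    -- s has at most 4 elements
    have hcard4 : s.card ≤ 4 := by
      by_contra hc5
      push_neg at hc5
      obtain ⟨X1, hX1⟩ := Finset.card_pos.mp (show 0 < s.card by omega)
      have c1 : 4 ≤ (s.erase X1).card := by
        rw [Finset.card_erase_of_mem hX1]; omega
      obtain ⟨X2, hX2⟩ := Finset.card_pos.mp (show 0 < (s.erase X1).card by omega)
      have c2 : 3 ≤ ((s.erase X1).erase X2).card := by
        rw [Finset.card_erase_of_mem hX2]; omega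
      obtain ⟨X3, hX3⟩ := Finset.card_pos.mp (show 0 < ((s.erase X1).erase X2).card by omega)
      have c3 : 2 ≤ (((s.erase X1).erase X2).erase X3).card := by
        rw [Finset.card_erase_of_mem hX3]; omega
      obtain ⟨X4, hX4⟩ := Finset.card_pos.mp
        (show 0 < (((s.erase X1).erase X2).erase X3).card by omega)
      have c4 : 1 ≤ ((((s.erase X1).erase X2).erase X3).erase X4).card := by
        rw [Finset.card_erase_of_mem hX4]; omega
      obtain ⟨X5, hX5⟩ := Finset.card_pos.mp
        (show 0 < ((((s.erase X1).erase X2).erase X3).erase X4).card by omega)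
      simp only [Finset.mem_erase] at hX2 hX3 hX4 hX5
      have m1 : X1 ∈ s := hX1
      have m2 : X2 ∈ s := hX2.2
      have m3 : X3 ∈ s := hX3.2.2
      have m4 : X4 ∈ s := hX4.2.2.2
      have m5 : X5 ∈ s := hX5.2.2.2.2
      exact BC4.FIVE hn2 hh (Ne.symm hX2.1) (Ne.symm hX3.2.1) (Ne.symm hX4.2.2.1)
        (Ne.symm hX5.2.2.2.1) (Ne.symm hX3.1) (Ne.symm hX4.2.1) (Ne.symm hX5.2.2.1)
        (Ne.symm hX4.1) (Ne.symm hX5.2.1) (Ne.symm hX5.1)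
        (hmem X1 m1).1 (hmem X2 m2).1 (hmem X3 m3).1 (hmem X4 m4).1 (hmem X5 m5).1
        m1 m2 m3 m4 m5 hnb
    -- if s has 4 elements then at most one big
    have hbig : 4 ≤ s.card → (s.filter (fun X => h + 1 ≤ X.card)).card ≤ 1 := by
      intro h4
      by_contra hc2
      push_neg at hc2
      set b := s.filter (fun X => h + 1 ≤ X.card) with hb
      obtain ⟨A, hA⟩ := Finset.card_pos.mp (show 0 < b.card by omega)
      have cb1 : 1 ≤ (b.erase A).card := by
        rw [Finset.card_erase_of_mem hA]; omega
      obtain ⟨B, hB⟩ := Finset.card_pos.mp (show 0 < (b.erase A).card by omega)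
      rw [Finset.mem_erase] at hB
      have hAs : A ∈ s := Finset.mem_of_mem_filter _ hA
      have hBs : B ∈ s := Finset.mem_of_mem_filter _ hB.2
      have hAbig : h + 1 ≤ A.card := (Finset.mem_filter.mp hA).2
      have hBbig : h + 1 ≤ B.card := (Finset.mem_filter.mp hB.2).2
      have cs1 : 3 ≤ (s.erase A).card := by rw [Finset.card_erase_of_mem hAs]; omega
      have hBsA : B ∈ s.erase A := Finset.mem_erase.mpr ⟨hB.1, hBs⟩
      have cs2 : 2 ≤ ((s.erase A).erase B).card := by
        rw [Finset.card_erase_of_mem hBsA]; omega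
      obtain ⟨C, hC⟩ := Finset.card_pos.mp (show 0 < ((s.erase A).erase B).card by omega)
      have cs3 : 1 ≤ (((s.erase A).erase B).erase C).card := by
        rw [Finset.card_erase_of_mem hC]; omega
      obtain ⟨D, hD⟩ := Finset.card_pos.mp
        (show 0 < (((s.erase A).erase B).erase C).card by omega)
      simp only [Finset.mem_erase] at hC hD
      have mC : C ∈ s := hC.2.2
      have mD : D ∈ s := hD.2.2.2
      exact BC4.TWOBIG hn2 hh hB.1.symm (Ne.symm hC.2.1) (Ne.symm hD.2.2.1)
        (Ne.symm hC.1) (Ne.symm hD.2.1) (Ne.symm hD.1)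
        hAbig hBbig (hmem C mC).1 (hmem D mD).1 hAs hBs mC mD hnb
    -- sum bound
    have hsplit := Finset.sum_filter_add_sum_filter_not s (fun X => h + 1 ≤ X.card) w
    have hval1 : ∑ X ∈ s.filter (fun X => h + 1 ≤ X.card), w X
        = 3 * (s.filter (fun X => h + 1 ≤ X.card)).card := by
      have hv : ∀ X ∈ s.filter (fun X => h + 1 ≤ X.card), w X = 3 :=
        fun X hX => if_pos (Finset.mem_filter.mp hX).2
      rw [Finset.sum_congr rfl hv, Finset.sum_const, smul_eq_mul, mul_comm]
    have hval2 : ∑ X ∈ s.filter (fun X => ¬ (h + 1 ≤ X.card)), w X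
        = 2 * (s.filter (fun X => ¬ (h + 1 ≤ X.card))).card := by
      have hv : ∀ X ∈ s.filter (fun X => ¬ (h + 1 ≤ X.card)), w X = 2 :=
        fun X hX => if_neg (Finset.mem_filter.mp hX).2
      rw [Finset.sum_congr rfl hv, Finset.sum_const, smul_eq_mul, mul_comm]
    have hpart := Finset.card_filter_add_card_filter_not
      (s := s) (p := fun X => h + 1 ≤ X.card)
    have hfle : (s.filter (fun X => h + 1 ≤ X.card)).card ≤ s.card :=
      Finset.card_filter_le _ _
    by_cases h4 : 4 ≤ s.card
    · have := hbig h4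
      omega
    · omega
  -- global sum
  have hmapsto : ∀ X ∈ good, c X ∈ (Finset.univ : Finset (Fin t)) :=
    fun X _ => Finset.mem_univ _
  have hfib := Finset.sum_fiberwise_of_maps_to hmapsto w
  have total : ∑ X ∈ good, w X ≤ 9 * t := by
    rw [← hfib]
    calc ∑ i : Fin t, ∑ X ∈ Finset.filter (fun X => c X = i) good, w X
        ≤ ∑ _i : Fin t, 9 := Finset.sum_le_sum (fun i _ => class_bound i)
      _ = 9 * t := by simp [Finset.card_univ, mul_comm]
  -- counting
  set Mset : Finset (Finset (Fin n)) := Finset.univ.filter (fun X => X.card = h) with hMset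
  set Bset : Finset (Finset (Fin n)) := Finset.univ.filter (fun X => h + 1 ≤ X.card) with hBset
  set Sset : Finset (Finset (Fin n)) := Finset.univ.filter (fun X => X.card < h) with hSset
  have hM : Mset.card = n.choose h := by
    have e1 : Mset = Finset.powersetCard h (Finset.univ : Finset (Fin n)) := by
      ext X
      simp [hMset, Finset.mem_powersetCard, eq_comm]
    rw [e1, Finset.card_powersetCard]
    simp
  have hBS : Bset.card = Sset.card := by
    apply Finset.card_bij' (fun X _ => Xᶜ) (fun X _ => Xᶜ)
    · intro X _; exact compl_compl X
    · intro X _; exact compl_compl X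
    · intro X hX
      rw [hBset] at hX
      simp only [Finset.mem_filter, Finset.mem_univ, true_and] at hX
      rw [hSset]
      simp only [Finset.mem_filter, Finset.mem_univ, true_and]
      have hXn : X.card ≤ n := Finset.card_le_univ X |>.trans (by simp)
      rw [BC4.compl_card]
      omega
    · intro X hX
      rw [hSset] at hX
      simp only [Finset.mem_filter, Finset.mem_univ, true_and] at hX
      rw [hBset]
      simp only [Finset.mem_filter, Finset.mem_univ, true_and]
      have hXn : X.card ≤ n := Finset.card_le_univ X |>.trans (by simp)
      rw [BC4.compl_card]
      omega
  have hgoodsplit : Bset.card + Mset.card = good.card := by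
    have hp := Finset.card_filter_add_card_filter_not
      (s := good) (p := fun X => h + 1 ≤ X.card)
    have e1 : good.filter (fun X => h + 1 ≤ X.card) = Bset := by
      ext X
      simp only [hgood, hBset, Finset.mem_filter, Finset.mem_univ, true_and,
        Finset.filter_filter]
      omega
    have e2 : good.filter (fun X => ¬ (h + 1 ≤ X.card)) = Mset := by
      ext X
      simp only [hgood, hMset, Finset.mem_filter, Finset.mem_univ, true_and,
        Finset.filter_filter]
      omega
    rw [e1, e2] at hp
    exact hp
  have huniv : (Finset.univ : Finset (Finset (Fin n))).card = 2 ^ n := by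
    rw [Finset.card_univ, Fintype.card_finset, Fintype.card_fin]
  have hallsplit : good.card + Sset.card = 2 ^ n := by
    have hp := Finset.card_filter_add_card_filter_not
      (s := (Finset.univ : Finset (Finset (Fin n)))) (p := fun X => h ≤ X.card)
    have e2 : Finset.univ.filter (fun X : Finset (Fin n) => ¬ (h ≤ X.card)) = Sset := by
      ext X
      simp only [hSset, Finset.mem_filter, Finset.mem_univ, true_and]
      omega
    rw [e2, huniv] at hp
    exact hp
  have hsumgood : ∑ X ∈ good, w X = 3 * Bset.card + 2 * Mset.card := by
    rw [← Finset.sum_filter_add_sum_filter_not good (fun X => h + 1 ≤ X.card) w]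
    have e1 : good.filter (fun X => h + 1 ≤ X.card) = Bset := by
      ext X
      simp only [hgood, hBset, Finset.mem_filter, Finset.mem_univ, true_and,
        Finset.filter_filter]
      omega
    have e2 : good.filter (fun X => ¬ (h + 1 ≤ X.card)) = Mset := by
      ext X
      simp only [hgood, hMset, Finset.mem_filter, Finset.mem_univ, true_and,
        Finset.filter_filter]
      omega
    rw [e1, e2]
    have hv1 : ∀ X ∈ Bset, w X = 3 := by
      intro X hX
      rw [hBset] at hX
      simp only [Finset.mem_filter, Finset.mem_univ, true_and] at hX
      exact if_pos hX
    have hv2 : ∀ X ∈ Mset, w X = 2 := by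
      intro X hX
      rw [hMset] at hX
      simp only [Finset.mem_filter, Finset.mem_univ, true_and] at hX
      exact if_neg (by omega)
    rw [Finset.sum_congr rfl hv1, Finset.sum_congr rfl hv2, Finset.sum_const,
      Finset.sum_const, smul_eq_mul, smul_eq_mul, mul_comm Bset.card 3, mul_comm Mset.card 2]
  have hchoose : n.choose (n / 2) = Mset.card := by rw [hM]
  omega
end

section
/- Let n ≥ 27 be odd. Every partition of 𝒫(n) into t parts, each of which is C₄-free, satisfies 3·t ≥ 2^{n−1}; that is, f(n, C₄) ≥ 2^{n−1}/3. -/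
/-- The existential part of `BergeC4`: a system of distinct representatives for the
four cyclic intersections. -/
def SDR4 {n : ℕ} (A B C D : Finset (Fin n)) : Prop :=
  ∃ x₁ x₂ x₃ x₄ : Fin n,
    x₁ ≠ x₂ ∧ x₁ ≠ x₃ ∧ x₁ ≠ x₄ ∧ x₂ ≠ x₃ ∧ x₂ ≠ x₄ ∧ x₃ ≠ x₄ ∧
    x₁ ∈ A ∩ B ∧ x₂ ∈ B ∩ C ∧ x₃ ∈ C ∩ D ∧ x₄ ∈ D ∩ A

section Helpers

variable {n m : ℕ}

lemma pick_avoid (s t : Finset (Fin n)) (h : t.card < s.card) : ∃ x ∈ s, x ∉ t := by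
  by_contra h'
  push_neg at h'
  exact absurd (Finset.card_le_card h') (Nat.not_le.mpr h)

lemma pair_of_not (T U : Finset (Fin n)) (hT : T.Nonempty) (hU : U.Nonempty) :
    (∃ x ∈ T, ∃ y ∈ U, x ≠ y) ∨ ∃ p, T = {p} ∧ U = {p} := by
  obtain ⟨a, ha⟩ := hT
  obtain ⟨b, hb⟩ := hU
  by_cases hab : a = b
  · subst hab
    by_cases h2 : ∃ x ∈ T, x ≠ a
    · obtain ⟨x, hx, hxa⟩ := h2
      exact Or.inl ⟨x, hx, a, hb, hxa⟩
    · by_cases h3 : ∃ y ∈ U, y ≠ a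
      · obtain ⟨y, hy, hya⟩ := h3
        exact Or.inl ⟨a, ha, y, hy, fun h => hya h.symm⟩
      · push_neg at h2 h3
        refine Or.inr ⟨a, ?_, ?_⟩
        · exact Finset.eq_singleton_iff_unique_mem.mpr ⟨ha, h2⟩
        · exact Finset.eq_singleton_iff_unique_mem.mpr ⟨hb, h3⟩
  · exact Or.inl ⟨a, ha, b, hb, hab⟩

lemma card_le_n (s : Finset (Fin n)) : s.card ≤ n := by
  simpa using Finset.card_le_univ s

lemma inter_nonempty (hnm : n + 1 = 2 * m) (X Y : Finset (Fin n))
    (hX : m ≤ X.card) (hY : m ≤ Y.card) : (X ∩ Y).Nonempty := by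
  have e1 := Finset.card_inter_add_card_union X Y
  have e4 := card_le_n (X ∪ Y)
  exact Finset.card_pos.mp (by omega)

/-- If `X ∩ Y` is small then `Z` meets one of `X, Y` in a big set. -/
lemma big_of_small (hnm : n + 1 = 2 * m) (hm : 14 ≤ m) (X Y Z : Finset (Fin n))
    (hX : m ≤ X.card) (hY : m ≤ Y.card) (hZ : m ≤ Z.card)
    (hXY : (X ∩ Y).card ≤ 3) : 4 ≤ (Z ∩ X).card ∨ 4 ≤ (Z ∩ Y).card := by
  have e1 := Finset.card_inter_add_card_union X Y
  have e2 := Finset.card_inter_add_card_union Z (X ∪ Y)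
  have e3 : (Z ∩ (X ∪ Y)).card ≤ (Z ∩ X).card + (Z ∩ Y).card := by
    rw [Finset.inter_union_distrib_left]
    exact Finset.card_union_le _ _
  have e4 := card_le_n (X ∪ Y)
  have e5 := card_le_n (Z ∪ (X ∪ Y))
  by_contra hc
  push_neg at hc
  omega

/-- Completion lemma: if the two "opposite" intersections `W ∩ X` and `Y ∩ Z` are big,
and we have distinct representatives of `X ∩ Y` and `Z ∩ W`, then an SDR exists. -/
lemma sdr_of_pair (W X Y Z : Finset (Fin n))
    (hWX : 4 ≤ (W ∩ X).card) (hYZ : 4 ≤ (Y ∩ Z).card)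
    (x2 : Fin n) (hx2 : x2 ∈ X ∩ Y) (x4 : Fin n) (hx4 : x4 ∈ Z ∩ W)
    (hne : x2 ≠ x4) : SDR4 W X Y Z := by
  have hc1 : ({x2, x4} : Finset (Fin n)).card ≤ 2 := by
    have := Finset.card_insert_le x2 ({x4} : Finset (Fin n))
    simpa using this
  obtain ⟨x3, hx3, hx3n⟩ := pick_avoid (Y ∩ Z) {x2, x4} (by omega)
  have hc2 : ({x2, x3, x4} : Finset (Fin n)).card ≤ 3 := by
    have h1 := Finset.card_insert_le x2 ({x3, x4} : Finset (Fin n))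
    have h2 := Finset.card_insert_le x3 ({x4} : Finset (Fin n))
    have h3 : ({x4} : Finset (Fin n)).card = 1 := Finset.card_singleton x4
    omega
  obtain ⟨x1, hx1, hx1n⟩ := pick_avoid (W ∩ X) {x2, x3, x4} (by omega)
  simp only [Finset.mem_insert, Finset.mem_singleton, not_or] at hx3n hx1n
  exact ⟨x1, x2, x3, x4, hx1n.1, hx1n.2.1, hx1n.2.2, fun h => hx3n.1 h.symm, hne,
    hx3n.2, hx1, hx2, hx3, hx4⟩

/-- Case of two "parallel" big intersections `P ∩ R` and `Q ∩ S`: one of the two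
orders in which they are opposite pairs admits an SDR. -/
lemma caseI (hnm : n + 1 = 2 * m) (P Q R S : Finset (Fin n)) (hPR : P ≠ R)
    (hP : m ≤ P.card) (hQ : m ≤ Q.card) (hR : m ≤ R.card) (hS : m ≤ S.card)
    (hbig1 : 4 ≤ (P ∩ R).card) (hbig2 : 4 ≤ (Q ∩ S).card) :
    SDR4 P R Q S ∨ SDR4 P R S Q := by
  by_contra h
  rw [not_or] at h
  obtain ⟨hno1, hno2⟩ := h
  -- first order: P R Q S, edges P∩R (big), R∩Q, Q∩S (big), S∩P
  rcases pair_of_not (R ∩ Q) (S ∩ P) (inter_nonempty hnm R Q hR hQ)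
      (inter_nonempty hnm S P hS hP) with ⟨x2, hx2, x4, hx4, hne⟩ | ⟨q, eRQ, eSP⟩
  · exact hno1 (sdr_of_pair P R Q S hbig1 hbig2 x2 hx2 x4 hx4 hne)
  -- second order: P R S Q, edges P∩R (big), R∩S, S∩Q (big), Q∩P
  rcases pair_of_not (R ∩ S) (Q ∩ P) (inter_nonempty hnm R S hR hS)
      (inter_nonempty hnm Q P hQ hP) with ⟨x2, hx2, x4, hx4, hne⟩ | ⟨p, eRS, eQP⟩
  · refine hno2 (sdr_of_pair P R S Q hbig1 ?_ x2 hx2 x4 hx4 hne)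
    rw [Finset.inter_comm]
    exact hbig2
  -- both fail: derive a contradiction
  have hQPc : (Q ∩ P).card = 1 := by rw [eQP]; exact Finset.card_singleton p
  have huni := Finset.card_inter_add_card_union Q P
  have hle := card_le_n (Q ∪ P)
  have hPcard : P.card = m := by omega
  have hQPu : (Q ∪ P).card = n := by omega
  have hUniv : Q ∪ P = Finset.univ := by
    apply Finset.eq_univ_of_card
    rw [hQPu, Fintype.card_fin]
  have hpQP : p ∈ Q ∩ P := by rw [eQP]; exact Finset.mem_singleton_self p
  have hpP : p ∈ P := (Finset.mem_inter.mp hpQP).2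
  have hpRS : p ∈ R ∩ S := by rw [eRS]; exact Finset.mem_singleton_self p
  have hpS : p ∈ S := (Finset.mem_inter.mp hpRS).2
  have hpq : p = q := by
    have : p ∈ S ∩ P := Finset.mem_inter.mpr ⟨hpS, hpP⟩
    rw [eSP] at this
    exact Finset.mem_singleton.mp this
  have hsub : R ⊆ P := by
    intro r hr
    have hru : r ∈ Q ∪ P := by rw [hUniv]; exact Finset.mem_univ r
    rcases Finset.mem_union.mp hru with hq | hp
    · have hrq : r ∈ R ∩ Q := Finset.mem_inter.mpr ⟨hr, hq⟩
      rw [eRQ] at hrq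
      have : r = q := Finset.mem_singleton.mp hrq
      rw [this, ← hpq]
      exact hpP
    · exact hp
  have : R = P := Finset.eq_of_subset_of_card_le hsub (by omega)
  exact hPR this.symm

/-- Case of two "adjacent" big intersections `P ∩ Q` and `Q ∩ R`: the order
`P Q R S` admits an SDR. -/
lemma caseII (hnm : n + 1 = 2 * m) (P Q R S : Finset (Fin n)) (hPR : P ≠ R)
    (hP : m ≤ P.card) (hQ : m ≤ Q.card) (hR : m ≤ R.card) (hS : m ≤ S.card)
    (h1 : 4 ≤ (P ∩ Q).card) (h2 : 4 ≤ (Q ∩ R).card) : SDR4 P Q R S := by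
  have hPuR : m + 1 ≤ (P ∪ R).card := by
    by_contra hc
    push_neg at hc
    have e1 : P = P ∪ R :=
      Finset.eq_of_subset_of_card_le Finset.subset_union_left (by omega)
    have e2 : R = P ∪ R :=
      Finset.eq_of_subset_of_card_le Finset.subset_union_right (by omega)
    exact hPR (e1.trans e2.symm)
  have hkey : 2 ≤ ((R ∩ S) ∪ (S ∩ P)).card := by
    have h4 := Finset.card_inter_add_card_union S (P ∪ R)
    have h5 := card_le_n (S ∪ (P ∪ R))
    have h7 : (R ∩ S) ∪ (S ∩ P) = S ∩ (P ∪ R) := by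
      rw [Finset.inter_union_distrib_left, Finset.inter_comm R S, Finset.union_comm]
    rw [h7]
    omega
  rcases pair_of_not (R ∩ S) (S ∩ P) (inter_nonempty hnm R S hR hS)
      (inter_nonempty hnm S P hS hP) with ⟨x3, hx3, x4, hx4, hne⟩ | ⟨p, e1, e2⟩
  · have hc1 : ({x3, x4} : Finset (Fin n)).card ≤ 2 := by
      have := Finset.card_insert_le x3 ({x4} : Finset (Fin n))
      simpa using this
    obtain ⟨x2, hx2, hx2n⟩ := pick_avoid (Q ∩ R) {x3, x4} (by omega)
    have hc2 : ({x2, x3, x4} : Finset (Fin n)).card ≤ 3 := by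
      have ha := Finset.card_insert_le x2 ({x3, x4} : Finset (Fin n))
      have hb := Finset.card_insert_le x3 ({x4} : Finset (Fin n))
      have hcc : ({x4} : Finset (Fin n)).card = 1 := Finset.card_singleton x4
      omega
    obtain ⟨x1, hx1, hx1n⟩ := pick_avoid (P ∩ Q) {x2, x3, x4} (by omega)
    simp only [Finset.mem_insert, Finset.mem_singleton, not_or] at hx2n hx1n
    exact ⟨x1, x2, x3, x4, hx1n.1, hx1n.2.1, hx1n.2.2, hx2n.1, hx2n.2, hne,
      hx1, hx2, hx3, hx4⟩
  · exfalso
    rw [e1, e2] at hkey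
    simp at hkey

/-- Main combinatorial lemma: four distinct sets of size at least `m` in `Fin (2m-1)`,
`m ≥ 14`, always admit a Berge four-cycle in one of ten orders. -/
lemma main_lemma (hnm : n + 1 = 2 * m) (hm : 14 ≤ m)
    (A B C D : Finset (Fin n))
    (hAB : A ≠ B) (hAC : A ≠ C) (hAD : A ≠ D) (hBC : B ≠ C) (hBD : B ≠ D) (hCD : C ≠ D)
    (hA : m ≤ A.card) (hB : m ≤ B.card) (hC : m ≤ C.card) (hD : m ≤ D.card)
    (n1 : ¬ SDR4 A B C D) (n2 : ¬ SDR4 A B D C) (n3 : ¬ SDR4 B A C D)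
    (n4 : ¬ SDR4 B A D C) (n5 : ¬ SDR4 C A D B) (n6 : ¬ SDR4 A C D B)
    (n7 : ¬ SDR4 A C B D) (n8 : ¬ SDR4 B C D A) (n9 : ¬ SDR4 B C A D)
    (n10 : ¬ SDR4 C B D A) : False := by
  by_cases h1 : 4 ≤ (A ∩ B).card
  · by_cases h2 : 4 ≤ (C ∩ D).card
    · rcases caseI hnm A C B D hAB hA hC hB hD h1 h2 with h | h
      · exact n1 h
      · exact n2 h
    · push_neg at h2
      have h2' : (C ∩ D).card ≤ 3 := by omega
      rcases big_of_small hnm hm C D A hC hD hA h2' with hb | hb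
      · exact n3 (caseII hnm B A C D hBC hB hA hC hD (by rw [Finset.inter_comm]; exact h1) hb)
      · exact n4 (caseII hnm B A D C hBD hB hA hD hC (by rw [Finset.inter_comm]; exact h1) hb)
  · push_neg at h1
    have h1' : (A ∩ B).card ≤ 3 := by omega
    rcases big_of_small hnm hm A B C hA hB hC h1' with hb1 | hb1 <;>
      rcases big_of_small hnm hm A B D hA hB hD h1' with hb2 | hb2
    · exact n5 (caseII hnm C A D B hCD hC hA hD hB hb1 (by rw [Finset.inter_comm]; exact hb2))
    · rcases caseI hnm A D C B hAC hA hD hC hB (by rw [Finset.inter_comm]; exact hb1) hb2 with h | h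
      · exact n6 h
      · exact n7 h
    · rcases caseI hnm B D C A hBC hB hD hC hA (by rw [Finset.inter_comm]; exact hb1) hb2 with h | h
      · exact n8 h
      · exact n9 h
    · exact n10 (caseII hnm C B D A hCD hC hB hD hA hb1 (by rw [Finset.inter_comm]; exact hb2))

/-- For `n = 2m - 1`, exactly `2 ^ (n-1)` subsets of `Fin n` have size at least `m`. -/
lemma count_top (hnm : n + 1 = 2 * m) (hm1 : 1 ≤ m) :
    (Finset.univ.filter fun A : Finset (Fin n) => m ≤ A.card).card = 2 ^ (n - 1) := by
  classical
  have htot : (Finset.univ.filter fun A : Finset (Fin n) => m ≤ A.card).card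
      + (Finset.univ.filter fun A : Finset (Fin n) => ¬ m ≤ A.card).card = 2 ^ n := by
    rw [Finset.card_filter_add_card_filter_not]
    simp [Finset.card_univ, Fintype.card_finset]
  have hbij : (Finset.univ.filter fun A : Finset (Fin n) => m ≤ A.card).card
      = (Finset.univ.filter fun A : Finset (Fin n) => ¬ m ≤ A.card).card := by
    refine Finset.card_bij' (fun A _ => Aᶜ) (fun B _ => Bᶜ) ?_ ?_ ?_ ?_ <;>
      intro A hA
    all_goals first
      | exact compl_compl A
      | (simp only [Finset.mem_filter, Finset.mem_univ, true_and] at hA ⊢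
         have hc : Aᶜ.card = n - A.card := by
           rw [Finset.card_compl, Fintype.card_fin]
         have := card_le_n A
         omega)
  have h2n : (2 : ℕ) ^ n = 2 ^ (n - 1) * 2 := by
    have hn : n - 1 + 1 = n := by omega
    conv_lhs => rw [← hn, pow_succ]
  omega

end Helpers

/-- For odd `n ≥ 27`, every partition of the power set of `[n]` into `t` parts, each
`C₄`-free, satisfies `3 t ≥ 2 ^ (n - 1)`. -/
theorem f_C4_lower_odd (n : ℕ) (hn : 27 ≤ n) (hodd : Odd n) (t : ℕ)
    (c : Finset (Fin n) → Fin t)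
    (hfree : ∀ i : Fin t, C4Free {A | c A = i}) :
    2 ^ (n - 1) ≤ 3 * t := by
  classical
  by_contra hcon
  push_neg at hcon
  obtain ⟨k, hk⟩ := hodd
  set m := k + 1 with hm_def
  have hnm : n + 1 = 2 * m := by omega
  have hm14 : 14 ≤ m := by omega
  rcases Nat.eq_zero_or_pos t with rfl | ht
  · exact (c ∅).elim0
  have hcount := count_top hnm (by omega)
  set T := Finset.univ.filter fun A : Finset (Fin n) => m ≤ A.card with hT_def
  have hmaps : ∀ a ∈ T, c a ∈ (Finset.univ : Finset (Fin t)) := fun a _ => Finset.mem_univ _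
  have hlt : (Finset.univ : Finset (Fin t)).card * 3 < T.card := by
    rw [Finset.card_univ, Fintype.card_fin, hcount]
    omega
  obtain ⟨i, -, hi⟩ := Finset.exists_lt_card_fiber_of_mul_lt_card_of_maps_to hmaps hlt
  set s := T.filter fun x => c x = i with hs_def
  have hprop : ∀ X ∈ s, m ≤ X.card ∧ c X = i := by
    intro X hX
    rw [hs_def, hT_def] at hX
    simp only [Finset.mem_filter, Finset.mem_univ, true_and] at hX
    exact hX
  -- extract four distinct elements of s
  have hs4 : 3 < s.card := hi
  have hne1 : s.Nonempty := Finset.card_pos.mp (by omega)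
  obtain ⟨A, hAs⟩ := hne1
  have hcA : (s.erase A).card = s.card - 1 := Finset.card_erase_of_mem hAs
  have hne2 : (s.erase A).Nonempty := Finset.card_pos.mp (by omega)
  obtain ⟨B, hBe⟩ := hne2
  have hcB : ((s.erase A).erase B).card = (s.erase A).card - 1 := Finset.card_erase_of_mem hBe
  have hne3 : ((s.erase A).erase B).Nonempty := Finset.card_pos.mp (by omega)
  obtain ⟨C, hCe⟩ := hne3
  have hcC : (((s.erase A).erase B).erase C).card = ((s.erase A).erase B).card - 1 :=
    Finset.card_erase_of_mem hCe
  have hne4 : (((s.erase A).erase B).erase C).Nonempty := Finset.card_pos.mp (by omega)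
  obtain ⟨D, hDe⟩ := hne4
  obtain ⟨hBA, hBs⟩ := Finset.mem_erase.mp hBe
  obtain ⟨hCB, hCe'⟩ := Finset.mem_erase.mp hCe
  obtain ⟨hCA, hCs⟩ := Finset.mem_erase.mp hCe'
  obtain ⟨hDC, hDe'⟩ := Finset.mem_erase.mp hDe
  obtain ⟨hDB, hDe''⟩ := Finset.mem_erase.mp hDe'
  obtain ⟨hDA, hDs⟩ := Finset.mem_erase.mp hDe''
  have hAB : A ≠ B := hBA.symm
  have hAC : A ≠ C := hCA.symm
  have hAD : A ≠ D := hDA.symm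
  have hBC : B ≠ C := hCB.symm
  have hBD : B ≠ D := hDB.symm
  have hCD : C ≠ D := hDC.symm
  have hneg : ∀ P Q R S : Finset (Fin n), P ∈ s → Q ∈ s → R ∈ s → S ∈ s →
      P ≠ Q → P ≠ R → P ≠ S → Q ≠ R → Q ≠ S → R ≠ S → ¬ SDR4 P Q R S := by
    intro P Q R S hP hQ hR hS d1 d2 d3 d4 d5 d6 hsdr
    exact hfree i P (hprop P hP).2 Q (hprop Q hQ).2 R (hprop R hR).2 S (hprop S hS).2
      ⟨d1, d2, d3, d4, d5, d6, hsdr⟩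
  exact main_lemma hnm hm14 A B C D hAB hAC hAD hBC hBD hCD
    (hprop A hAs).1 (hprop B hBs).1 (hprop C hCs).1 (hprop D hDs).1
    (hneg A B C D hAs hBs hCs hDs hAB hAC hAD hBC hBD hCD)
    (hneg A B D C hAs hBs hDs hCs hAB hAD hAC hBD hBC hCD.symm)
    (hneg B A C D hBs hAs hCs hDs hBA hBC hBD hAC hAD hCD)
    (hneg B A D C hBs hAs hDs hCs hBA hBD hBC hAD hAC hDC)
    (hneg C A D B hCs hAs hDs hBs hCA hCD hCB hAD hAB hDB)
    (hneg A C D B hAs hCs hDs hBs hAC hAD hAB hCD hCB hDB)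
    (hneg A C B D hAs hCs hBs hDs hAC hAB hAD hCB hCD hBD)
    (hneg B C D A hBs hCs hDs hAs hBC hBD hBA hCD hCA hDA)
    (hneg B C A D hBs hCs hAs hDs hBC hBA hBD hCA hCD hAD)
    (hneg C B D A hCs hBs hDs hAs hCB hCD hCA hBD hBA hDA)
end
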